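/- arXiv:0712.3996 — 6 statements merged into one kernel-verified Lean document; each statement's English description precedes it below -/
import Mathlib

section
/- Injectivity of the restriction map: For any n-tuple a of positive integers, integers 0 ≤ m ≤ m' ≤ |a|, and 𝓑 = Sint(a;m) ∪ Int(a;m) ∪ Int(a;m+1) ∪ … ∪ Int(a;m') (with the zero vector added when m = 0), the restriction map 𝒯(B_m^{m'}(a)) → ℝ^𝓑 is injective; that is, any TP-function on B_m^{m'}(a) is determined by its values on 𝓑. -/
/-- The `q`-th unit vector of `ℤ^n` (modelled with `ℕ` coordinates, since box
vectors are nonnegative). -/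
def unitv (n : ℕ) (q : Fin n) : Fin n → ℕ := fun i => if i = q then 1 else 0

/-- The size `|x| = x_1 + … + x_n` of a vector. -/
def vsize {n : ℕ} (x : Fin n → ℕ) : ℕ := ∑ i, x i

/-- The truncated box `B_m^{m'}(a) = {x : 0 ≤ x ≤ a, m ≤ |x| ≤ m'}`. -/
def tbox {n : ℕ} (a : Fin n → ℕ) (m m' : ℕ) : Set (Fin n → ℕ) :=
  {x | (∀ i, x i ≤ a i) ∧ m ≤ vsize x ∧ vsize x ≤ m'}

/-- The TP3-relations on a subset `B` of `ℤ^n`. -/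
def TP3 {n : ℕ} (B : Set (Fin n → ℕ)) (f : (Fin n → ℕ) → ℝ) : Prop :=
  ∀ (x : Fin n → ℕ) (i j k : Fin n), i < j → j < k →
    x + unitv n i + unitv n k ∈ B → x + unitv n j ∈ B →
    x + unitv n i + unitv n j ∈ B → x + unitv n k ∈ B →
    x + unitv n i ∈ B → x + unitv n j + unitv n k ∈ B →
    f (x + unitv n i + unitv n k) + f (x + unitv n j) =
      max (f (x + unitv n i + unitv n j) + f (x + unitv n k))
          (f (x + unitv n i) + f (x + unitv n j + unitv n k))

/-- The TP4-relations on a subset `B` of `ℤ^n`. -/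
def TP4 {n : ℕ} (B : Set (Fin n → ℕ)) (f : (Fin n → ℕ) → ℝ) : Prop :=
  ∀ (x : Fin n → ℕ) (i j k l : Fin n), i < j → j < k → k < l →
    x + unitv n i + unitv n k ∈ B → x + unitv n j + unitv n l ∈ B →
    x + unitv n i + unitv n j ∈ B → x + unitv n k + unitv n l ∈ B →
    x + unitv n i + unitv n l ∈ B → x + unitv n j + unitv n k ∈ B →
    f (x + unitv n i + unitv n k) + f (x + unitv n j + unitv n l) =
      max (f (x + unitv n i + unitv n j) + f (x + unitv n k + unitv n l))
          (f (x + unitv n i + unitv n l) + f (x + unitv n j + unitv n k))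

/-- A tropical Plücker function on `B`. -/
def IsTP {n : ℕ} (B : Set (Fin n → ℕ)) (f : (Fin n → ℕ) → ℝ) : Prop :=
  TP3 B f ∧ TP4 B f

/-- `x` is a fuzzy-interval (fint) in the box `B(a)`: it is a nonzero vector of the
box and `x_j = a_j` for every index `j` lying strictly between two indices of the
support of `x` (equivalently, strictly between `c(x)` and `d(x)`). -/
def IsFint {n : ℕ} (a x : Fin n → ℕ) : Prop :=
  (∀ i, x i ≤ a i) ∧ x ≠ 0 ∧
  ∀ i j k : Fin n, i < j → j < k → x i ≠ 0 → x k ≠ 0 → x j = a j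

/-- `x` is a sesquialteral fuzzy-interval (sint): not a fint, but the sum of two
fints `x', x''` with `d(x') < c(x'')` and `x'_i = a_i` for all `i < d(x')`. -/
def IsSint {n : ℕ} (a x : Fin n → ℕ) : Prop :=
  ¬ IsFint a x ∧
  ∃ x' x'' : Fin n → ℕ, IsFint a x' ∧ IsFint a x'' ∧ x = x' + x'' ∧
    (∀ i j : Fin n, x' i ≠ 0 → x'' j ≠ 0 → i < j) ∧
    (∀ i : Fin n, (∃ j, i < j ∧ x' j ≠ 0) → x' i = a i)

/-- The standard basis `𝓑 = Sint(a;m) ∪ Int(a;m) ∪ … ∪ Int(a;m')`, with the zero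
vector added when `m = 0`. -/
def stdBasis {n : ℕ} (a : Fin n → ℕ) (m m' : ℕ) : Set (Fin n → ℕ) :=
  {x | (IsSint a x ∧ vsize x = m) ∨ (IsFint a x ∧ m ≤ vsize x ∧ vsize x ≤ m') ∨
       (m = 0 ∧ x = 0)}

/-!
A TP-function is pinned down by well-founded induction: every vector of the truncated box
outside the standard basis is a term of a TP3- or TP4-relation whose five other terms are
smaller in a suitable well-founded order.

Above the lowest level, if `x` is not a fint, take its first and last support positions
`i < k` and a deficient position `j` between them (`x_j < a_j`). In TP3 for `i < j < k` the
other terms lie one level lower, or arise from `x` by moving a unit from `i` or from `k` to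
`j`; such a move decreases the `gap`, the total deficiency `a_t - x_t` over the positions
strictly inside the support.

On the lowest level let `p` be the first deficient position of `x`. If the part of `x` after
`p` has no deficient position inside its support, `x` is a fint or a sint. Otherwise TP4 for
`p < q < r < d` (`q` the first support position after `p`, `d` the last one, `r` deficient)
applies: three of the other terms move a unit to `p` and so carry less mass after their
first deficient position, and the remaining two keep that mass but have a smaller gap after
`p`; this is the lexicographic `levelMeasure`.
-/

namespace TropicalPlucker

variable {n : ℕ} {a : Fin n → ℕ} {m m' : ℕ} {f₁ f₂ : (Fin n → ℕ) → ℝ}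

theorem eqOn_of_measure_descent {α β γ : Type*} [Preorder β] [WellFoundedLT β] {S : Set α}
    {g h : α → γ} (μ : α → β)
    (step : ∀ x ∈ S, (∀ y ∈ S, μ y < μ x → g y = h y) → g x = h x) : S.EqOn g h := by
  intro x
  induction x using (InvImage.wf μ wellFounded_lt).induction with
  | _ x IH => exact fun hx => step x hx fun y hy hyx => IH y hyx hy

@[simp] lemma unitv_apply_self (q : Fin n) : unitv n q q = 1 := if_pos rfl

@[simp] lemma unitv_apply_of_ne {q t : Fin n} (h : t ≠ q) : unitv n q t = 0 := if_neg h

lemma vsize_add (x y : Fin n → ℕ) : vsize (x + y) = vsize x + vsize y :=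
  Finset.sum_add_distrib

@[simp] lemma vsize_unitv (q : Fin n) : vsize (unitv n q) = 1 := by
  simp [vsize, unitv]

lemma vsize_mono {x y : Fin n → ℕ} (h : x ≤ y) : vsize x ≤ vsize y :=
  Finset.sum_le_sum fun i _ => h i

lemma add_unitv_le {x : Fin n → ℕ} {j : Fin n} (hx : x ≤ a) (hj : x j < a j) :
    x + unitv n j ≤ a := by
  intro t
  by_cases htj : t = j
  · subst htj; simpa using hj
  · simpa [htj] using hx t

lemma exists_eq_add_unitv {x : Fin n → ℕ} {i : Fin n} (hi : x i ≠ 0) :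
    ∃ y, x = y + unitv n i := by
  refine ⟨x - unitv n i, (tsub_add_cancel_of_le fun t => ?_).symm⟩
  by_cases hti : t = i
  · subst hti; simpa [Nat.one_le_iff_ne_zero] using hi
  · simp [hti]

lemma exists_eq_add_unitv_add_unitv {x : Fin n → ℕ} {i k : Fin n} (hi : x i ≠ 0)
    (hk : x k ≠ 0) (hik : i ≠ k) : ∃ y, x = y + unitv n i + unitv n k := by
  obtain ⟨z, rfl⟩ := exists_eq_add_unitv hk
  obtain ⟨y, rfl⟩ := exists_eq_add_unitv (x := z) (i := i) (by simpa [hik] using hi)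
  exact ⟨y, rfl⟩

lemma mem_tbox_of_le {v x : Fin n → ℕ} (hxv : x ≤ v) (hva : v ≤ a)
    (hm : m ≤ vsize x) (hm' : vsize x ≤ m') : x ∈ tbox a m m' :=
  ⟨hxv.trans hva, hm, hm'⟩

def InsideSupport (x : Fin n → ℕ) (t : Fin n) : Prop :=
  (∃ i < t, x i ≠ 0) ∧ ∃ k, t < k ∧ x k ≠ 0

instance (x : Fin n → ℕ) : DecidablePred (InsideSupport x) :=
  fun _ => inferInstanceAs (Decidable (_ ∧ _))

def gap (a x : Fin n → ℕ) : ℕ := ∑ t, if InsideSupport x t then a t - x t else 0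

lemma not_insideSupport_of_forall_lt {x : Fin n → ℕ} {s : Fin n} (h : ∀ t < s, x t = 0) :
    ¬ InsideSupport x s :=
  fun ⟨⟨i, his, hi⟩, _⟩ => hi (h i his)

lemma not_insideSupport_of_forall_gt {x : Fin n → ℕ} {s : Fin n} (h : ∀ t, s < t → x t = 0) :
    ¬ InsideSupport x s :=
  fun ⟨_, ⟨k, hsk, hk⟩⟩ => hk (h k hsk)

lemma add_unitv_apply_ne_zero {z : Fin n → ℕ} {i j : Fin n} (h : (z + unitv n j) i ≠ 0)
    (hij : i ≠ j) (s : Fin n) : (z + unitv n s) i ≠ 0 := by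
  simp only [Pi.add_apply, unitv_apply_of_ne hij, add_zero] at h
  simp only [Pi.add_apply]
  omega

lemma InsideSupport.of_add_unitv {z : Fin n → ℕ} {j s t : Fin n}
    (hj : InsideSupport (z + unitv n s) j) (ht : InsideSupport (z + unitv n j) t) :
    InsideSupport (z + unitv n s) t := by
  obtain ⟨⟨i, hit, hi⟩, ⟨k, htk, hk⟩⟩ := ht
  refine ⟨?_, ?_⟩
  · by_cases hij : i = j
    · obtain ⟨⟨i', hi'j, hi'⟩, _⟩ := hj
      exact ⟨i', hi'j.trans (hij ▸ hit), hi'⟩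
    · exact ⟨i, hit, add_unitv_apply_ne_zero hi hij s⟩
  · by_cases hkj : k = j
    · obtain ⟨_, ⟨k', hjk', hk'⟩⟩ := hj
      exact ⟨k', (hkj ▸ htk).trans hjk', hk'⟩
    · exact ⟨k, htk, add_unitv_apply_ne_zero hk hkj s⟩

lemma gap_add_unitv_lt {z : Fin n → ℕ} {j s : Fin n} (hj : InsideSupport (z + unitv n s) j)
    (hs : ¬ InsideSupport (z + unitv n j) s) (hz : z j < a j) :
    gap a (z + unitv n j) < gap a (z + unitv n s) := by
  have hjs : j ≠ s := by rintro rfl; exact hs hj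
  have at_j : (z + unitv n s) j = z j := by simp [hjs]
  have at_j' : (z + unitv n j) j = z j + 1 := by simp
  refine Finset.sum_lt_sum (fun t _ => ?_) ⟨j, Finset.mem_univ j, ?_⟩
  · by_cases htj : t = j
    · subst htj
      rw [if_pos hj, at_j, at_j']
      split_ifs <;> omega
    by_cases hts : t = s
    · subst hts
      rw [if_neg hs]
      exact Nat.zero_le _
    have at_t : (z + unitv n j) t = (z + unitv n s) t := by simp [htj, hts]
    by_cases ht : InsideSupport (z + unitv n j) t
    · rw [if_pos ht, if_pos (hj.of_add_unitv ht), at_t]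
    · rw [if_neg ht]
      exact Nat.zero_le _
  · rw [if_pos hj, at_j, at_j']
    split_ifs <;> omega

lemma TP3.eq_of_eq (h₁ : TP3 (tbox a m m') f₁) (h₂ : TP3 (tbox a m m') f₂) {y : Fin n → ℕ}
    {i j k : Fin n} (hij : i < j) (hjk : j < k) (ha : y + unitv n i + unitv n j + unitv n k ≤ a)
    (hm : m ≤ vsize y + 1) (hm' : vsize y + 2 ≤ m')
    (e_j : y + unitv n j ∈ tbox a m m' → f₁ (y + unitv n j) = f₂ (y + unitv n j))
    (e_ij : y + unitv n i + unitv n j ∈ tbox a m m' →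
      f₁ (y + unitv n i + unitv n j) = f₂ (y + unitv n i + unitv n j))
    (e_k : y + unitv n k ∈ tbox a m m' → f₁ (y + unitv n k) = f₂ (y + unitv n k))
    (e_i : y + unitv n i ∈ tbox a m m' → f₁ (y + unitv n i) = f₂ (y + unitv n i))
    (e_jk : y + unitv n j + unitv n k ∈ tbox a m m' →
      f₁ (y + unitv n j + unitv n k) = f₂ (y + unitv n j + unitv n k)) :
    f₁ (y + unitv n i + unitv n k) = f₂ (y + unitv n i + unitv n k) := by
  have mem : ∀ x, x ≤ y + unitv n i + unitv n j + unitv n k →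
      vsize y + 1 ≤ vsize x ∧ vsize x ≤ vsize y + 2 → x ∈ tbox a m m' := fun x hx hs =>
    mem_tbox_of_le hx ha (by omega) (by omega)
  have m_ik := mem (y + unitv n i + unitv n k) (fun t => by simp only [Pi.add_apply]; omega)
    (by simp [vsize_add])
  have m_j := mem (y + unitv n j) (fun t => by simp only [Pi.add_apply]; omega)
    (by simp [vsize_add])
  have m_ij := mem (y + unitv n i + unitv n j) (fun t => by simp only [Pi.add_apply]; omega)
    (by simp [vsize_add])
  have m_k := mem (y + unitv n k) (fun t => by simp only [Pi.add_apply]; omega)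
    (by simp [vsize_add])
  have m_i := mem (y + unitv n i) (fun t => by simp only [Pi.add_apply]; omega)
    (by simp [vsize_add])
  have m_jk := mem (y + unitv n j + unitv n k) (fun t => by simp only [Pi.add_apply]; omega)
    (by simp [vsize_add])
  have r₁ := h₁ y i j k hij hjk m_ik m_j m_ij m_k m_i m_jk
  have r₂ := h₂ y i j k hij hjk m_ik m_j m_ij m_k m_i m_jk
  rw [e_j m_j, e_ij m_ij, e_k m_k, e_i m_i, e_jk m_jk] at r₁
  linarith

lemma TP4.eq_of_eq (h₁ : TP4 (tbox a m m') f₁) (h₂ : TP4 (tbox a m m') f₂) {y : Fin n → ℕ}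
    {i j k l : Fin n} (hij : i < j) (hjk : j < k) (hkl : k < l)
    (ha : y + unitv n i + unitv n j + unitv n k + unitv n l ≤ a)
    (hm : m ≤ vsize y + 2) (hm' : vsize y + 2 ≤ m')
    (e_ik : y + unitv n i + unitv n k ∈ tbox a m m' →
      f₁ (y + unitv n i + unitv n k) = f₂ (y + unitv n i + unitv n k))
    (e_ij : y + unitv n i + unitv n j ∈ tbox a m m' →
      f₁ (y + unitv n i + unitv n j) = f₂ (y + unitv n i + unitv n j))
    (e_kl : y + unitv n k + unitv n l ∈ tbox a m m' →
      f₁ (y + unitv n k + unitv n l) = f₂ (y + unitv n k + unitv n l))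
    (e_il : y + unitv n i + unitv n l ∈ tbox a m m' →
      f₁ (y + unitv n i + unitv n l) = f₂ (y + unitv n i + unitv n l))
    (e_jk : y + unitv n j + unitv n k ∈ tbox a m m' →
      f₁ (y + unitv n j + unitv n k) = f₂ (y + unitv n j + unitv n k)) :
    f₁ (y + unitv n j + unitv n l) = f₂ (y + unitv n j + unitv n l) := by
  have mem : ∀ x, x ≤ y + unitv n i + unitv n j + unitv n k + unitv n l →
      vsize x = vsize y + 2 → x ∈ tbox a m m' := fun x hx hs =>
    mem_tbox_of_le hx ha (by omega) (by omega)
  have m_ik := mem (y + unitv n i + unitv n k) (fun t => by simp only [Pi.add_apply]; omega)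
    (by simp [vsize_add])
  have m_jl := mem (y + unitv n j + unitv n l) (fun t => by simp only [Pi.add_apply]; omega)
    (by simp [vsize_add])
  have m_ij := mem (y + unitv n i + unitv n j) (fun t => by simp only [Pi.add_apply]; omega)
    (by simp [vsize_add])
  have m_kl := mem (y + unitv n k + unitv n l) (fun t => by simp only [Pi.add_apply]; omega)
    (by simp [vsize_add])
  have m_il := mem (y + unitv n i + unitv n l) (fun t => by simp only [Pi.add_apply]; omega)
    (by simp [vsize_add])
  have m_jk := mem (y + unitv n j + unitv n k) (fun t => by simp only [Pi.add_apply]; omega)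
    (by simp [vsize_add])
  have r₁ := h₁ y i j k l hij hjk hkl m_ik m_jl m_ij m_kl m_il m_jk
  have r₂ := h₂ y i j k l hij hjk hkl m_ik m_jl m_ij m_kl m_il m_jk
  rw [e_ik m_ik, e_ij m_ij, e_kl m_kl, e_il m_il, e_jk m_jk] at r₁
  linarith

lemma exists_extremal_decomposition {x : Fin n → ℕ} (hxa : x ≤ a) (hx0 : x ≠ 0)
    (hx : ¬ IsFint a x) :
    ∃ y i j k, i < j ∧ j < k ∧ x = y + unitv n i + unitv n k ∧
      (∀ t < i, y t = 0) ∧ (∀ t, k < t → y t = 0) ∧ y j < a j := by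
  obtain ⟨i₀, j, k₀, hi₀j, hjk₀, hi₀, hk₀, hj⟩ :
      ∃ i j k, i < j ∧ j < k ∧ x i ≠ 0 ∧ x k ≠ 0 ∧ x j < a j := by
    by_contra! h
    exact hx ⟨hxa, hx0, fun i j k hij hjk hi hk => le_antisymm (hxa j) (h i j k hij hjk hi hk)⟩
  obtain ⟨i, hi, hfirst⟩ := wellFounded_lt.has_min {t | x t ≠ 0} ⟨i₀, hi₀⟩
  obtain ⟨k, hk, hlast⟩ := wellFounded_gt.has_min {t | x t ≠ 0} ⟨k₀, hk₀⟩
  have hij : i < j := lt_of_le_of_lt (not_lt.1 (hfirst i₀ hi₀)) hi₀j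
  have hjk : j < k := lt_of_lt_of_le hjk₀ (not_lt.1 (hlast k₀ hk₀))
  obtain ⟨y, rfl⟩ := exists_eq_add_unitv_add_unitv hi hk (hij.trans hjk).ne
  have hyx : y ≤ y + unitv n i + unitv n k := le_add_right (le_add_right le_rfl)
  refine ⟨y, i, j, k, hij, hjk, rfl, fun t ht => ?_, fun t ht => ?_, (hyx j).trans_lt hj⟩
  · exact Nat.eq_zero_of_le_zero ((hyx t).trans (not_not.1 fun h => hfirst t h ht).le)
  · exact Nat.eq_zero_of_le_zero ((hyx t).trans (not_not.1 fun h => hlast t h ht).le)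

theorem eqOn_tbox_of_eqOn_lowest_level (h₁ : TP3 (tbox a m m') f₁) (h₂ : TP3 (tbox a m m') f₂)
    (hlevel : ∀ x ∈ tbox a m m', vsize x = m → f₁ x = f₂ x)
    (hfint : ∀ x ∈ tbox a m m', IsFint a x → f₁ x = f₂ x) : (tbox a m m').EqOn f₁ f₂ := by
  refine eqOn_of_measure_descent (fun x => toLex (vsize x, gap a x)) fun x hx IH => ?_
  rcases hx.2.1.eq_or_lt with hm | hm
  · exact hlevel x hx hm.symm
  by_cases hf : IsFint a x
  · exact hfint x hx hf
  have hx0 : x ≠ 0 := by rintro rfl; simp [vsize] at hm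
  obtain ⟨y, i, j, k, hij, hjk, rfl, hyi, hyk, hyj⟩ := exists_extremal_decomposition hx.1 hx0 hf
  have hsize : vsize (y + unitv n i + unitv n k) = vsize y + 2 := by simp [vsize_add]
  have hm' := hx.2.2
  rw [hsize] at hm hm'
  have hxj : (y + unitv n i + unitv n k) j < a j := by simpa [hij.ne', hjk.ne] using hyj
  have inside : InsideSupport (y + unitv n i + unitv n k) j :=
    ⟨⟨i, hij, by simp⟩, ⟨k, hjk, by simp⟩⟩
  have gap_ij : gap a (y + unitv n i + unitv n j) < gap a (y + unitv n i + unitv n k) :=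
    gap_add_unitv_lt inside
      (not_insideSupport_of_forall_gt fun t ht => by
        simp [hyk t ht, ((hij.trans hjk).trans ht).ne', (hjk.trans ht).ne'])
      (by simpa [hij.ne'] using hyj)
  have gap_jk : gap a (y + unitv n j + unitv n k) < gap a (y + unitv n i + unitv n k) := by
    rw [add_right_comm y (unitv n j), add_right_comm y (unitv n i)]
    refine gap_add_unitv_lt (by rwa [add_right_comm]) ?_ (by simpa [hjk.ne] using hyj)
    exact not_insideSupport_of_forall_lt fun t ht => by
      simp [hyi t ht, (ht.trans (hij.trans hjk)).ne, (ht.trans hij).ne]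
  have lower : ∀ z ∈ tbox a m m', vsize z = vsize y + 1 → f₁ z = f₂ z := fun z hz hzs =>
    IH z hz (Prod.Lex.toLex_lt_toLex.2 (Or.inl (by dsimp only; omega)))
  refine TP3.eq_of_eq h₁ h₂ hij hjk ?_ (by omega) (by omega)
    (fun hz => lower _ hz (by simp [vsize_add])) (fun hz => IH _ hz ?_)
    (fun hz => lower _ hz (by simp [vsize_add])) (fun hz => lower _ hz (by simp [vsize_add]))
    (fun hz => IH _ hz ?_)
  · rw [add_right_comm _ (unitv n j)]
    exact add_unitv_le hx.1 hxj
  · exact Prod.Lex.toLex_lt_toLex.2 (Or.inr ⟨by simp [vsize_add], gap_ij⟩)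
  · exact Prod.Lex.toLex_lt_toLex.2 (Or.inr ⟨by simp [vsize_add], gap_jk⟩)

def upperPart (p : Fin n) (x : Fin n → ℕ) : Fin n → ℕ := fun t => if p < t then x t else 0

lemma upperPart_le (p : Fin n) (x : Fin n → ℕ) : upperPart p x ≤ x := fun t => by
  unfold upperPart; split_ifs <;> simp

lemma upperPart_add (p : Fin n) (x y : Fin n → ℕ) :
    upperPart p (x + y) = upperPart p x + upperPart p y := by
  funext t; simp only [upperPart, Pi.add_apply]; split_ifs <;> rfl

lemma upperPart_unitv_self (p : Fin n) : upperPart p (unitv n p) = 0 := by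
  funext t; simp only [upperPart, Pi.zero_apply]; split_ifs with h
  · exact unitv_apply_of_ne h.ne'
  · rfl

lemma upperPart_unitv_of_lt {p s : Fin n} (h : p < s) : upperPart p (unitv n s) = unitv n s := by
  funext t; simp only [upperPart]; split_ifs with hpt
  · rfl
  · exact (unitv_apply_of_ne fun hts : t = s => hpt (hts ▸ h)).symm

def deficitTail (a x : Fin n → ℕ) : Fin n → ℕ := fun t => if ∃ u < t, x u < a u then x t else 0

lemma lt_of_exists_deficit {x : Fin n → ℕ} {p t : Fin n} (hx : ∀ u < p, x u = a u)
    (h : ∃ u < t, x u < a u) : p < t := by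
  obtain ⟨u, hut, hu⟩ := h
  exact lt_of_le_of_lt (not_lt.1 fun hup => (hx u hup ▸ hu).false) hut

lemma deficitTail_le_upperPart {x : Fin n → ℕ} {p : Fin n} (hx : ∀ u < p, x u = a u) :
    deficitTail a x ≤ upperPart p x := fun t => by
  unfold deficitTail upperPart
  split_ifs with h h'
  · rfl
  · exact absurd (lt_of_exists_deficit hx h) h'
  all_goals exact Nat.zero_le _

lemma deficitTail_eq_upperPart {x : Fin n → ℕ} {p : Fin n} (hx : ∀ u < p, x u = a u)
    (hp : x p < a p) : deficitTail a x = upperPart p x := by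
  funext t
  exact if_congr ⟨lt_of_exists_deficit hx, fun h => ⟨p, h, hp⟩⟩ rfl rfl

lemma deficitTail_add_unitv {z : Fin n → ℕ} {p s : Fin n} (hz : ∀ u < p, z u = a u)
    (hzp : z p < a p) (hps : p < s) :
    deficitTail a (z + unitv n s) = upperPart p z + unitv n s := by
  rw [deficitTail_eq_upperPart (p := p) (fun u hu => by simp [hz u hu, (hu.trans hps).ne])
    (by simpa [hps.ne] using hzp), upperPart_add, upperPart_unitv_of_lt hps]

def levelMeasure (a x : Fin n → ℕ) : ℕ ×ₗ ℕ :=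
  toLex (vsize (deficitTail a x), gap a (deficitTail a x))

lemma levelMeasure_fill_deficit_lt {y : Fin n → ℕ} {p q d s : Fin n}
    (hy : ∀ u < p, y u = a u) (hyp : y p < a p) (hpq : p < q) (hpd : p < d) (hps : p < s) :
    levelMeasure a (y + unitv n p + unitv n s) < levelMeasure a (y + unitv n q + unitv n d) := by
  refine Prod.Lex.toLex_lt_toLex.2 (Or.inl ?_)
  have hw := deficitTail_le_upperPart (a := a) (x := y + unitv n p + unitv n s) (p := p)
    fun u hu => by simp [hy u hu, hu.ne, (hu.trans hps).ne]
  have hyqd := deficitTail_add_unitv (a := a) (z := y + unitv n q)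
    (fun u hu => by simp [hy u hu, (hu.trans hpq).ne]) (by simpa [hpq.ne] using hyp) hpd
  calc vsize (deficitTail a (y + unitv n p + unitv n s))
      ≤ vsize (upperPart p (y + unitv n p + unitv n s)) := vsize_mono hw
    _ < vsize (deficitTail a (y + unitv n q + unitv n d)) := by
      rw [hyqd, upperPart_add, upperPart_add, upperPart_add, upperPart_unitv_self,
        upperPart_unitv_of_lt hps, upperPart_unitv_of_lt hpq]
      simp [vsize_add]

lemma levelMeasure_add_unitv_lt {z : Fin n → ℕ} {p j s : Fin n} (hz : ∀ u < p, z u = a u)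
    (hzp : z p < a p) (hpj : p < j) (hps : p < s)
    (hgap : gap a (upperPart p z + unitv n j) < gap a (upperPart p z + unitv n s)) :
    levelMeasure a (z + unitv n j) < levelMeasure a (z + unitv n s) := by
  refine Prod.Lex.toLex_lt_toLex.2 (Or.inr ⟨?_, ?_⟩) <;>
    simp only [deficitTail_add_unitv hz hzp hpj, deficitTail_add_unitv hz hzp hps]
  · simp [vsize_add]
  · exact hgap

lemma isSint_of_split {x : Fin n → ℕ} {p : Fin n} (hxa : x ≤ a) (hx0 : x ≠ 0)
    (hx : ¬ IsFint a x) (hfull : ∀ u < p, x u = a u)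
    (hmid : ∀ i j k, p < i → i < j → j < k → x i ≠ 0 → x k ≠ 0 → x j = a j) : IsSint a x := by
  set x₁ : Fin n → ℕ := fun t => if t ≤ p then x t else 0
  have hsplit : x = x₁ + upperPart p x := by
    funext t
    by_cases h : t ≤ p
    · simp [x₁, upperPart, h, not_lt.2 h]
    · simp [x₁, upperPart, h, not_le.1 h]
  have hle₁ : x₁ ≤ a := fun t => by simp only [x₁]; split_ifs <;> simp [hxa t]
  have hle₂ : upperPart p x ≤ a := (upperPart_le p x).trans hxa
  have supp₁ : ∀ t, x₁ t ≠ 0 → t ≤ p := fun t ht => by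
    by_contra h; simp [x₁, h] at ht
  have supp₂ : ∀ t, upperPart p x t ≠ 0 → p < t := fun t ht => by
    by_contra h; simp [upperPart, h] at ht
  have mid₁ : ∀ i j k, i < j → j < k → x₁ i ≠ 0 → x₁ k ≠ 0 → x₁ j = a j :=
    fun i j k _ hjk _ hk => by
      have hjp := lt_of_lt_of_le hjk (supp₁ k hk)
      simp [x₁, hjp.le, hfull j hjp]
  have mid₂ : ∀ i j k, i < j → j < k → upperPart p x i ≠ 0 → upperPart p x k ≠ 0 →
      upperPart p x j = a j := fun i j k hij hjk hi hk => by
    have hpi := supp₂ i hi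
    have hpk := (hpi.trans hij).trans hjk
    simp only [upperPart, hpi, hpi.trans hij, hpk, if_true] at hi hk ⊢
    exact hmid i j k hpi hij hjk hi hk
  have hne₁ : x₁ ≠ 0 := fun h => hx <| by
    rw [hsplit, h, zero_add] at hx0 ⊢
    exact ⟨hle₂, hx0, mid₂⟩
  have hne₂ : upperPart p x ≠ 0 := fun h => hx <| by
    rw [hsplit, h, add_zero] at hx0 ⊢
    exact ⟨hle₁, hx0, mid₁⟩
  refine ⟨hx, x₁, upperPart p x, ⟨hle₁, hne₁, mid₁⟩, ⟨hle₂, hne₂, mid₂⟩, hsplit,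
    fun i j hi hj => lt_of_le_of_lt (supp₁ i hi) (supp₂ j hj), fun i ⟨j, hij, hj⟩ => ?_⟩
  have hip := lt_of_lt_of_le hij (supp₁ j hj)
  simp [x₁, hip.le, hfull i hip]

lemma exists_lowest_level_decomposition {x : Fin n → ℕ} {p : Fin n} (hxa : x ≤ a)
    (hfull : ∀ u < p, x u = a u) (hp : x p < a p)
    (hmid : ∃ i j k, p < i ∧ i < j ∧ j < k ∧ x i ≠ 0 ∧ x k ≠ 0 ∧ x j < a j) :
    ∃ y q r d, p < q ∧ q < r ∧ r < d ∧ x = y + unitv n q + unitv n d ∧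
      (∀ u < p, y u = a u) ∧ y p < a p ∧ (∀ t, p < t → t < q → y t = 0) ∧ y r < a r ∧
      (∀ t, d < t → y t = 0) := by
  obtain ⟨i, r, k, hpi, hir, hrk, hi, hk, hr⟩ := hmid
  obtain ⟨q, ⟨hpq, hq⟩, hfirst⟩ := wellFounded_lt.has_min {t | p < t ∧ x t ≠ 0} ⟨i, hpi, hi⟩
  obtain ⟨d, hd, hlast⟩ := wellFounded_gt.has_min {t | x t ≠ 0} ⟨k, hk⟩
  have hqr : q < r := lt_of_le_of_lt (not_lt.1 (hfirst i ⟨hpi, hi⟩)) hir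
  have hrd : r < d := lt_of_lt_of_le hrk (not_lt.1 (hlast k hk))
  obtain ⟨y, rfl⟩ := exists_eq_add_unitv_add_unitv hq hd (hqr.trans hrd).ne
  have hyx : y ≤ y + unitv n q + unitv n d := le_add_right (le_add_right le_rfl)
  refine ⟨y, q, r, d, hpq, hqr, hrd, rfl, fun u hu => ?_, (hyx p).trans_lt hp,
    fun t hpt htq => ?_, (hyx r).trans_lt hr, fun t hdt => ?_⟩
  · simpa [(hu.trans hpq).ne, (hu.trans (hpq.trans (hqr.trans hrd))).ne] using hfull u hu
  · exact Nat.eq_zero_of_le_zero ((hyx t).trans (not_not.1 fun h => hfirst t ⟨hpt, h⟩ htq).le)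
  · exact Nat.eq_zero_of_le_zero ((hyx t).trans (not_not.1 fun h => hlast t h hdt).le)

lemma eq_of_lowest_level_decomposition (h₁ : TP4 (tbox a m m') f₁) (h₂ : TP4 (tbox a m m') f₂)
    {y : Fin n → ℕ} {p q r d : Fin n} (hpq : p < q) (hqr : q < r) (hrd : r < d)
    (hx : y + unitv n q + unitv n d ∈ tbox a m m') (hxm : vsize (y + unitv n q + unitv n d) = m)
    (hy : ∀ u < p, y u = a u) (hyp : y p < a p) (hyq : ∀ t, p < t → t < q → y t = 0)
    (hyr : y r < a r) (hyd : ∀ t, d < t → y t = 0)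
    (IH : ∀ z ∈ tbox a m m', vsize z = m →
      levelMeasure a z < levelMeasure a (y + unitv n q + unitv n d) → f₁ z = f₂ z) :
    f₁ (y + unitv n q + unitv n d) = f₂ (y + unitv n q + unitv n d) := by
  have hpr := hpq.trans hqr
  have hpd := hpr.trans hrd
  have hym : vsize y + 2 = m := by simpa [vsize_add] using hxm
  have agree : ∀ s t, levelMeasure a (y + unitv n s + unitv n t) <
      levelMeasure a (y + unitv n q + unitv n d) → y + unitv n s + unitv n t ∈ tbox a m m' →
      f₁ (y + unitv n s + unitv n t) = f₂ (y + unitv n s + unitv n t) :=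
    fun s t hlt hz => IH _ hz (by simp [vsize_add]; omega) hlt
  have lt_rd : levelMeasure a (y + unitv n r + unitv n d) <
      levelMeasure a (y + unitv n q + unitv n d) := by
    rw [add_right_comm y (unitv n r), add_right_comm y (unitv n q)]
    refine levelMeasure_add_unitv_lt (fun u hu => by simp [hy u hu, (hu.trans hpd).ne])
      (by simpa [hpd.ne] using hyp) hpr hpq (gap_add_unitv_lt
        ⟨⟨q, hqr, by simp⟩, ⟨d, hrd, by simp [upperPart, hpd]⟩⟩ ?_
        (by simpa [upperPart, hpr, hrd.ne] using hyr))
    refine not_insideSupport_of_forall_lt fun t htq => ?_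
    by_cases hpt : p < t
    · simp [upperPart, hpt, hyq t hpt htq, (htq.trans hqr).ne, (htq.trans (hqr.trans hrd)).ne]
    · simp [upperPart, hpt, (htq.trans hqr).ne]
  have lt_qr : levelMeasure a (y + unitv n q + unitv n r) <
      levelMeasure a (y + unitv n q + unitv n d) := by
    refine levelMeasure_add_unitv_lt (fun u hu => by simp [hy u hu, (hu.trans hpq).ne])
      (by simpa [hpq.ne] using hyp) hpr hpd (gap_add_unitv_lt
        ⟨⟨q, hqr, by simp [upperPart, hpq]⟩, ⟨d, hrd, by simp⟩⟩
        (not_insideSupport_of_forall_gt fun t hdt => ?_)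
        (by simpa [upperPart, hpr, hqr.ne'] using hyr))
    simp [upperPart, hyd t hdt, (hqr.trans (hrd.trans hdt)).ne', (hrd.trans hdt).ne']
  have hxp : (y + unitv n q + unitv n d) p < a p := by simpa [hpq.ne, hpd.ne] using hyp
  have hxr : (y + unitv n q + unitv n d + unitv n p) r < a r := by
    simpa [hqr.ne', hrd.ne, hpr.ne'] using hyr
  refine TP4.eq_of_eq h₁ h₂ hpq hqr hrd ?_ (by omega) (by have := hx.2.2; omega)
    (agree _ _ (levelMeasure_fill_deficit_lt hy hyp hpq hpd hpr))
    (agree _ _ (levelMeasure_fill_deficit_lt hy hyp hpq hpd hpq))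
    (agree _ _ lt_rd)
    (agree _ _ (levelMeasure_fill_deficit_lt hy hyp hpq hpd hpd))
    (agree _ _ lt_qr)
  have hbox := add_unitv_le (add_unitv_le hx.1 hxp) hxr
  convert hbox using 1
  abel

theorem eqOn_lowest_level (h₁ : TP4 (tbox a m m') f₁) (h₂ : TP4 (tbox a m m') f₂)
    (hbasis : ∀ x ∈ stdBasis a m m', f₁ x = f₂ x) :
    ∀ x ∈ tbox a m m', vsize x = m → f₁ x = f₂ x := by
  suffices h : {x | x ∈ tbox a m m' ∧ vsize x = m}.EqOn f₁ f₂ from fun x hx hxm => h ⟨hx, hxm⟩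
  refine eqOn_of_measure_descent (levelMeasure a) fun x ⟨hx, hxm⟩ IH => ?_
  by_cases hf : IsFint a x
  · exact hbasis x (Or.inr (Or.inl ⟨hf, hx.2⟩))
  by_cases hx0 : x = 0
  · exact hbasis x (Or.inr (Or.inr ⟨by simp [← hxm, hx0, vsize], hx0⟩))
  obtain ⟨u, hu⟩ : ∃ u, x u < a u := by
    by_contra! h
    exact hf ⟨hx.1, hx0, fun _ j _ _ _ _ _ => le_antisymm (hx.1 j) (h j)⟩
  obtain ⟨p, hp, hfirst⟩ := wellFounded_lt.has_min {u | x u < a u} ⟨u, hu⟩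
  have hfull : ∀ u < p, x u = a u := fun u hu =>
    le_antisymm (hx.1 u) (not_lt.1 fun h => hfirst u h hu)
  by_cases hmid : ∃ i j k, p < i ∧ i < j ∧ j < k ∧ x i ≠ 0 ∧ x k ≠ 0 ∧ x j < a j
  · obtain ⟨y, q, r, d, hpq, hqr, hrd, rfl, hy, hyp, hyq, hyr, hyd⟩ :=
      exists_lowest_level_decomposition hx.1 hfull hp hmid
    exact eq_of_lowest_level_decomposition h₁ h₂ hpq hqr hrd hx hxm hy hyp hyq hyr hyd
      fun z hz hzm => IH z ⟨hz, hzm⟩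
  · push Not at hmid
    exact hbasis x (Or.inl ⟨isSint_of_split hx.1 hx0 hf hfull fun i j k hpi hij hjk hi hk =>
      le_antisymm (hx.1 j) (hmid i j k hpi hij hjk hi hk), hxm⟩)

end TropicalPlucker

open TropicalPlucker

theorem restriction_injective_general {n : ℕ} (a : Fin n → ℕ)
    (m m' : ℕ)
    (f₁ f₂ : (Fin n → ℕ) → ℝ)
    (hf₁ : IsTP (tbox a m m') f₁) (hf₂ : IsTP (tbox a m m') f₂)
    (hagree : ∀ x ∈ stdBasis a m m', f₁ x = f₂ x) :
    ∀ x ∈ tbox a m m', f₁ x = f₂ x :=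
  eqOn_tbox_of_eqOn_lowest_level hf₁.1 hf₂.1 (eqOn_lowest_level hf₁.2 hf₂.2 hagree)
    fun x hx hf => hagree x (Or.inr (Or.inl ⟨hf, hx.2⟩))

/-- **Injectivity of the restriction map** (Proposition 1): any TP-function on the
truncated box `B_m^{m'}(a)` is determined by its values on the standard basis
`𝓑 = Sint(a;m) ∪ Int(a;m) ∪ … ∪ Int(a;m')` (with the zero vector added when
`m = 0`). -/
theorem restriction_injective {n : ℕ} (a : Fin n → ℕ) (ha : ∀ i, 0 < a i)
    (m m' : ℕ) (hmm : m ≤ m') (hm' : m' ≤ vsize a)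
    (f₁ f₂ : (Fin n → ℕ) → ℝ)
    (hf₁ : IsTP (tbox a m m') f₁) (hf₂ : IsTP (tbox a m m') f₂)
    (hagree : ∀ x ∈ stdBasis a m m', f₁ x = f₂ x) :
    ∀ x ∈ tbox a m m', f₁ x = f₂ x :=
  restriction_injective_general a m m' f₁ f₂ hf₁ hf₂ hagree
end

section
/- TP3 implies TP4 on truncated boxes of positive width: Let f be a function on B = B_m^{m'}(a) with m < m'. If f satisfies all TP3-relations on B (i.e., f(x+1_i+1_k)+f(x+1_j) = max{f(x+1_i+1_j)+f(x+1_k), f(x+1_i)+f(x+1_j+1_k)} for all x and i < j < k with all six argument vectors in B), then f also satisfies all TP4-relations on B (i.e., f(x+1_i+1_k)+f(x+1_j+1_ℓ) = max{f(x+1_i+1_j)+f(x+1_k+1_ℓ), f(x+1_i+1_ℓ)+f(x+1_j+1_k)} for all x and i < j < k < ℓ with all six argument vectors in B); hence f is a TP-function. -/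
/-!
For `i < j < k < l`, a TP4-relation at `x` follows, by a case split on where the maxima are
attained and linear arithmetic, from the three TP3-relations with base `x` and index triples
`ijk`, `ikl`, `jkl`; these involve points of size `|x| + 1`. Passing to complements in
`{i, j, k, l}`, it equally follows from the TP3-relations with bases `x + 1_l`, `x + 1_j`,
`x + 1_i`, which involve points of size `|x| + 3` instead. Since `m < m'`, one of the two levels
`|x| + 1` and `|x| + 3` lies in `[m, m']` whenever the six points of size `|x| + 2` do.
-/

theorem tp4_relation_of_tp3_relations {si sj sk sl pij pik pil pjk pjl pkl : ℝ}
    (hijk : pik + sj = max (pij + sk) (si + pjk))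
    (hikl : pil + sk = max (pik + sl) (si + pkl))
    (hjkl : pjl + sk = max (pjk + sl) (sj + pkl)) :
    pik + pjl = max (pij + pkl) (pil + pjk) := by
  rcases max_eq_iff.mp hijk.symm with ⟨h₁, h₁'⟩ | ⟨h₁, h₁'⟩ <;>
  rcases max_eq_iff.mp hikl.symm with ⟨h₂, h₂'⟩ | ⟨h₂, h₂'⟩ <;>
  rcases max_eq_iff.mp hjkl.symm with ⟨h₃, h₃'⟩ | ⟨h₃, h₃'⟩ <;>
  first
  | rw [max_eq_left (by linarith)]; linarith
  | rw [max_eq_right (by linarith)]; linarith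

theorem tp4_relation_of_tp3_relations_compl {tijk tijl tikl tjkl pij pik pil pjk pjl pkl : ℝ}
    (hl : tikl + pjl = max (tijl + pkl) (pil + tjkl))
    (hj : tijl + pjk = max (tijk + pjl) (pij + tjkl))
    (hi : tijl + pik = max (tijk + pil) (pij + tikl)) :
    pik + pjl = max (pij + pkl) (pil + pjk) := by
  simpa only [add_comm] using
    tp4_relation_of_tp3_relations (si := tjkl) (sj := tikl) (sk := tijl) (sl := tijk)
      (pij := pkl) (pik := pjl) (pil := pjk) (pjk := pil) (pjl := pik) (pkl := pij)
      (by simpa only [add_comm] using hl) (by simpa only [add_comm] using hj)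
      (by simpa only [add_comm] using hi)

section Box

variable {n : ℕ}

@[simp]
lemma vsize_add (x y : Fin n → ℕ) : vsize (x + y) = vsize x + vsize y :=
  Finset.sum_add_distrib

@[simp]
lemma vsize_unitv (q : Fin n) : vsize (unitv n q) = 1 := by
  simp [vsize, unitv]

lemma vsize_mono : Monotone (vsize (n := n)) :=
  fun _ _ h => Finset.sum_le_sum fun i _ => h i

variable {a y z : Fin n → ℕ} {m m' : ℕ}

lemma mem_tbox_of_le (hyz : y ≤ z) (hz : z ∈ tbox a m m') (hy : m ≤ vsize y) :
    y ∈ tbox a m m' :=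
  ⟨fun i => (hyz i).trans (hz.1 i), hy, (vsize_mono hyz).trans hz.2.2⟩

lemma add_unitv_add_unitv_mem_tbox {j k : Fin n} (hjk : j ≠ k)
    (hj : y + unitv n j ∈ tbox a m m') (hk : y + unitv n k ∈ tbox a m m')
    (hy : vsize y + 2 ≤ m') :
    y + unitv n j + unitv n k ∈ tbox a m m' := by
  refine ⟨fun q => ?_, ?_, by simp only [vsize_add, vsize_unitv]; omega⟩
  · by_cases hq : q = k
    · subst hq
      simpa [unitv, hjk.symm] using hk.1 q
    · simpa [unitv, hq] using hj.1 q
  · exact hj.2.1.trans (vsize_mono le_self_add)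

end Box

namespace TP3

variable {n : ℕ} {B : Set (Fin n → ℕ)} {f : (Fin n → ℕ) → ℝ} {x : Fin n → ℕ} {i j k l : Fin n}

theorem tp4_relation_of_singles_mem (h3 : TP3 B f) (hij : i < j) (hjk : j < k) (hkl : k < l)
    (hi : x + unitv n i ∈ B) (hj : x + unitv n j ∈ B)
    (hk : x + unitv n k ∈ B) (hl : x + unitv n l ∈ B)
    (hik : x + unitv n i + unitv n k ∈ B) (hjl : x + unitv n j + unitv n l ∈ B)
    (hij' : x + unitv n i + unitv n j ∈ B) (hkl' : x + unitv n k + unitv n l ∈ B)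
    (hil : x + unitv n i + unitv n l ∈ B) (hjk' : x + unitv n j + unitv n k ∈ B) :
    f (x + unitv n i + unitv n k) + f (x + unitv n j + unitv n l) =
      max (f (x + unitv n i + unitv n j) + f (x + unitv n k + unitv n l))
          (f (x + unitv n i + unitv n l) + f (x + unitv n j + unitv n k)) :=
  tp4_relation_of_tp3_relations
    (h3 x i j k hij hjk hik hj hij' hk hi hjk')
    (h3 x i k l (hij.trans hjk) hkl hil hk hik hl hi hkl')
    (h3 x j k l hjk hkl hjl hk hjk' hl hj hkl')

theorem tp4_relation_of_triples_mem (h3 : TP3 B f) (hij : i < j) (hjk : j < k) (hkl : k < l)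
    (hijk : x + unitv n i + unitv n j + unitv n k ∈ B)
    (hijl : x + unitv n i + unitv n j + unitv n l ∈ B)
    (hikl : x + unitv n i + unitv n k + unitv n l ∈ B)
    (hjkl : x + unitv n j + unitv n k + unitv n l ∈ B)
    (hik : x + unitv n i + unitv n k ∈ B) (hjl : x + unitv n j + unitv n l ∈ B)
    (hij' : x + unitv n i + unitv n j ∈ B) (hkl' : x + unitv n k + unitv n l ∈ B)
    (hil : x + unitv n i + unitv n l ∈ B) (hjk' : x + unitv n j + unitv n k ∈ B) :
    f (x + unitv n i + unitv n k) + f (x + unitv n j + unitv n l) =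
      max (f (x + unitv n i + unitv n j) + f (x + unitv n k + unitv n l))
          (f (x + unitv n i + unitv n l) + f (x + unitv n j + unitv n k)) := by
  have hl := h3 (x + unitv n l) i j k hij hjk
  have hj := h3 (x + unitv n j) i k l (hij.trans hjk) hkl
  have hi := h3 (x + unitv n i) j k l hjk hkl
  simp only [add_right_comm _ (unitv n l)] at hl
  simp only [add_right_comm x (unitv n j) (unitv n i)] at hj
  exact tp4_relation_of_tp3_relations_compl
    (hl hikl hjl hijl hkl' hil hjkl) (hj hijl hjk' hijk hjl hij' hjkl) (hi hijl hik hijk hil hij' hikl)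

end TP3

theorem tp3_implies_tp4_general {n : ℕ} (a : Fin n → ℕ)
    (m m' : ℕ) (hmm : m < m')
    (f : (Fin n → ℕ) → ℝ) (h3 : TP3 (tbox a m m') f) :
    TP4 (tbox a m m') f ∧ IsTP (tbox a m m') f := by
  have h4 : TP4 (tbox a m m') f := by
    intro x i j k l hij hjk hkl hik hjl hij' hkl' hil hjk'
    have hx : vsize x + 2 ≤ m' := by simpa [add_assoc] using hik.2.2
    rcases le_or_gt m (vsize x + 1) with hm | hm
    · have single {q r : Fin n} (h : x + unitv n q + unitv n r ∈ tbox a m m') :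
          x + unitv n q ∈ tbox a m m' :=
        mem_tbox_of_le le_self_add h (by simpa using hm)
      exact h3.tp4_relation_of_singles_mem hij hjk hkl (single hik) (single hjl) (single hkl')
        (mem_tbox_of_le (add_le_add_left le_self_add _) hkl' (by simpa using hm))
        hik hjl hij' hkl' hil hjk'
    · have triple {q r s : Fin n} (hrs : r ≠ s) (hr : x + unitv n q + unitv n r ∈ tbox a m m')
          (hs : x + unitv n q + unitv n s ∈ tbox a m m') :
          x + unitv n q + unitv n r + unitv n s ∈ tbox a m m' :=
        add_unitv_add_unitv_mem_tbox hrs hr hs (by simp only [vsize_add, vsize_unitv]; omega)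
      exact h3.tp4_relation_of_triples_mem hij hjk hkl (triple hjk.ne hij' hik)
        (triple (hjk.trans hkl).ne hij' hil) (triple hkl.ne hik hil) (triple hkl.ne hjk' hjl)
        hik hjl hij' hkl' hil hjk'
  exact ⟨h4, h3, h4⟩

/-- **TP3 implies TP4 on truncated boxes of positive width** (Proposition 2):
if `m < m'` and a function `f` on `B = B_m^{m'}(a)` satisfies all TP3-relations
on `B`, then it also satisfies all TP4-relations on `B`; hence `f` is a
TP-function. -/
theorem tp3_implies_tp4 {n : ℕ} (a : Fin n → ℕ) (ha : ∀ i, 0 < a i)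
    (m m' : ℕ) (hmm : m < m') (hm' : m' ≤ vsize a)
    (f : (Fin n → ℕ) → ℝ) (h3 : TP3 (tbox a m m') f) :
    TP4 (tbox a m m') f ∧ IsTP (tbox a m m') f :=
  tp3_implies_tp4_general a m m' hmm f h3
end

section
/- Super-TP4 inequality for flow-generated functions: For any real n×m' matrix W and the function f = f_w on C_0^{m'}, the inequality f(Xik)+f(Xjℓ) ≥ max{f(Xij)+f(Xkℓ), f(Xiℓ)+f(Xjk)} holds for all 1 ≤ i < j < k < ℓ ≤ n and X ⊆ [n]∖{i,j,k,ℓ} with |X| ≤ m'−2. -/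
/-- The TP3-relations for a function on the truncated Boolean cube
`C_m^{m'} = {S ⊆ [n] : m ≤ |S| ≤ m'}` (subsets of `[n] = {1,…,n}` modelled as
finsets of naturals contained in `Icc 1 n`): for `i < j < k` outside `X`, the
six sets `Xik, Xj, Xij, Xk, Xi, Xjk` lie in `C_m^{m'}` exactly when
`m ≤ |X| + 1` and `|X| + 2 ≤ m'`. -/
def TP3B (n m m' : ℕ) (f : Finset ℕ → ℝ) : Prop :=
  ∀ (X : Finset ℕ) (i j k : ℕ), X ⊆ Finset.Icc 1 n →
    1 ≤ i → i < j → j < k → k ≤ n →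
    i ∉ X → j ∉ X → k ∉ X →
    m ≤ X.card + 1 → X.card + 2 ≤ m' →
    f (X ∪ {i, k}) + f (X ∪ {j}) =
      max (f (X ∪ {i, j}) + f (X ∪ {k})) (f (X ∪ {i}) + f (X ∪ {j, k}))

/-- The TP4-relations for a function on the truncated Boolean cube `C_m^{m'}`:
for `i < j < k < l` outside `X`, the six sets involved (all of size `|X|+2`)
lie in `C_m^{m'}` exactly when `m ≤ |X| + 2 ≤ m'`. -/
def TP4B (n m m' : ℕ) (f : Finset ℕ → ℝ) : Prop :=
  ∀ (X : Finset ℕ) (i j k l : ℕ), X ⊆ Finset.Icc 1 n →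
    1 ≤ i → i < j → j < k → k < l → l ≤ n →
    i ∉ X → j ∉ X → k ∉ X → l ∉ X →
    m ≤ X.card + 2 → X.card + 2 ≤ m' →
    f (X ∪ {i, k}) + f (X ∪ {j, l}) =
      max (f (X ∪ {i, j}) + f (X ∪ {k, l})) (f (X ∪ {i, l}) + f (X ∪ {j, k}))

/-- A tropical Plücker function on the truncated Boolean cube `C_m^{m'}`. -/
def IsTPBool (n m m' : ℕ) (f : Finset ℕ → ℝ) : Prop :=
  TP3B n m m' f ∧ TP4B n m m' f

/-- One step of a directed edge in the grid `Γ_{n,m'}`: from `v_{pq}` one can go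
to `v_{p−1,q}` or to `v_{p,q+1}`. -/
def gridStep (u v : ℕ × ℕ) : Prop :=
  (v.1 + 1 = u.1 ∧ v.2 = u.2) ∨ (v.1 = u.1 ∧ v.2 = u.2 + 1)

/-- A (directed) path in the grid `Γ_{n,m'}` from a source `s_p = v_{p,1}` to a
sink `t_q = v_{1,q}`; vertices `v_{pq}` are recorded as pairs `(p,q)` with
`1 ≤ p ≤ n` and `1 ≤ q ≤ m'`. -/
structure GridPath (n m' : ℕ) where
  verts : List (ℕ × ℕ)
  nonempty : verts ≠ []
  range : ∀ v ∈ verts, 1 ≤ v.1 ∧ v.1 ≤ n ∧ 1 ≤ v.2 ∧ v.2 ≤ m'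
  chain : verts.Chain' gridStep
  src : (verts.head nonempty).2 = 1
  snk : (verts.getLast nonempty).1 = 1

/-- `F` is an admissible flow for `S ⊆ [n]`: a collection of pairwise
vertex-disjoint source-to-sink paths whose sinks are exactly `t_1, …, t_{|F|}`
(the `i`-th path ending at `t_{i+1}`) and whose beginning sources are exactly
`{s_p : p ∈ S}`. -/
def AdmissibleFor (n m' : ℕ) (S : Finset ℕ) (F : List (GridPath n m')) : Prop :=
  F.Pairwise (fun P Q => ∀ v ∈ P.verts, v ∉ Q.verts) ∧
  (∀ (i : ℕ) (h : i < F.length),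
      ((F.get ⟨i, h⟩).verts.getLast (F.get ⟨i, h⟩).nonempty).2 = i + 1) ∧
  F.length = S.card ∧
  (∀ p : ℕ, p ∈ S ↔ ∃ P ∈ F, (P.verts.head P.nonempty).1 = p)

/-- The weight of a path: the sum of the weights `w p q` over its vertices. -/
def pathWeight {n m' : ℕ} (w : ℕ → ℕ → ℝ) (P : GridPath n m') : ℝ :=
  (P.verts.map (fun v => w v.1 v.2)).sum

/-- The weight of a flow: the sum of the weights of its paths. -/
def flowWeight {n m' : ℕ} (w : ℕ → ℕ → ℝ) (F : List (GridPath n m')) : ℝ :=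
  (F.map (pathWeight w)).sum

/-- The set of weights of admissible flows for `S` in the grid `Γ_{n,m'}` with
vertex weighting `w`; the value `f_w(S)` is the greatest element of this set. -/
def flowValues (n m' : ℕ) (w : ℕ → ℕ → ℝ) (S : Finset ℕ) : Set ℝ :=
  {t | ∃ F : List (GridPath n m'), AdmissibleFor n m' S F ∧ flowWeight w F = t}

/-!
A path of the grid only moves towards row `1` or to the next column, so it is a staircase,
determined by the rows at which it leaves its columns; the paths of an admissible flow are
vertex-disjoint exactly when these rows interlace from each path to the next, and the weight of
the flow depends only on the multisets of these rows, column by column (its levels).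

Take optimal flows for `Xij` and `Xkl` (or for `Xil` and `Xjk`), merge their levels column by
column and deal the merged rows out alternately by rank. As both flows interlace, each half
interlaces again and is an admissible flow, and the two new flows together have the levels, hence
the total weight, of the old ones. At the sources, `i` and `k` get odd ranks, `j` and `l` even
ones, and each element of `X` (which occurs twice) one of each: the new flows start at `Xik` and
`Xjl`.
-/

namespace GridFlow

open Finset

/-- The vertices `(hi, q), (hi - 1, q), …, (lo, q)` of column `q`; just `[(lo, q)]` if `hi ≤ lo`. -/
def columnSeg (q lo : ℕ) : ℕ → List (ℕ × ℕ)
  | hi => if _ : lo < hi then (hi, q) :: columnSeg q lo (hi - 1) else [(lo, q)]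

section columnSeg

variable {q lo hi : ℕ}

lemma columnSeg_of_lt (h : lo < hi) : columnSeg q lo hi = (hi, q) :: columnSeg q lo (hi - 1) := by
  rw [columnSeg, dif_pos h]

lemma columnSeg_of_le (h : hi ≤ lo) : columnSeg q lo hi = [(lo, q)] := by
  rw [columnSeg, dif_neg (not_lt.2 h)]

lemma columnSeg_ne_nil : columnSeg q lo hi ≠ [] := by
  rcases lt_or_ge lo hi with h | h
  · simp [columnSeg_of_lt h]
  · simp [columnSeg_of_le h]

lemma head?_columnSeg (h : lo ≤ hi) : (columnSeg q lo hi).head? = some (hi, q) := by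
  rcases h.lt_or_eq with h | rfl
  · simp [columnSeg_of_lt h]
  · simp [columnSeg_of_le le_rfl]

lemma getLast?_columnSeg : (columnSeg q lo hi).getLast? = some (lo, q) := by
  induction hi using Nat.strong_induction_on with
  | _ hi ih =>
    rcases lt_or_ge lo hi with h | h
    · rw [columnSeg_of_lt h, List.getLast?_cons, ih (hi - 1) (by omega)]
      rfl
    · simp [columnSeg_of_le h]

lemma mem_columnSeg (h : lo ≤ hi) {v : ℕ × ℕ} :
    v ∈ columnSeg q lo hi ↔ v.2 = q ∧ lo ≤ v.1 ∧ v.1 ≤ hi := by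
  induction hi using Nat.strong_induction_on with
  | _ hi ih =>
    rcases h.lt_or_eq with h | rfl
    · rw [columnSeg_of_lt h, List.mem_cons, ih (hi - 1) (by omega) (by omega), Prod.ext_iff]
      omega
    · rw [columnSeg_of_le le_rfl, List.mem_singleton, Prod.ext_iff]
      omega

lemma isChain_columnSeg : (columnSeg q lo hi).IsChain gridStep := by
  induction hi using Nat.strong_induction_on with
  | _ hi ih =>
    rcases lt_or_ge lo hi with h | h
    · rw [columnSeg_of_lt h, List.isChain_cons, head?_columnSeg (by omega)]
      refine ⟨?_, ih (hi - 1) (by omega)⟩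
      rintro _ ⟨⟩
      left
      exact ⟨by dsimp; omega, rfl⟩
    · rw [columnSeg_of_le h]
      exact List.isChain_singleton _

lemma sum_map_columnSeg (h : lo ≤ hi) (f : ℕ × ℕ → ℝ) :
    ((columnSeg q lo hi).map f).sum = ∑ p ∈ Icc lo hi, f (p, q) := by
  induction hi using Nat.strong_induction_on with
  | _ hi ih =>
    rcases h.lt_or_eq with h | rfl
    · have hIcc : Icc lo hi = insert hi (Icc lo (hi - 1)) := by
        ext x; simp only [mem_insert, mem_Icc]; omega
      rw [columnSeg_of_lt h, hIcc, sum_insert (by rw [mem_Icc]; omega), List.map_cons,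
        List.sum_cons, ih (hi - 1) (by omega) (by omega)]
    · simp [columnSeg_of_le le_rfl]

end columnSeg

/-- The rows of a staircase path with starting row `r` and turning rows `hs`:
`staircaseRow r hs 0 = r`, and `staircaseRow r hs (t + 1)` is the row at which the path leaves
its `(t + 1)`-st column, with the value `1` past the last column. -/
def staircaseRow (r : ℕ) (hs : List ℕ) : ℕ → ℕ
  | 0 => r
  | t + 1 => hs.getD t 1

def IsStaircase (r : ℕ) (hs : List ℕ) : Prop :=
  Antitone (staircaseRow r hs)

/-- The staircase path starting at `(r, q)` and leaving column `q + t` at row `hs[t]`. -/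
def staircase : ℕ → ℕ → List ℕ → List (ℕ × ℕ)
  | q, r, [] => columnSeg q 1 r
  | q, r, r' :: hs => columnSeg q r' r ++ staircase (q + 1) r' hs

section staircase

variable {q r r' t : ℕ} {hs : List ℕ}

@[simp] lemma staircaseRow_zero : staircaseRow r hs 0 = r := rfl

lemma staircaseRow_cons_succ : staircaseRow r (r' :: hs) (t + 1) = staircaseRow r' hs t := by
  cases t <;> rfl

lemma staircaseRow_succ_of_lt (h : t < hs.length) : staircaseRow r hs (t + 1) = hs[t] :=
  List.getD_eq_getElem _ _ h

lemma staircaseRow_of_length_lt (h : hs.length < t) : staircaseRow r hs t = 1 := by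
  obtain ⟨t, rfl⟩ := Nat.exists_eq_add_of_le' (Nat.zero_lt_of_lt h)
  exact List.getD_eq_default _ _ (by omega)

lemma IsStaircase.one_le (h : IsStaircase r hs) (t : ℕ) : 1 ≤ staircaseRow r hs t := by
  calc 1 = staircaseRow r hs (max t (hs.length + 1)) := (staircaseRow_of_length_lt (by omega)).symm
    _ ≤ staircaseRow r hs t := h (le_max_left _ _)

lemma isStaircase_nil : IsStaircase r [] ↔ 1 ≤ r := by
  refine ⟨fun h => h.one_le 0, fun h => antitone_nat_of_succ_le fun t => ?_⟩
  cases t <;> simp [staircaseRow, h]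

lemma isStaircase_cons : IsStaircase r (r' :: hs) ↔ r' ≤ r ∧ IsStaircase r' hs := by
  refine ⟨fun h => ⟨h (Nat.zero_le 1), fun a b hab => ?_⟩, fun ⟨hr, h⟩ => ?_⟩
  · simpa only [staircaseRow_cons_succ] using h (Nat.succ_le_succ hab)
  · refine antitone_nat_of_succ_le fun t => ?_
    cases t with
    | zero => exact hr
    | succ t => simpa only [staircaseRow_cons_succ] using h t.le_succ

lemma staircase_ne_nil : staircase q r hs ≠ [] := by
  cases hs with
  | nil => exact columnSeg_ne_nil
  | cons r' hs => simp [staircase, columnSeg_ne_nil]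

lemma head?_staircase (h : IsStaircase r hs) : (staircase q r hs).head? = some (r, q) := by
  cases hs with
  | nil => exact head?_columnSeg (isStaircase_nil.1 h)
  | cons r' hs => rw [staircase, List.head?_append, head?_columnSeg (isStaircase_cons.1 h).1]; rfl

lemma head_staircase (h : IsStaircase r hs) : (staircase q r hs).head staircase_ne_nil = (r, q) :=
  Option.some_injective _ ((List.head?_eq_some_head _).symm.trans (head?_staircase h))

lemma getLast?_staircase : (staircase q r hs).getLast? = some (1, q + hs.length) := by
  induction hs generalizing q r with
  | nil => exact getLast?_columnSeg
  | cons r' hs ih =>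
    rw [staircase, List.getLast?_append_of_ne_nil _ staircase_ne_nil, ih, List.length_cons,
      ← add_assoc, add_right_comm]

lemma getLast_staircase : (staircase q r hs).getLast staircase_ne_nil = (1, q + hs.length) :=
  Option.some_injective _ ((List.getLast?_eq_some_getLast _).symm.trans getLast?_staircase)

lemma isChain_staircase (h : IsStaircase r hs) : (staircase q r hs).IsChain gridStep := by
  induction hs generalizing q r with
  | nil => exact isChain_columnSeg
  | cons r' hs ih =>
    obtain ⟨-, h'⟩ := isStaircase_cons.1 h
    rw [staircase, List.isChain_append, getLast?_columnSeg, head?_staircase h']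
    refine ⟨isChain_columnSeg, ih h', ?_⟩
    rintro _ ⟨⟩ _ ⟨⟩
    right
    exact ⟨rfl, rfl⟩

lemma mem_staircase (h : IsStaircase r hs) {v : ℕ × ℕ} :
    v ∈ staircase q r hs ↔ q ≤ v.2 ∧ v.2 ≤ q + hs.length ∧
      staircaseRow r hs (v.2 + 1 - q) ≤ v.1 ∧ v.1 ≤ staircaseRow r hs (v.2 - q) := by
  induction hs generalizing q r with
  | nil =>
    rw [staircase, mem_columnSeg (isStaircase_nil.1 h)]
    rcases v with ⟨p, c⟩
    dsimp only
    constructor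
    · rintro ⟨rfl, h1, h2⟩
      simp [staircaseRow, h1, h2]
    · rintro ⟨h1, h2, h3, h4⟩
      obtain rfl : c = q := by rw [List.length_nil, add_zero] at h2; omega
      rw [Nat.add_sub_cancel_left] at h3
      rw [Nat.sub_self] at h4
      exact ⟨rfl, h3, h4⟩
  | cons r' hs ih =>
    obtain ⟨hr, h'⟩ := isStaircase_cons.1 h
    rw [staircase, List.mem_append, mem_columnSeg hr, ih h']
    rcases v with ⟨p, c⟩
    dsimp only
    rcases Nat.lt_or_ge q c with hc | hc
    · have e1 : c + 1 - q = (c + 1 - (q + 1)) + 1 := by omega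
      have e2 : c - q = (c - (q + 1)) + 1 := by omega
      rw [e1, e2, staircaseRow_cons_succ, staircaseRow_cons_succ, List.length_cons]
      omega
    · rcases hc.lt_or_eq with hc | rfl
      · omega
      · simp [staircaseRow, List.length_cons]

lemma sum_map_staircase (h : IsStaircase r hs) (f : ℕ × ℕ → ℝ) :
    ((staircase q r hs).map f).sum = ∑ m ∈ range (hs.length + 1),
      ∑ p ∈ Icc (staircaseRow r hs (m + 1)) (staircaseRow r hs m), f (p, q + m) := by
  induction hs generalizing q r with
  | nil => simp [staircase, sum_map_columnSeg (isStaircase_nil.1 h), staircaseRow]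
  | cons r' hs ih =>
    obtain ⟨hr, h'⟩ := isStaircase_cons.1 h
    rw [staircase, List.map_append, List.sum_append, sum_map_columnSeg hr, ih h',
      List.length_cons, sum_range_succ' _ (hs.length + 1), add_comm]
    simp only [staircaseRow_cons_succ, staircaseRow_zero, add_zero, ← add_assoc, add_right_comm q]

lemma staircase_succ (h : IsStaircase r hs) :
    staircase q (r + 1) hs = (r + 1, q) :: staircase q r hs := by
  cases hs with
  | nil => rw [staircase, staircase, columnSeg_of_lt (by have := isStaircase_nil.1 h; omega)]; rfl
  | cons r' hs =>
    rw [staircase, staircase, columnSeg_of_lt (by have := (isStaircase_cons.1 h).1; omega)]; rfl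

lemma IsStaircase.succ (h : IsStaircase r hs) : IsStaircase (r + 1) hs :=
  antitone_nat_of_succ_le fun t => by
    cases t with
    | zero => exact (h (Nat.zero_le 1)).trans r.le_succ
    | succ t => exact h (t + 1).le_succ

lemma exists_eq_staircase {v : List (ℕ × ℕ)} (hne : v ≠ []) (hch : v.IsChain gridStep)
    (hlast : (v.getLast hne).1 = 1) :
    ∃ hs, IsStaircase (v.head hne).1 hs ∧ v = staircase (v.head hne).2 (v.head hne).1 hs := by
  induction v with
  | nil => exact absurd rfl hne
  | cons x v ih =>
    cases v with
    | nil =>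
      obtain ⟨p, c⟩ := x
      obtain rfl : p = 1 := hlast
      exact ⟨[], isStaircase_nil.2 le_rfl, by simp [staircase, columnSeg_of_le le_rfl]⟩
    | cons y v =>
      obtain ⟨hstep, hch⟩ := List.isChain_cons_cons.1 hch
      obtain ⟨hs, h, hv⟩ := ih (List.cons_ne_nil y v) hch (by rwa [List.getLast_cons] at hlast)
      simp only [List.head_cons] at h hv ⊢
      rcases hstep with ⟨h1, h2⟩ | ⟨h1, h2⟩
      · refine ⟨hs, h1 ▸ h.succ, ?_⟩
        rw [← h2, ← h1, staircase_succ h, ← hv, h1, h2]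
      · refine ⟨x.1 :: hs, isStaircase_cons.2 ⟨le_rfl, h1 ▸ h⟩, ?_⟩
        rw [staircase, columnSeg_of_le le_rfl, hv, h1, h2]
        rfl

/-- Otherwise, going back from the last column of the first path, some vertex
`(staircaseRow r' hs' (t + 1), q + t)` would lie on both paths. -/
lemma staircaseRow_lt_of_disjoint {hs' : List ℕ} (h : IsStaircase r hs)
    (h' : IsStaircase r' hs') (hlen : hs.length ≤ hs'.length)
    (hdisj : ∀ v ∈ staircase q r hs, v ∉ staircase q r' hs') (ht : t ≤ hs.length) :
    staircaseRow r hs t < staircaseRow r' hs' (t + 1) := by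
  have step : ∀ t ≤ hs.length, staircaseRow r hs (t + 1) ≤ staircaseRow r' hs' (t + 1) →
      staircaseRow r hs t < staircaseRow r' hs' (t + 1) := by
    intro t ht hbelow
    by_contra! habove
    refine hdisj (staircaseRow r' hs' (t + 1), q + t) ?_ ?_
    · rw [mem_staircase h, show q + t + 1 - q = t + 1 by omega, Nat.add_sub_cancel_left]
      omega
    · rw [mem_staircase h', show q + t + 1 - q = t + 1 by omega, Nat.add_sub_cancel_left]
      exact ⟨by omega, by omega, le_rfl, h' t.le_succ⟩
  obtain ⟨d, hd⟩ := Nat.exists_eq_add_of_le ht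
  induction d generalizing t with
  | zero =>
    refine step t ht ?_
    rw [staircaseRow_of_length_lt (by omega)]
    exact h'.one_le _
  | succ d ih =>
    exact step t ht ((ih (by omega) (by omega)).le.trans (h' (t + 1).le_succ))

end staircase

def countGe (M : Multiset ℕ) (u : ℕ) : ℕ := M.countP (u ≤ ·)

def countGt (M : Multiset ℕ) (u : ℕ) : ℕ := M.countP (u < ·)

/-- The `(t + 1)`-st largest element of `M`, counted with multiplicity (junk `0` if
`card M ≤ t`). -/
noncomputable def nthLargest (M : Multiset ℕ) (t : ℕ) : ℕ := sInf {u | countGt M u ≤ t}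

section OrderStatistics

variable {M M' : Multiset ℕ} {t u v : ℕ}

lemma countGe_add : countGe (M + M') u = countGe M u + countGe M' u := Multiset.countP_add _ _ _

lemma countGt_add : countGt (M + M') u = countGt M u + countGt M' u := Multiset.countP_add _ _ _

lemma countGe_le_card : countGe M u ≤ Multiset.card M := Multiset.countP_le_card _ _

lemma countGe_succ : countGe M (u + 1) = countGt M u := rfl

lemma countGt_antitone (h : u ≤ v) : countGt M v ≤ countGt M u := by
  simp only [countGt, Multiset.countP_eq_card_filter]
  exact Multiset.card_le_card (Multiset.monotone_filter_right _ fun x hx => h.trans_lt hx)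

lemma countGe_eq_countGt_add_count : countGe M u = countGt M u + M.count u := by
  induction M using Multiset.induction_on with
  | empty => rfl
  | cons a M ih =>
    simp only [countGe, countGt, Multiset.countP_cons, Multiset.count_cons] at ih ⊢
    split_ifs <;> omega

lemma countGt_nthLargest_le : countGt M (nthLargest M t) ≤ t := by
  refine Nat.sInf_mem (s := {u | countGt M u ≤ t}) ⟨M.sup, ?_⟩
  have : countGt M M.sup = 0 :=
    Multiset.countP_eq_zero.2 fun a ha => not_lt.2 (Multiset.le_sup ha)
  simp [this]

lemma nthLargest_le (h : countGt M v ≤ t) : nthLargest M t ≤ v := Nat.sInf_le h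

lemma lt_countGe_nthLargest (ht : t < Multiset.card M) : t < countGe M (nthLargest M t) := by
  rcases Nat.eq_zero_or_pos (nthLargest M t) with h | h
  · rwa [h, countGe, Multiset.countP_eq_card.2 fun a _ => Nat.zero_le a]
  · have hlt : ¬ countGt M (nthLargest M t - 1) ≤ t :=
      Nat.notMem_of_lt_sInf (s := {u | countGt M u ≤ t}) (Nat.sub_lt h one_pos)
    have hcount : countGe M (nthLargest M t) = countGt M (nthLargest M t - 1) := by
      rw [← countGe_succ, Nat.sub_add_cancel h]
    omega

lemma le_nthLargest (h : t < countGe M v) : v ≤ nthLargest M t := by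
  by_contra! hlt
  have := countGt_nthLargest_le (M := M) (t := t)
  have : countGe M v ≤ countGt M (nthLargest M t) := by
    rw [← countGe_succ]
    simp only [countGe, Multiset.countP_eq_card_filter]
    exact Multiset.card_le_card (Multiset.monotone_filter_right _ fun x hx => hlt.trans_le hx)
  omega

lemma lt_nthLargest (h : t < countGt M v) : v < nthLargest M t := by
  by_contra! hle
  have := countGt_antitone (M := M) hle
  have := countGt_nthLargest_le (M := M) (t := t)
  omega

lemma nthLargest_eq_iff (ht : t < Multiset.card M) :
    nthLargest M t = v ↔ countGt M v ≤ t ∧ t < countGe M v := by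
  constructor
  · rintro rfl
    exact ⟨countGt_nthLargest_le, lt_countGe_nthLargest ht⟩
  · rintro ⟨h1, h2⟩
    exact le_antisymm (nthLargest_le h1) (le_nthLargest h2)

lemma nthLargest_mem (ht : t < Multiset.card M) : nthLargest M t ∈ M := by
  have h1 := countGt_nthLargest_le (M := M) (t := t)
  have h2 := lt_countGe_nthLargest ht
  rw [countGe_eq_countGt_add_count] at h2
  exact Multiset.count_pos.1 (by omega)

lemma map_nthLargest_range : (Multiset.range (Multiset.card M)).map (nthLargest M) = M := by
  refine Multiset.ext.2 fun v => ?_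
  have hfilter : (Finset.range (Multiset.card M)).filter (fun t => v = nthLargest M t) =
      Finset.Ico (countGt M v) (countGe M v) := by
    ext t
    simp only [Finset.mem_filter, Finset.mem_range, Finset.mem_Ico]
    constructor
    · rintro ⟨ht, hv⟩
      exact (nthLargest_eq_iff ht).1 hv.symm
    · rintro ⟨h1, h2⟩
      have ht := h2.trans_le countGe_le_card
      exact ⟨ht, ((nthLargest_eq_iff ht).2 ⟨h1, h2⟩).symm⟩
  rw [Multiset.count_map, ← Finset.range_val, ← Finset.filter_val, Finset.card_val, hfilter,
    Nat.card_Ico, countGe_eq_countGt_add_count, Nat.add_sub_cancel_left]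

end OrderStatistics

lemma sum_sum_Icc_eq_sum_card_nsmul {ι M : Type*} [AddCommMonoid M] (s : Finset ι) (lo hi : ι → ℕ)
    {u : Finset ℕ} (hsub : ∀ i ∈ s, Icc (lo i) (hi i) ⊆ u) (g : ℕ → M) :
    ∑ i ∈ s, ∑ p ∈ Icc (lo i) (hi i), g p = ∑ p ∈ u, #{i ∈ s | lo i ≤ p ∧ p ≤ hi i} • g p := by
  rw [sum_comm' (t' := u) (s' := fun p => {i ∈ s | lo i ≤ p ∧ p ≤ hi i})]
  · simp only [sum_const]
  · intro i p
    simp only [mem_filter, mem_Icc]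
    exact ⟨fun h => ⟨⟨h.1, h.2⟩, hsub i h.1 (mem_Icc.2 h.2)⟩, fun h => h.1⟩

/-- The weight of a flow whose levels are `L`: the bracket counts the paths through `(p, q + 1)`. -/
noncomputable def levelWeight (n N : ℕ) (w : ℕ → ℕ → ℝ) (L : ℕ → Multiset ℕ) : ℝ :=
  ∑ q ∈ range N, ∑ p ∈ Icc 1 n, ((countGe (L q) p : ℝ) - countGe (L (q + 1)) (p + 1)) * w p (q + 1)

lemma levelWeight_add (n N : ℕ) (w : ℕ → ℕ → ℝ) (L L' : ℕ → Multiset ℕ) :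
    levelWeight n N w L + levelWeight n N w L' = levelWeight n N w (L + L') := by
  simp only [levelWeight, ← sum_add_distrib, Pi.add_apply, countGe_add]
  refine sum_congr rfl fun q _ => sum_congr rfl fun p _ => ?_
  push_cast
  ring

/-- `N` staircase paths in the grid with `n` rows, path `i` running to the sink `t_{i + 1}`:
`row i 0` is its source row and `row i q` the row at which it leaves column `q` (`1` once
`q > i`). Vertex-disjointness of the paths is the condition `interlace`. -/
structure StaircaseFlow (n N : ℕ) where
  row : ℕ → ℕ → ℕ
  antitone_row : ∀ i, Antitone (row i)
  row_of_lt : ∀ i q, i < q → row i q = 1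
  row_zero_le : ∀ i < N, row i 0 ≤ n
  interlace : ∀ i q, i + 1 < N → q ≤ i → row i q < row (i + 1) (q + 1)

namespace StaircaseFlow

variable {n N : ℕ} (D : StaircaseFlow n N)

lemma one_le_row (i q : ℕ) : 1 ≤ D.row i q := by
  calc 1 = D.row i (max q (i + 1)) := (D.row_of_lt _ _ (by omega)).symm
    _ ≤ D.row i q := D.antitone_row i (le_max_left _ _)

lemma row_le {i : ℕ} (hi : i < N) (q : ℕ) : D.row i q ≤ n :=
  (D.antitone_row i (Nat.zero_le q)).trans (D.row_zero_le i hi)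

lemma row_lt_row {a b q : ℕ} (hab : a < b) (hb : b < N) (hq : q ≤ a) :
    D.row a q < D.row b (q + 1) := by
  induction b, hab using Nat.le_induction with
  | base => exact D.interlace a q hb hq
  | succ b hab ih =>
    calc D.row a q < D.row b (q + 1) := ih (by omega)
      _ ≤ D.row b q := D.antitone_row b q.le_succ
      _ < D.row (b + 1) (q + 1) := D.interlace b q hb (by omega)

lemma row_zero_strictMonoOn : StrictMonoOn (D.row · 0) (Set.Iio N) := fun a _ b hb hab =>
  (D.row_lt_row (q := 0) hab hb (Nat.zero_le a)).trans_le (D.antitone_row b zero_le_one)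

/-- The rows at which the paths `i ≥ q` leave column `q`; for `q = 0` the source rows. -/
def level (q : ℕ) : Multiset ℕ := (Ico q N).val.map (D.row · q)

def sources : Finset ℕ := (range N).image (D.row · 0)

lemma card_level (q : ℕ) : Multiset.card (D.level q) = N - q := by
  simp [level]

lemma countGe_level (q u : ℕ) : countGe (D.level q) u = #{i ∈ Ico q N | u ≤ D.row i q} := by
  rw [countGe, level, Multiset.countP_map]; rfl

lemma countGt_level (q u : ℕ) : countGt (D.level q) u = #{i ∈ Ico q N | u < D.row i q} := by
  rw [countGt, level, Multiset.countP_map]; rfl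

lemma mem_level {q v : ℕ} (hv : v ∈ D.level q) : 1 ≤ v ∧ v ≤ n := by
  obtain ⟨i, hi, rfl⟩ := Multiset.mem_map.1 hv
  exact ⟨D.one_le_row i q, D.row_le (mem_Ico.1 hi).2 q⟩

lemma level_zero : D.level 0 = D.sources.val := by
  rw [level, sources, ← range_eq_Ico, image_val_of_injOn fun a ha b hb =>
    D.row_zero_strictMonoOn.injOn (by simpa using ha) (by simpa using hb)]

lemma sources_subset : D.sources ⊆ Icc 1 n := by
  intro v hv
  obtain ⟨i, hi, rfl⟩ := mem_image.1 hv
  exact mem_Icc.2 ⟨D.one_le_row i 0, D.row_zero_le i (mem_range.1 hi)⟩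

lemma card_sources_le : #D.sources ≤ N := card_image_le.trans (card_range N).le

lemma countGe_level_succ_le (q u : ℕ) : countGe (D.level (q + 1)) u ≤ countGe (D.level q) u := by
  rw [countGe_level, countGe_level]
  refine card_le_card fun i hi => ?_
  simp only [mem_filter, mem_Ico] at hi ⊢
  exact ⟨⟨by omega, hi.1.2⟩, hi.2.trans (D.antitone_row i q.le_succ)⟩

/-- Path `i + 1` at level `q + 1` lies below path `i` at level `q`; only the last path has no
successor. -/
lemma countGe_level_le_countGt_succ (q u : ℕ) :
    countGe (D.level q) u ≤ countGt (D.level (q + 1)) u + 1 := by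
  rw [countGe_level, countGt_level]
  calc #{i ∈ Ico q N | u ≤ D.row i q}
      ≤ #(insert (N - 1) ({i ∈ Ico q N | u ≤ D.row i q}.filter (· + 1 < N))) := by
        refine card_le_card fun i hi => ?_
        by_cases hiN : i + 1 < N
        · exact mem_insert_of_mem (mem_filter.2 ⟨hi, hiN⟩)
        · have := (mem_Ico.1 (mem_filter.1 hi).1).2
          exact mem_insert.2 (Or.inl (by omega))
    _ ≤ #({i ∈ Ico q N | u ≤ D.row i q}.filter (· + 1 < N)) + 1 := card_insert_le _ _
    _ ≤ #{i ∈ Ico (q + 1) N | u < D.row i (q + 1)} + 1 := by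
        gcongr 1
        refine card_le_card_of_injOn (· + 1) (fun i hi => ?_) (fun a _ b _ h => by simpa using h)
        simp only [mem_coe, mem_filter, mem_Ico] at hi ⊢
        exact ⟨⟨by omega, hi.2⟩, hi.1.2.trans_lt (D.interlace i q hi.2 hi.1.1.1)⟩

def weight (w : ℕ → ℕ → ℝ) : ℝ :=
  ∑ i ∈ range N, ∑ q ∈ range (i + 1), ∑ p ∈ Icc (D.row i (q + 1)) (D.row i q), w p (q + 1)

lemma countGe_level_eq_card_add_countGe_succ (q : ℕ) {p : ℕ} (hp : 1 ≤ p) :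
    countGe (D.level q) p =
      #{i ∈ Ico q N | D.row i (q + 1) ≤ p ∧ p ≤ D.row i q} + countGe (D.level (q + 1)) (p + 1) := by
  rw [countGe_level, countGe_level,
    ← card_filter_add_card_filter_not (s := {i ∈ Ico q N | p ≤ D.row i q}) (D.row · (q + 1) ≤ p),
    filter_filter, filter_filter]
  congr 1
  · congr 1; ext i; simp only [mem_filter]; tauto
  · congr 1
    ext i
    simp only [mem_filter, mem_Ico]
    constructor
    · rintro ⟨⟨hqi, hiN⟩, -, hrow⟩
      have : q ≠ i := by rintro rfl; rw [D.row_of_lt q (q + 1) q.lt_succ_self] at hrow; omega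
      exact ⟨⟨by omega, hiN⟩, by omega⟩
    · rintro ⟨⟨hqi, hiN⟩, hrow⟩
      exact ⟨⟨by omega, hiN⟩, by have := D.antitone_row i (Nat.le_add_right q 1); omega, by omega⟩

lemma weight_eq_levelWeight (w : ℕ → ℕ → ℝ) : D.weight w = levelWeight n N w D.level := by
  rw [weight, sum_comm' (t' := range N) (s' := fun q => Ico q N)]
  · refine sum_congr rfl fun q _ => ?_
    rw [sum_sum_Icc_eq_sum_card_nsmul (u := Icc 1 n) _ _ _ fun i hi => Icc_subset_Icc
      (D.one_le_row i _) (D.row_le (mem_Ico.1 hi).2 q)]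
    refine sum_congr rfl fun p hp => ?_
    rw [nsmul_eq_mul, D.countGe_level_eq_card_add_countGe_succ q (mem_Icc.1 hp).1]
    push_cast
    ring
  · intro i q
    simp only [mem_range, mem_Ico]
    omega

end StaircaseFlow

lemma _root_.GridPath.ext_verts {n m' : ℕ} {P Q : GridPath n m'} (h : P.verts = Q.verts) :
    P = Q := by
  cases P; cases Q; subst h; rfl

lemma _root_.GridPath.exists_staircase {n m' : ℕ} (P : GridPath n m') :
    ∃ hs, IsStaircase (P.verts.head P.nonempty).1 hs ∧
      P.verts = staircase 1 (P.verts.head P.nonempty).1 hs ∧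
      (P.verts.getLast P.nonempty).2 = hs.length + 1 := by
  obtain ⟨hs, h, hv⟩ := exists_eq_staircase P.nonempty P.chain P.snk
  rw [P.src] at hv
  refine ⟨hs, h, hv, ?_⟩
  have hlast := getLast?_staircase (q := 1) (r := (P.verts.head P.nonempty).1) (hs := hs)
  rw [← hv, List.getLast?_eq_some_getLast P.nonempty, Option.some_inj] at hlast
  rw [hlast, add_comm]

lemma _root_.AdmissibleFor.sources_eq {n m' : ℕ} {S T : Finset ℕ} {F : List (GridPath n m')}
    (hS : AdmissibleFor n m' S F) (hT : AdmissibleFor n m' T F) : S = T :=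
  Finset.ext fun p => (hS.2.2.2 p).trans (hT.2.2.2 p).symm

namespace StaircaseFlow

variable {n N m' : ℕ} (D : StaircaseFlow n N)

def turns (i : ℕ) : List ℕ := List.ofFn fun t : Fin i => D.row i (t + 1)

lemma length_turns (i : ℕ) : (D.turns i).length = i := List.length_ofFn

lemma staircaseRow_turns (i : ℕ) : staircaseRow (D.row i 0) (D.turns i) = D.row i := by
  funext q
  cases q with
  | zero => rfl
  | succ t =>
    rcases lt_or_ge t i with h | h
    · simp [staircaseRow, turns, h]
    · rw [staircaseRow_of_length_lt (by rw [length_turns]; omega), D.row_of_lt i _ (by omega)]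

lemma isStaircase_turns (i : ℕ) : IsStaircase (D.row i 0) (D.turns i) := by
  rw [IsStaircase, staircaseRow_turns]
  exact D.antitone_row i

lemma mem_staircase_turns {i : ℕ} {v : ℕ × ℕ} :
    v ∈ staircase 1 (D.row i 0) (D.turns i) ↔
      1 ≤ v.2 ∧ v.2 ≤ i + 1 ∧ D.row i v.2 ≤ v.1 ∧ v.1 ≤ D.row i (v.2 - 1) := by
  rw [mem_staircase (D.isStaircase_turns i), staircaseRow_turns, length_turns, Nat.add_sub_cancel,
    add_comm 1 i]

lemma turns_eq {i r : ℕ} {hs : List ℕ} (h : D.row i = staircaseRow r hs) (hlen : hs.length = i) :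
    D.turns i = hs :=
  List.ext_getElem (by rw [length_turns, hlen]) fun t h1 h2 => by
    simp only [turns, List.getElem_ofFn]
    rw [h, staircaseRow_succ_of_lt h2]

def toPath (hm : N ≤ m') (i : Fin N) : GridPath n m' where
  verts := staircase 1 (D.row i 0) (D.turns i)
  nonempty := staircase_ne_nil
  range v hv := by
    rw [mem_staircase_turns] at hv
    have := D.row_le i.2 (v.2 - 1)
    have := D.one_le_row i v.2
    omega
  chain := isChain_staircase (D.isStaircase_turns i)
  src := by rw [head_staircase (D.isStaircase_turns i)]
  snk := by rw [getLast_staircase]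

def toFlow (hm : N ≤ m') : List (GridPath n m') := List.ofFn (D.toPath hm)

variable (hm : N ≤ m')

lemma get_toFlow (i : ℕ) (h : i < (D.toFlow hm).length) :
    (D.toFlow hm).get ⟨i, h⟩ = D.toPath hm ⟨i, by simpa [toFlow] using h⟩ :=
  List.get_ofFn _ _

lemma toPath_head (i : Fin N) :
    (D.toPath hm i).verts.head (D.toPath hm i).nonempty = (D.row i 0, 1) :=
  head_staircase (D.isStaircase_turns i)

lemma toPath_getLast (i : Fin N) :
    (D.toPath hm i).verts.getLast (D.toPath hm i).nonempty = (1, (i : ℕ) + 1) := by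
  rw [toPath, getLast_staircase, length_turns, add_comm]

lemma toPath_disjoint {a b : Fin N} (hab : a < b) :
    ∀ v ∈ (D.toPath hm a).verts, v ∉ (D.toPath hm b).verts := by
  intro v hva hvb
  rw [toPath, mem_staircase_turns] at hva hvb
  have := D.row_lt_row (q := v.2 - 1) hab b.2 (by omega)
  rw [Nat.sub_add_cancel hva.1] at this
  omega

lemma toFlow_admissible : AdmissibleFor n m' D.sources (D.toFlow hm) := by
  refine ⟨List.pairwise_ofFn.2 fun a b hab => D.toPath_disjoint hm hab, fun i hi => ?_, ?_, ?_⟩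
  · simp [toFlow, toPath_getLast]
  · rw [toFlow, List.length_ofFn, sources, card_image_of_injOn fun a ha b hb =>
      D.row_zero_strictMonoOn.injOn (by simpa using ha) (by simpa using hb), card_range]
  · intro p
    simp only [sources, mem_image, mem_range, toFlow, List.mem_ofFn]
    constructor
    · rintro ⟨i, hi, rfl⟩
      exact ⟨_, ⟨⟨i, hi⟩, rfl⟩, by rw [toPath_head]⟩
    · rintro ⟨_, ⟨i, rfl⟩, rfl⟩
      exact ⟨i, i.2, by rw [toPath_head]⟩

lemma flowWeight_toFlow (w : ℕ → ℕ → ℝ) : flowWeight w (D.toFlow hm) = D.weight w := by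
  have hpath : ∀ i : Fin N, pathWeight w (D.toPath hm i) = ∑ q ∈ range (i + 1),
      ∑ p ∈ Icc (D.row i (q + 1)) (D.row i q), w p (q + 1) := by
    intro i
    rw [pathWeight, toPath, sum_map_staircase (D.isStaircase_turns i), length_turns,
      staircaseRow_turns]
    simp only [add_comm 1]
  rw [flowWeight, toFlow, List.map_ofFn, List.sum_ofFn, weight]
  simp only [Function.comp_apply, hpath]
  exact Fin.sum_univ_eq_sum_range (fun i => ∑ q ∈ range (i + 1),
      ∑ p ∈ Icc (D.row i (q + 1)) (D.row i q), w p (q + 1)) N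

def ofStaircases (r : Fin N → ℕ) (hs : Fin N → List ℕ) (hst : ∀ i, IsStaircase (r i) (hs i))
    (hlen : ∀ i, (hs i).length = i) (hr : ∀ i, r i ≤ n)
    (hdisj : ∀ i j, i < j → ∀ v ∈ staircase 1 (r i) (hs i), v ∉ staircase 1 (r j) (hs j)) :
    StaircaseFlow n N where
  row i := if h : i < N then staircaseRow (r ⟨i, h⟩) (hs ⟨i, h⟩) else fun _ => 1
  antitone_row i := by
    split_ifs
    exacts [hst _, antitone_const]
  row_of_lt i q hiq := by
    split_ifs with h
    exacts [staircaseRow_of_length_lt (by rw [hlen]; exact hiq), rfl]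
  row_zero_le i hi := by
    simpa [dif_pos hi] using hr ⟨i, hi⟩
  interlace i q hi hq := by
    simp only [dif_pos hi, dif_pos (Nat.lt_of_succ_lt hi)]
    exact staircaseRow_lt_of_disjoint (hst _) (hst _) (by simp [hlen])
      (hdisj _ _ (Fin.mk_lt_mk.2 i.lt_succ_self)) (by rw [hlen]; exact hq)

lemma row_ofStaircases {r : Fin N → ℕ} {hs : Fin N → List ℕ} {hst hlen hr hdisj} (i : Fin N) :
    (ofStaircases r hs hst hlen hr hdisj : StaircaseFlow n N).row i = staircaseRow (r i) (hs i) :=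
  dif_pos i.2

end StaircaseFlow

open StaircaseFlow in
lemma _root_.AdmissibleFor.exists_eq_toFlow {n m' N : ℕ} {S : Finset ℕ}
    {F : List (GridPath n m')} (hadm : AdmissibleFor n m' S F) (hN : F.length = N) :
    ∃ (D : StaircaseFlow n N) (hm : N ≤ m'), F = D.toFlow hm := by
  subst hN
  obtain ⟨hdisj, hsink, -, -⟩ := hadm
  choose hs hst hverts hlast using fun i : Fin F.length => (F.get i).exists_staircase
  have hlen : ∀ i : Fin F.length, (hs i).length = i := fun i => by
    have := (hlast i).symm.trans (hsink i i.2)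
    omega
  have hm : F.length ≤ m' := by
    rcases Nat.eq_zero_or_pos F.length with h | h
    · omega
    · have hsnk :=
        (F.get ⟨_, Nat.sub_lt h one_pos⟩).range _ (List.getLast_mem (GridPath.nonempty _))
      rw [hsink] at hsnk
      omega
  let D : StaircaseFlow n F.length := ofStaircases _ hs hst hlen
    (fun i => ((F.get i).range _ (List.head_mem _)).2.1)
    (fun i j hij => by rw [← hverts, ← hverts]; exact List.pairwise_iff_get.1 hdisj i j hij)
  refine ⟨D, hm, List.ext_get (by simp [toFlow]) fun i h1 h2 => GridPath.ext_verts ?_⟩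
  have hi : D.row i = _ := row_ofStaircases ⟨i, h1⟩
  rw [hverts, get_toFlow]
  simp only [toPath, congrFun hi 0, staircaseRow_zero, D.turns_eq hi (hlen ⟨i, h1⟩)]

/-- The elements of rank `2 (N - 1 - i) + off`, `i < N`, in the decreasing order of `M`
(counted from `0`): every other element, starting with the largest (`off = 0`) or the second
largest (`off = 1`). -/
noncomputable def rankSet (M : Multiset ℕ) (N : ℕ) (off : Fin 2) : Finset ℕ :=
  (range N).image fun i => nthLargest M (2 * (N - 1 - i) + off)

lemma mem_rankSet {M : Multiset ℕ} {N : ℕ} {off : Fin 2} (hM : Multiset.card M = 2 * N) {v : ℕ} :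
    v ∈ rankSet M N off ↔ ∃ t, t % 2 = (off : ℕ) ∧ countGt M v ≤ t ∧ t < countGe M v := by
  simp only [rankSet, mem_image, mem_range]
  constructor
  · rintro ⟨i, hi, rfl⟩
    exact ⟨_, by omega, (nthLargest_eq_iff (by omega)).1 rfl⟩
  · rintro ⟨t, hto, h1, h2⟩
    have ht : t < 2 * N := hM ▸ h2.trans_le countGe_le_card
    refine ⟨N - 1 - t / 2, by omega, ?_⟩
    rw [show 2 * (N - 1 - (N - 1 - t / 2)) + off = t by omega]
    exact (nthLargest_eq_iff (hM ▸ ht)).2 ⟨h1, h2⟩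

lemma map_Ico_add_map_Ico_eq_range (q N : ℕ) :
    (Ico q N).val.map (fun i => 2 * (N - 1 - i) + ((1 : Fin 2) : ℕ)) +
      (Ico q N).val.map (fun i => 2 * (N - 1 - i) + ((0 : Fin 2) : ℕ)) =
      Multiset.range (2 * (N - q)) := by
  induction h : N - q generalizing q with
  | zero => simp [Ico_eq_empty_of_le (show N ≤ q by omega)]
  | succ k ih =>
    rw [← insert_Ico_add_one_left_eq_Ico (show q < N by omega), insert_val_of_notMem (by simp),
      Multiset.map_cons, Multiset.map_cons, Multiset.cons_add, Multiset.add_cons,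
      ih (q + 1) (by omega), show 2 * (k + 1) = 2 * k + 1 + 1 by ring, Multiset.range_succ,
      Multiset.range_succ]
    simp only [Fin.val_one, Fin.val_zero, add_zero, show N - 1 - q = k by omega]

namespace StaircaseFlow

variable {n N : ℕ} (D D' : StaircaseFlow n N)

noncomputable def mergeRow (off : Fin 2) (i q : ℕ) : ℕ :=
  if q ≤ i ∧ i < N then nthLargest (D.level q + D'.level q) (2 * (N - 1 - i) + off) else 1

variable {D D'} {off : Fin 2} {i q : ℕ}

lemma mergeRow_of_le (hq : q ≤ i) (hi : i < N) :
    mergeRow D D' off i q = nthLargest (D.level q + D'.level q) (2 * (N - 1 - i) + off) :=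
  if_pos ⟨hq, hi⟩

lemma mergeRow_mem (hq : q ≤ i) (hi : i < N) : mergeRow D D' off i q ∈ D.level q + D'.level q := by
  rw [mergeRow_of_le hq hi]
  exact nthLargest_mem (by rw [Multiset.card_add, card_level, card_level]; omega)

lemma one_le_mergeRow : 1 ≤ mergeRow D D' off i q := by
  by_cases h : q ≤ i ∧ i < N
  · rcases Multiset.mem_add.1 (mergeRow_mem h.1 h.2) with hv | hv
    exacts [(D.mem_level hv).1, (D'.mem_level hv).1]
  · rw [mergeRow, if_neg h]

lemma mergeRow_succ_le : mergeRow D D' off i (q + 1) ≤ mergeRow D D' off i q := by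
  by_cases h : q + 1 ≤ i ∧ i < N
  · rw [mergeRow_of_le h.1 h.2, mergeRow_of_le (by omega) h.2]
    refine le_nthLargest
      ((lt_countGe_nthLargest (M := D.level (q + 1) + D'.level (q + 1)) ?_).trans_le ?_)
    · rw [Multiset.card_add, card_level, card_level]; omega
    · rw [countGe_add, countGe_add]
      exact add_le_add (D.countGe_level_succ_le q _) (D'.countGe_level_succ_le q _)
  · rw [mergeRow, if_neg h]
    exact one_le_mergeRow

/-- Both flows interlace, so consecutive levels of the merged multiset interlace with step two. -/
lemma mergeRow_lt_mergeRow (hi : i + 1 < N) (hq : q ≤ i) :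
    mergeRow D D' off i q < mergeRow D D' off (i + 1) (q + 1) := by
  rw [mergeRow_of_le hq (by omega), mergeRow_of_le (by omega) hi]
  set v := nthLargest (D.level q + D'.level q) (2 * (N - 1 - i) + off)
  have hv : 2 * (N - 1 - i) + off < countGe (D.level q + D'.level q) v :=
    lt_countGe_nthLargest (by rw [Multiset.card_add, card_level, card_level]; omega)
  have hD := D.countGe_level_le_countGt_succ q v
  have hD' := D'.countGe_level_le_countGt_succ q v
  rw [countGe_add] at hv
  exact lt_nthLargest (by rw [countGt_add]; omega)

/-- Deals the rows at which the paths of `D` and `D'` leave each column out alternately by rank;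
`merge D D' 1` and `merge D D' 0` together use the vertices of `D` and `D'`, with multiplicity. -/
noncomputable def merge (D D' : StaircaseFlow n N) (off : Fin 2) : StaircaseFlow n N where
  row := mergeRow D D' off
  antitone_row _ := antitone_nat_of_succ_le fun _ => mergeRow_succ_le
  row_of_lt i q hiq := by rw [mergeRow, if_neg (by omega)]
  row_zero_le i hi := by
    rcases Multiset.mem_add.1 (mergeRow_mem (off := off) (Nat.zero_le i) hi) with hv | hv
    exacts [(D.mem_level hv).2, (D'.mem_level hv).2]
  interlace _ _ := mergeRow_lt_mergeRow

variable (D D')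

lemma level_merge_add (q : ℕ) :
    (merge D D' 1).level q + (merge D D' 0).level q = D.level q + D'.level q := by
  have hlevel : ∀ off : Fin 2, (merge D D' off).level q =
      ((Ico q N).val.map fun i => 2 * (N - 1 - i) + off).map
        (nthLargest (D.level q + D'.level q)) := fun off => by
    rw [Multiset.map_map]
    exact Multiset.map_congr rfl fun i hi => mergeRow_of_le (mem_Ico.1 hi).1 (mem_Ico.1 hi).2
  rw [hlevel, hlevel, ← Multiset.map_add, map_Ico_add_map_Ico_eq_range,
    show 2 * (N - q) = Multiset.card (D.level q + D'.level q) by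
      rw [Multiset.card_add, card_level, card_level]; ring,
    map_nthLargest_range]

lemma weight_merge_add (w : ℕ → ℕ → ℝ) :
    (merge D D' 1).weight w + (merge D D' 0).weight w = D.weight w + D'.weight w := by
  simp only [weight_eq_levelWeight, levelWeight_add]
  congr 1
  exact funext (level_merge_add D D')

lemma sources_merge (off : Fin 2) :
    (merge D D' off).sources = rankSet (D.level 0 + D'.level 0) N off :=
  image_congr fun i hi => mergeRow_of_le (Nat.zero_le i) (mem_range.1 hi)

end StaircaseFlow

lemma exists_mod_two_eq_of_le_lt_add {c m : ℕ} (hm : m ≤ 2) (off : Fin 2) :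
    (∃ t, t % 2 = (off : ℕ) ∧ c ≤ t ∧ t < c + m) ↔ m = 2 ∨ (m = 1 ∧ c % 2 = off) := by
  constructor
  · rintro ⟨t, ht, h1, h2⟩
    omega
  · rintro (rfl | ⟨rfl, hc⟩)
    · rcases Nat.mod_two_eq_zero_or_one c with h | h
      · refine ⟨c + off, by omega, by omega, by omega⟩
      · refine ⟨c + 1 - off, by omega, by omega, by omega⟩
    · exact ⟨c, hc, le_rfl, by omega⟩

/-- Above `v` lie twice as many elements of `X + X` as of `X`, plus three, two, one, none of
`i, j, k, l` when `v` is `i, j, k, l`; so `i, k` get odd ranks, `j, l` even ones, and every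
element of `X`, occurring twice, one of each. -/
lemma mem_rankSet_cons_cons_cons_cons (X : Finset ℕ) {i j k l : ℕ} (hij : i < j) (hjk : j < k)
    (hkl : k < l) (hi : i ∉ X) (hj : j ∉ X) (hk : k ∉ X) (hl : l ∉ X) (off : Fin 2) (v : ℕ) :
    v ∈ rankSet (i ::ₘ j ::ₘ k ::ₘ l ::ₘ (X.val + X.val)) (#X + 2) off ↔
      v ∈ X ∨ (v = i ∨ v = k) ∧ off = 1 ∨ (v = j ∨ v = l) ∧ off = 0 := by
  rw [mem_rankSet (by simp only [Multiset.card_cons, Multiset.card_add, card_val]; ring),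
    countGe_eq_countGt_add_count]
  simp only [countGt, Multiset.countP_cons, Multiset.countP_add, Multiset.count_cons,
    Multiset.count_add, Fin.ext_iff, Fin.val_one, Fin.val_zero]
  have hoff : (off : ℕ) = 0 ∨ (off : ℕ) = 1 := by omega
  by_cases hvX : v ∈ X
  · have : v ≠ i ∧ v ≠ j ∧ v ≠ k ∧ v ≠ l := by
      refine ⟨?_, ?_, ?_, ?_⟩ <;> rintro rfl <;> contradiction
    rw [Multiset.count_eq_one_of_mem X.nodup hvX,
      exists_mod_two_eq_of_le_lt_add (by split_ifs <;> omega)]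
    simp only [hvX, true_or, iff_true]
    split_ifs <;> omega
  · rw [Multiset.count_eq_zero.2 hvX, exists_mod_two_eq_of_le_lt_add (by split_ifs <;> omega)]
    simp only [hvX, false_or]
    split_ifs <;> omega

lemma rankSet_cons_cons_cons_cons (X : Finset ℕ) {i j k l : ℕ} (hij : i < j) (hjk : j < k)
    (hkl : k < l) (hi : i ∉ X) (hj : j ∉ X) (hk : k ∉ X) (hl : l ∉ X) :
    rankSet (i ::ₘ j ::ₘ k ::ₘ l ::ₘ (X.val + X.val)) (#X + 2) 1 = X ∪ {i, k} ∧
      rankSet (i ::ₘ j ::ₘ k ::ₘ l ::ₘ (X.val + X.val)) (#X + 2) 0 = X ∪ {j, l} := by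
  refine ⟨ext fun v => ?_, ext fun v => ?_⟩ <;>
    simp only [mem_rankSet_cons_cons_cons_cons X hij hjk hkl hi hj hk hl, mem_union, mem_insert,
      mem_singleton, one_ne_zero, zero_ne_one, and_true, and_false, or_false, false_or]

lemma val_union_pair {X : Finset ℕ} {a b : ℕ} (ha : a ∉ X) (hb : b ∉ X) (hab : a ≠ b) :
    (X ∪ {a, b}).val = a ::ₘ b ::ₘ X.val := by
  rw [union_insert, union_singleton, insert_val_of_notMem (by simp [ha, hab]),
    insert_val_of_notMem hb]

lemma card_union_pair {X : Finset ℕ} {a b : ℕ} (ha : a ∉ X) (hb : b ∉ X) (hab : a ≠ b) :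
    #(X ∪ {a, b}) = #X + 2 := by
  rw [← card_val, val_union_pair ha hb hab]
  simp

lemma union_pair_subset_Icc {X : Finset ℕ} {n a b : ℕ} (hX : X ⊆ Icc 1 n) (ha : 1 ≤ a) (hab : a ≤ b)
    (hb : b ≤ n) : X ∪ {a, b} ⊆ Icc 1 n :=
  union_subset hX (by simp only [insert_subset_iff, mem_Icc, singleton_subset_iff]; omega)

section Exchange

variable {n m' : ℕ} {w : ℕ → ℕ → ℝ} {f : Finset ℕ → ℝ}

lemma StaircaseFlow.weight_le_of_isGreatest
    (hf : ∀ S : Finset ℕ, S ⊆ Icc 1 n → #S ≤ m' → IsGreatest (flowValues n m' w S) (f S))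
    {N : ℕ} (D : StaircaseFlow n N) (hm : N ≤ m') : D.weight w ≤ f D.sources := by
  rw [← D.flowWeight_toFlow hm]
  exact (hf _ D.sources_subset (D.card_sources_le.trans hm)).2 ⟨_, D.toFlow_admissible hm, rfl⟩

lemma exists_staircaseFlow_of_isGreatest
    (hf : ∀ S : Finset ℕ, S ⊆ Icc 1 n → #S ≤ m' → IsGreatest (flowValues n m' w S) (f S))
    {S : Finset ℕ} (hS : S ⊆ Icc 1 n) {N : ℕ} (hN : #S = N) (hm : N ≤ m') :
    ∃ D : StaircaseFlow n N, D.sources = S ∧ D.weight w = f S := by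
  obtain ⟨F, hadm, hw⟩ := (hf S hS (hN ▸ hm)).1
  obtain ⟨D, hm, rfl⟩ := hadm.exists_eq_toFlow (hadm.2.2.1.trans hN)
  exact ⟨D, (D.toFlow_admissible hm).sources_eq hadm, (D.flowWeight_toFlow hm w).symm.trans hw⟩

/-- Merging optimal flows for `A` and `B` yields flows for the two halves of `A + B` by rank. -/
theorem add_le_add_rankSet
    (hf : ∀ S : Finset ℕ, S ⊆ Icc 1 n → #S ≤ m' → IsGreatest (flowValues n m' w S) (f S))
    {A B : Finset ℕ} (hA : A ⊆ Icc 1 n) (hB : B ⊆ Icc 1 n) {N : ℕ} (hNA : #A = N)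
    (hNB : #B = N) (hm : N ≤ m') :
    f A + f B ≤ f (rankSet (A.val + B.val) N 1) + f (rankSet (A.val + B.val) N 0) := by
  obtain ⟨DA, rfl, hwA⟩ := exists_staircaseFlow_of_isGreatest hf hA hNA hm
  obtain ⟨DB, rfl, hwB⟩ := exists_staircaseFlow_of_isGreatest hf hB hNB hm
  rw [← hwA, ← hwB, ← DA.level_zero, ← DB.level_zero, ← StaircaseFlow.sources_merge,
    ← StaircaseFlow.sources_merge, ← StaircaseFlow.weight_merge_add]
  exact add_le_add (StaircaseFlow.weight_le_of_isGreatest hf _ hm)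
    (StaircaseFlow.weight_le_of_isGreatest hf _ hm)

end Exchange

end GridFlow

theorem super_tp4_general (n m' : ℕ) (w : ℕ → ℕ → ℝ)
    (f : Finset ℕ → ℝ)
    (hf : ∀ S : Finset ℕ, S ⊆ Finset.Icc 1 n → S.card ≤ m' →
      IsGreatest (flowValues n m' w S) (f S)) :
    ∀ (X : Finset ℕ) (i j k l : ℕ), X ⊆ Finset.Icc 1 n →
      1 ≤ i → i < j → j < k → k < l → l ≤ n →
      i ∉ X → j ∉ X → k ∉ X → l ∉ X → X.card + 2 ≤ m' →
      max (f (X ∪ {i, j}) + f (X ∪ {k, l})) (f (X ∪ {i, l}) + f (X ∪ {j, k})) ≤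
        f (X ∪ {i, k}) + f (X ∪ {j, l}) := by
  intro X i j k l hX h1i hij hjk hkl hln hiX hjX hkX hlX hm
  obtain ⟨hodd, heven⟩ := GridFlow.rankSet_cons_cons_cons_cons X hij hjk hkl hiX hjX hkX hlX
  refine max_le ?_ ?_
  · have := GridFlow.add_le_add_rankSet hf
      (GridFlow.union_pair_subset_Icc hX h1i hij.le (by omega))
      (GridFlow.union_pair_subset_Icc hX (by omega) hkl.le hln)
      (GridFlow.card_union_pair hiX hjX hij.ne) (GridFlow.card_union_pair hkX hlX hkl.ne) hm
    rwa [GridFlow.val_union_pair hiX hjX hij.ne, GridFlow.val_union_pair hkX hlX hkl.ne,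
      Multiset.cons_add, Multiset.cons_add, Multiset.add_cons, Multiset.add_cons, hodd,
      heven] at this
  · have := GridFlow.add_le_add_rankSet hf
      (GridFlow.union_pair_subset_Icc hX h1i (by omega) hln)
      (GridFlow.union_pair_subset_Icc hX (by omega) hjk.le (by omega))
      (GridFlow.card_union_pair hiX hlX (by omega)) (GridFlow.card_union_pair hjX hkX hjk.ne) hm
    rwa [GridFlow.val_union_pair hiX hlX (by omega), GridFlow.val_union_pair hjX hkX hjk.ne,
      Multiset.cons_add, Multiset.cons_add, Multiset.add_cons, Multiset.add_cons,
      Multiset.cons_swap l j, Multiset.cons_swap l k, hodd, heven] at this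

/-- **Super-TP4 inequality for flow-generated functions** (Lemma 2): for any
real `n × m'` matrix `W` and the function `f = f_w` on `C_0^{m'}`,
`f(Xik) + f(Xjl) ≥ max{f(Xij)+f(Xkl), f(Xil)+f(Xjk)}` holds for all
`i < j < k < l` and `X ⊆ [n] ∖ {i,j,k,l}` with `|X| ≤ m' − 2`. -/
theorem super_tp4 (n m' : ℕ) (hm' : m' ≤ n) (w : ℕ → ℕ → ℝ)
    (f : Finset ℕ → ℝ)
    (hf : ∀ S : Finset ℕ, S ⊆ Finset.Icc 1 n → S.card ≤ m' →
      IsGreatest (flowValues n m' w S) (f S)) :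
    ∀ (X : Finset ℕ) (i j k l : ℕ), X ⊆ Finset.Icc 1 n →
      1 ≤ i → i < j → j < k → k < l → l ≤ n →
      i ∉ X → j ∉ X → k ∉ X → l ∉ X → X.card + 2 ≤ m' →
      max (f (X ∪ {i, j}) + f (X ∪ {k, l})) (f (X ∪ {i, l}) + f (X ∪ {j, k})) ≤
        f (X ∪ {i, k}) + f (X ∪ {j, l}) :=
  super_tp4_general n m' w f hf
end

section
/- Induction step for surjectivity: Let 0 < m ≤ m' ≤ |a| and suppose the restriction map res' : 𝒯(B_{m−1}^{m'}(a)) → ℝ^{𝓑'} is surjective, where 𝓑' = Sint(a;m−1) ∪ Int(a;m−1) ∪ Int(a;m) ∪ … ∪ Int(a;m') (with the zero vector added when m−1 = 0). Then the restriction map res : 𝒯(B_m^{m'}(a)) → ℝ^{𝓑} is surjective as well, where 𝓑 = Sint(a;m) ∪ Int(a;m) ∪ … ∪ Int(a;m'). -/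
open Finset

section Generic
variable {n : ℕ}

lemma vsize_add_unitv (x : Fin n → ℕ) (q : Fin n) : vsize (x + unitv n q) = vsize x + 1 := by
  simp [vsize, unitv, sum_add_distrib]

lemma add_unitv_apply_of_ne (y : Fin n → ℕ) {q q₀ : Fin n} (h : q ≠ q₀) :
    (y + unitv n q₀) q = y q := by
  simp [unitv, h]

lemma sum_add_unitv_of_mem (y : Fin n → ℕ) {S : Finset (Fin n)} {q₀ : Fin n} (h : q₀ ∈ S) :
    ∑ q ∈ S, (y + unitv n q₀) q = ∑ q ∈ S, y q + 1 := by
  simp [unitv, sum_add_distrib, h]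

lemma sum_add_unitv_of_notMem (F : Fin n → ℕ → ℕ) (y : Fin n → ℕ) {S : Finset (Fin n)}
    {q₀ : Fin n} (h : q₀ ∉ S) : ∑ q ∈ S, F q ((y + unitv n q₀) q) = ∑ q ∈ S, F q (y q) :=
  sum_congr rfl fun q hq => by rw [add_unitv_apply_of_ne y (ne_of_mem_of_not_mem hq h)]

lemma sum_tsub_add_unitv_add_one (a y : Fin n → ℕ) {S : Finset (Fin n)} {q₀ : Fin n}
    (h : q₀ ∈ S) (hlt : y q₀ < a q₀) :
    ∑ q ∈ S, (a q - (y + unitv n q₀) q) + 1 = ∑ q ∈ S, (a q - y q) := by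
  rw [← add_sum_erase S _ h, ← add_sum_erase S _ h,
    sum_add_unitv_of_notMem (fun q v => a q - v) y (notMem_erase q₀ S)]
  simp only [Pi.add_apply, unitv, if_true]
  omega

lemma add_unitv_apply_of_lt {a y : Fin n → ℕ} {p r : Fin n} (hfull : ∀ q < p, y q = a q)
    (hr : p ≤ r) : ∀ q < p, (y + unitv n r) q = a q := fun q hq => by
  rw [add_unitv_apply_of_ne y (by omega), hfull q hq]

lemma add_unitv_apply_of_gt {y : Fin n → ℕ} {p r : Fin n} (hzero : ∀ q, p < q → y q = 0)
    (hr : r ≤ p) : ∀ q, p < q → (y + unitv n r) q = 0 := fun q hq => by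
  rw [add_unitv_apply_of_ne y (by omega), hzero q hq]

lemma Fin.exists_greatest {P : Fin n → Prop} (h : ∃ q, P q) :
    ∃ q, P q ∧ ∀ q', P q' → q' ≤ q := by
  obtain ⟨q, hq, hmax⟩ := Set.exists_max_image {q | P q} id (Set.toFinite _) h
  exact ⟨q, hq, hmax⟩

lemma tbox_mono {a : Fin n → ℕ} {m₁ m₂ m₁' m₂' : ℕ} (hm : m₁ ≤ m₂) (hm' : m₂' ≤ m₁') :
    tbox a m₂ m₂' ⊆ tbox a m₁ m₁' :=
  fun _ ⟨hle, h₁, h₂⟩ => ⟨hle, hm.trans h₁, h₂.trans hm'⟩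

lemma TP3.mono {B B' : Set (Fin n → ℕ)} {f : (Fin n → ℕ) → ℝ} (h : B ⊆ B') (hf : TP3 B' f) :
    TP3 B f := fun x i j k hij hjk h₁ h₂ h₃ h₄ h₅ h₆ =>
  hf x i j k hij hjk (h h₁) (h h₂) (h h₃) (h h₄) (h h₅) (h h₆)

lemma TP4.mono {B B' : Set (Fin n → ℕ)} {f : (Fin n → ℕ) → ℝ} (h : B ⊆ B') (hf : TP4 B' f) :
    TP4 B f := fun x i j k l hij hjk hkl h₁ h₂ h₃ h₄ h₅ h₆ =>
  hf x i j k l hij hjk hkl (h h₁) (h h₂) (h h₃) (h h₄) (h h₅) (h h₆)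

lemma IsTP.mono {B B' : Set (Fin n → ℕ)} {f : (Fin n → ℕ) → ℝ} (h : B ⊆ B') (hf : IsTP B' f) :
    IsTP B f :=
  ⟨hf.1.mono h, hf.2.mono h⟩

end Generic

section FintSint
variable {n : ℕ} (a : Fin n → ℕ)

lemma IsSint.le {x : Fin n → ℕ} (hx : IsSint a x) (q : Fin n) : x q ≤ a q := by
  obtain ⟨-, x', x'', hf', hf'', rfl, hsep, -⟩ := hx
  by_cases h : x' q = 0
  · simpa [h] using hf''.1 q
  · have : x'' q = 0 := by_contra fun h'' => lt_irrefl q (hsep q q h h'')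
    simpa [this] using hf'.1 q

lemma IsSint.exists_gap {x : Fin n → ℕ} (hx : IsSint a x) :
    ∃ q₁ q₂ q₃, q₁ < q₂ ∧ q₂ < q₃ ∧ x q₁ ≠ 0 ∧ x q₃ ≠ 0 ∧ x q₂ < a q₂ := by
  have hne : x ≠ 0 := by
    obtain ⟨-, x', x'', hf', -, rfl, -, -⟩ := hx
    exact fun h => hf'.2.1 (funext fun q => (Nat.add_eq_zero_iff.1 (congrFun h q)).1)
  have hnf := hx.1
  simp only [IsFint, not_and, not_forall] at hnf
  obtain ⟨q₁, q₂, q₃, h₁₂, h₂₃, hq₁, hq₃, hq₂⟩ := hnf (hx.le a) hne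
  exact ⟨q₁, q₂, q₃, h₁₂, h₂₃, hq₁, hq₃, lt_of_le_of_ne (hx.le a q₂) hq₂⟩

/-- Below the support `i` of a sint before a slack position `j` the sint is full: otherwise the
first fint of the decomposition would end before `i`, and the second one would fill `j`. -/
lemma IsSint.apply_of_lt {x : Fin n → ℕ} (hx : IsSint a x) {i j k : Fin n} (hij : i < j)
    (hjk : j < k) (hi : x i ≠ 0) (hj : x j < a j) (hk : x k ≠ 0) : ∀ q < i, x q = a q := by
  obtain ⟨-, x', x'', -, hf'', rfl, hsep, hpre⟩ := hx
  intro q hq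
  by_cases hA : ∃ q', q < q' ∧ x' q' ≠ 0
  · obtain ⟨q', hqq', hq'⟩ := hA
    have h'' : x'' q = 0 := by_contra fun h => absurd (hsep q' q hq' h) (not_lt.2 hqq'.le)
    simp [hpre q ⟨q', hqq', hq'⟩, h'']
  · push Not at hA
    have hi'' : x'' i ≠ 0 := by simpa [hA i hq] using hi
    have hk'' : x'' k ≠ 0 := by simpa [hA k (by omega)] using hk
    have := hf''.2.2 i j k hij hjk hi'' hk''
    simp only [Pi.add_apply] at hj
    omega

lemma isFint_or_isSint_of_full_below {y : Fin n → ℕ} (p : Fin n) (hle : ∀ q, y q ≤ a q)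
    (hne : y ≠ 0) (hfull : ∀ q < p, y q = a q)
    (hhigh : ∀ q₁ q₂ q₃, p < q₁ → q₁ < q₂ → q₂ < q₃ → y q₁ ≠ 0 → y q₃ ≠ 0 → y q₂ = a q₂) :
    IsFint a y ∨ IsSint a y := by
  by_cases hf : IsFint a y
  · exact Or.inl hf
  set low : Fin n → ℕ := fun q => if q ≤ p then y q else 0
  set high : Fin n → ℕ := fun q => if p < q then y q else 0
  have low_supp : ∀ q, low q ≠ 0 → q ≤ p := fun q h => by by_contra h'; simp [low, h'] at h
  have high_supp : ∀ q, high q ≠ 0 → p < q := fun q h => by by_contra h'; simp [high, h'] at h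
  have low_ne : low ≠ 0 := fun h0 => hf ⟨hle, hne, fun q₁ q₂ q₃ h₁₂ h₂₃ h₁ h₃ =>
    hhigh q₁ q₂ q₃ (not_le.1 fun h => h₁ (by simpa [low, h] using congrFun h0 q₁)) h₁₂ h₂₃ h₁ h₃⟩
  have high_ne : high ≠ 0 := fun h0 => hf ⟨hle, hne, fun q₁ q₂ q₃ _ h₂₃ _ h₃ =>
    hfull q₂ (lt_of_lt_of_le h₂₃ (not_lt.1 fun h => h₃ (by simpa [high, h] using congrFun h0 q₃)))⟩
  refine Or.inr ⟨hf, low, high, ⟨fun q => ?_, low_ne, fun q₁ q₂ q₃ _ h₂₃ _ h₃ => ?_⟩,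
    ⟨fun q => ?_, high_ne, fun q₁ q₂ q₃ h₁₂ h₂₃ h₁ h₃ => ?_⟩, funext fun q => ?_,
    fun q q' hq hq' => (low_supp q hq).trans_lt (high_supp q' hq'), fun q ⟨q', hqq', hq'⟩ => ?_⟩
  · simp only [low]; split_ifs <;> simp [hle]
  · have := low_supp q₃ h₃
    simp [low, hfull q₂ (by omega), show q₂ ≤ p by omega]
  · simp only [high]; split_ifs <;> simp [hle]
  · have := high_supp q₁ h₁
    have := high_supp q₃ h₃
    simp_all [high, hhigh q₁ q₂ q₃ (by omega) h₁₂ h₂₃, show p < q₂ by omega]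
  · by_cases h : q ≤ p <;> simp [low, high, h, not_lt.2, not_le.1]
  · have := low_supp q' hq'
    simp [low, hfull q (by omega), show q ≤ p by omega]

end FintSint

section TwoBlock
variable {n : ℕ}

/-- The vector `(a_0, …, a_{i-1}, s, 0, …, 0, t, a_{j+1}, …, a_{k-1}, w, 0, …, 0)` when
`i < j < k`. -/
def twoBlock (a : Fin n → ℕ) (i j k : Fin n) (s t w : ℕ) : Fin n → ℕ :=
  (fun q => if q < i ∨ j < q ∧ q < k then a q else 0) +
    s • unitv n i + t • unitv n j + w • unitv n k

variable (a : Fin n → ℕ) {i j k : Fin n} {s t w : ℕ}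

lemma twoBlock_add_unitv_left :
    twoBlock a i j k s t w + unitv n i = twoBlock a i j k (s + 1) t w := by
  simp only [twoBlock, add_smul, one_smul]; abel

lemma twoBlock_add_unitv_mid :
    twoBlock a i j k s t w + unitv n j = twoBlock a i j k s (t + 1) w := by
  simp only [twoBlock, add_smul, one_smul]; abel

lemma twoBlock_add_unitv_right :
    twoBlock a i j k s t w + unitv n k = twoBlock a i j k s t (w + 1) := by
  simp only [twoBlock, add_smul, one_smul]; abel

lemma twoBlock_apply (hij : i < j) (hjk : j < k) (q : Fin n) :
    twoBlock a i j k s t w q =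
      if q < i then a q else if q = i then s else if q < j then 0 else if q = j then t
      else if q < k then a q else if q = k then w else 0 := by
  simp only [twoBlock, unitv, Pi.add_apply, Pi.smul_apply, smul_eq_mul]
  split_ifs <;> omega

lemma twoBlock_of_lt_left (hij : i < j) (hjk : j < k) {q : Fin n} (hq : q < i) :
    twoBlock a i j k s t w q = a q := by
  rw [twoBlock_apply a hij hjk, if_pos hq]

lemma twoBlock_apply_left (hij : i < j) (hjk : j < k) : twoBlock a i j k s t w i = s := by
  rw [twoBlock_apply a hij hjk]; split_ifs <;> omega

lemma twoBlock_of_between_left (hij : i < j) (hjk : j < k) {q : Fin n} (hiq : i < q)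
    (hqj : q < j) : twoBlock a i j k s t w q = 0 := by
  rw [twoBlock_apply a hij hjk]; split_ifs <;> omega

lemma twoBlock_apply_mid (hij : i < j) (hjk : j < k) : twoBlock a i j k s t w j = t := by
  rw [twoBlock_apply a hij hjk]; split_ifs <;> omega

lemma twoBlock_of_between_right (hij : i < j) (hjk : j < k) {q : Fin n} (hjq : j < q)
    (hqk : q < k) : twoBlock a i j k s t w q = a q := by
  rw [twoBlock_apply a hij hjk]; split_ifs <;> omega

lemma twoBlock_apply_right (hij : i < j) (hjk : j < k) : twoBlock a i j k s t w k = w := by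
  rw [twoBlock_apply a hij hjk]; split_ifs <;> omega

lemma twoBlock_of_gt_right (hij : i < j) (hjk : j < k) {q : Fin n} (hq : k < q) :
    twoBlock a i j k s t w q = 0 := by
  rw [twoBlock_apply a hij hjk]; split_ifs <;> omega

lemma vsize_twoBlock :
    vsize (twoBlock a i j k s t w) = vsize (twoBlock a i j k 0 0 0) + s + t + w := by
  simp [twoBlock, vsize, unitv, sum_add_distrib, add_assoc]

lemma twoBlock_le (hij : i < j) (hjk : j < k) (hs : s ≤ a i) (ht : t ≤ a j) (hw : w ≤ a k)
    (q : Fin n) : twoBlock a i j k s t w q ≤ a q := by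
  rw [twoBlock_apply a hij hjk]; split_ifs <;> simp_all

lemma twoBlock_ne_zero (hij : i < j) (hjk : j < k)
    (hpos : 0 < s + t + w) : twoBlock a i j k s t w ≠ 0 := fun h => by
  have hi := congrFun h i
  have hj := congrFun h j
  have hk := congrFun h k
  simp only [twoBlock_apply_left a hij hjk, twoBlock_apply_mid a hij hjk,
    twoBlock_apply_right a hij hjk, Pi.zero_apply] at hi hj hk
  omega

lemma isFint_or_isSint_twoBlock (hij : i < j) (hjk : j < k) (hs : s ≤ a i) (ht : t ≤ a j)
    (hw : w ≤ a k) (hne : twoBlock a i j k s t w ≠ 0) :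
    IsFint a (twoBlock a i j k s t w) ∨ IsSint a (twoBlock a i j k s t w) := by
  refine isFint_or_isSint_of_full_below a i (twoBlock_le a hij hjk hs ht hw) hne
    (fun q hq => twoBlock_of_lt_left a hij hjk hq) fun q₁ q₂ q₃ h₁ h₁₂ h₂₃ hq₁ hq₃ => ?_
  have hjq₁ : j ≤ q₁ := not_lt.1 fun h => hq₁ (twoBlock_of_between_left a hij hjk h₁ h)
  have hq₃k : q₃ ≤ k := not_lt.1 fun h => hq₃ (twoBlock_of_gt_right a hij hjk h)
  exact twoBlock_of_between_right a hij hjk (by omega) (by omega)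

lemma isLeast_twoBlock_lt (hij : i < j) (hjk : j < k) (hs : s < a i) :
    IsLeast {q | twoBlock a i j k s t w q < a q} i :=
  ⟨by simpa [twoBlock_apply_left a hij hjk], fun q hq => not_lt.1 fun h => by
    simp [twoBlock_of_lt_left a hij hjk h] at hq⟩

lemma isLeast_twoBlock_ne_zero (hij : i < j) (hjk : j < k) (ht : t ≠ 0) :
    IsLeast {q | i < q ∧ twoBlock a i j k s t w q ≠ 0} j :=
  ⟨⟨hij, by simpa [twoBlock_apply_mid a hij hjk]⟩, fun _ ⟨hiq, hq⟩ => not_lt.1 fun h =>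
    hq (twoBlock_of_between_left a hij hjk hiq h)⟩

lemma isLeast_twoBlock_lt_of_gt (hij : i < j) (hjk : j < k) (hw : w < a k) :
    IsLeast {q | j < q ∧ twoBlock a i j k s t w q < a q} k :=
  ⟨⟨hjk, by simpa [twoBlock_apply_right a hij hjk]⟩, fun q ⟨hjq, hq⟩ => not_lt.1 fun h => by
    simp [twoBlock_of_between_right a hij hjk hjq h] at hq⟩

end TwoBlock

/-! Termination measures, compared lexicographically: `(massAfterSlack, revWeight)` decreases
along the recursion defining `lowerData`, `(deficitBelowTop, massThroughSlack)` along the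
induction over sints. The slack of `y` is its first position `q` with `y q < a q`, its top the
last position of its support. -/

section Potentials
variable {n : ℕ} (a : Fin n → ℕ) {y : Fin n → ℕ} {p : Fin n}

def massAfterSlack (y : Fin n → ℕ) : ℕ := ∑ q with ∃ q' < q, y q' < a q', y q

def massThroughSlack (y : Fin n → ℕ) : ℕ := ∑ q with ∀ q' < q, a q' ≤ y q', y q

def deficitBelowTop (y : Fin n → ℕ) : ℕ := ∑ q with ∃ q', q < q' ∧ y q' ≠ 0, (a q - y q)

def revWeight (y : Fin n → ℕ) : ℕ := ∑ q, (q.rev : ℕ) * y q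

lemma revWeight_add_unitv (y : Fin n → ℕ) (q₀ : Fin n) :
    revWeight (y + unitv n q₀) = revWeight y + q₀.rev := by
  simp [revWeight, unitv, mul_add, sum_add_distrib]

lemma massAfterSlack_le (hfull : ∀ q < p, y q = a q) :
    massAfterSlack a y ≤ ∑ q ∈ Ioi p, y q :=
  sum_le_sum_of_subset fun q hq => by
    obtain ⟨q', hq', hlt⟩ := (mem_filter.1 hq).2
    have : p ≤ q' := not_lt.1 fun h => by simp [hfull q' h] at hlt
    exact mem_Ioi.2 (by omega)

lemma massAfterSlack_eq (hfull : ∀ q < p, y q = a q) (hslack : y p < a p) :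
    massAfterSlack a y = ∑ q ∈ Ioi p, y q :=
  (massAfterSlack_le a hfull).antisymm <| sum_le_sum_of_subset fun q hq => by
    simpa using ⟨p, mem_Ioi.1 hq, hslack⟩

lemma sum_Iic_le_massThroughSlack (hfull : ∀ q < p, y q = a q) :
    ∑ q ∈ Iic p, y q ≤ massThroughSlack a y :=
  sum_le_sum_of_subset fun q hq => by
    simpa using fun q' hq' => (hfull q' (lt_of_lt_of_le hq' (mem_Iic.1 hq))).ge

lemma massThroughSlack_eq (hfull : ∀ q < p, y q = a q) (hslack : y p < a p) :
    massThroughSlack a y = ∑ q ∈ Iic p, y q :=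
  le_antisymm (sum_le_sum_of_subset fun _ hq => mem_Iic.2 <| not_lt.1 fun h =>
    (not_le.2 hslack) ((mem_filter.1 hq).2 p h)) (sum_Iic_le_massThroughSlack a hfull)

lemma deficitBelowTop_le (hzero : ∀ q, p < q → y q = 0) :
    deficitBelowTop a y ≤ ∑ q ∈ Iio p, (a q - y q) :=
  sum_le_sum_of_subset fun q hq => by
    obtain ⟨q', hq', hne⟩ := (mem_filter.1 hq).2
    have : q' ≤ p := not_lt.1 fun h => hne (hzero q' h)
    exact mem_Iio.2 (by omega)

lemma deficitBelowTop_eq (hzero : ∀ q, p < q → y q = 0) (htop : y p ≠ 0) :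
    deficitBelowTop a y = ∑ q ∈ Iio p, (a q - y q) :=
  (deficitBelowTop_le a hzero).antisymm <| sum_le_sum_of_subset fun q hq => by
    simpa using ⟨p, mem_Iio.1 hq, htop⟩

end Potentials

/-- Parameters of the TP3-relation at the base point `twoBlock a i j k s t w` for the indices
`i < j < k`; `Valid` says that its six points `base + 1_α (+ 1_β)` lie in the box `B(a)`. -/
structure Hexagon (n : ℕ) where
  i : Fin n
  j : Fin n
  k : Fin n
  s : ℕ
  t : ℕ
  w : ℕ

namespace Hexagon
variable {n : ℕ} (a : Fin n → ℕ) {p : Hexagon n}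

def base (p : Hexagon n) : Fin n → ℕ := twoBlock a p.i p.j p.k p.s p.t p.w

structure Valid (p : Hexagon n) : Prop where
  lt_ij : p.i < p.j
  lt_jk : p.j < p.k
  s_lt : p.s < a p.i
  t_lt : p.t < a p.j
  w_lt : p.w < a p.k

lemma Valid.base_apply_of_lt (hp : p.Valid a) : ∀ q < p.i, p.base a q = a q :=
  fun _ hq => twoBlock_of_lt_left a hp.lt_ij hp.lt_jk hq

lemma Valid.base_apply_of_gt (hp : p.Valid a) : ∀ q, p.k < q → p.base a q = 0 :=
  fun _ hq => twoBlock_of_gt_right a hp.lt_ij hp.lt_jk hq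

lemma Valid.base_apply_i (hp : p.Valid a) : p.base a p.i = p.s :=
  twoBlock_apply_left a hp.lt_ij hp.lt_jk

lemma Valid.base_apply_j (hp : p.Valid a) : p.base a p.j = p.t :=
  twoBlock_apply_mid a hp.lt_ij hp.lt_jk

lemma vsize_twoBlock_add (p : Hexagon n) (s' t' w' : ℕ) :
    vsize (twoBlock a p.i p.j p.k s' t' w') + (p.s + p.t + p.w) =
      vsize (p.base a) + (s' + t' + w') := by
  rw [base, vsize_twoBlock, vsize_twoBlock a (s := p.s)]; ring

lemma Valid.isFint_or_isSint_twoBlock (hp : p.Valid a) {s' t' w' : ℕ} (hs : s' ≤ p.s + 1)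
    (ht : t' ≤ p.t + 1) (hw : w' ≤ p.w + 1) (hpos : 0 < s' + t' + w') :
    IsFint a (twoBlock a p.i p.j p.k s' t' w') ∨ IsSint a (twoBlock a p.i p.j p.k s' t' w') := by
  have := hp.s_lt; have := hp.t_lt; have := hp.w_lt
  exact _root_.isFint_or_isSint_twoBlock a hp.lt_ij hp.lt_jk (by omega) (by omega) (by omega)
    (twoBlock_ne_zero a hp.lt_ij hp.lt_jk hpos)

lemma Valid.twoBlock_mem_tbox (hp : p.Valid a) {m m' : ℕ} (hm : vsize (p.base a) + 2 = m)
    (hmm : m ≤ m') {s' t' w' : ℕ} (hs : s' ≤ p.s + 1) (ht : t' ≤ p.t + 1) (hw : w' ≤ p.w + 1)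
    (hpos : p.s + p.t + p.w < s' + t' + w') (hle : s' + t' + w' ≤ p.s + p.t + p.w + 2) :
    twoBlock a p.i p.j p.k s' t' w' ∈ tbox a (m - 1) m' := by
  have := hp.s_lt; have := hp.t_lt; have := hp.w_lt
  have := vsize_twoBlock_add a p s' t' w'
  exact ⟨twoBlock_le a hp.lt_ij hp.lt_jk (by omega) (by omega) (by omega), by omega, by omega⟩

lemma Valid.twoBlock_mem_stdBasis (hp : p.Valid a) {m m' : ℕ} (hm : vsize (p.base a) + 2 = m)
    (hmm : m ≤ m') {s' t' w' : ℕ} (hs : s' ≤ p.s + 1) (ht : t' ≤ p.t + 1) (hw : w' ≤ p.w + 1)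
    (hsum : s' + t' + w' = p.s + p.t + p.w + 1) :
    twoBlock a p.i p.j p.k s' t' w' ∈ stdBasis a (m - 1) m' := by
  have := vsize_twoBlock_add a p s' t' w'
  rcases hp.isFint_or_isSint_twoBlock a hs ht hw (by omega) with h | h
  · exact Or.inr (Or.inl ⟨h, by omega, by omega⟩)
  · exact Or.inl ⟨h, by omega⟩

lemma exists_valid_of_isSint {x : Fin n → ℕ} (hx : IsSint a x) :
    ∃ p : Hexagon n, p.Valid a ∧ x = p.base a + unitv n p.i + unitv n p.k := by
  obtain ⟨q₁, q₂, q₃, h₁₂, h₂₃, hq₁, hq₃, hq₂⟩ := hx.exists_gap a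
  obtain ⟨k, hk, hkmax⟩ := Fin.exists_greatest (P := fun q => x q ≠ 0) ⟨q₃, hq₃⟩
  have hq₃k := hkmax q₃ hq₃
  obtain ⟨j, ⟨hjk, hj⟩, hjmax⟩ :=
    Fin.exists_greatest (P := fun q => q < k ∧ x q < a q) ⟨q₂, by omega, hq₂⟩
  have hq₂j := hjmax q₂ ⟨by omega, hq₂⟩
  obtain ⟨i, ⟨hij, hi⟩, himax⟩ :=
    Fin.exists_greatest (P := fun q => q < j ∧ x q ≠ 0) ⟨q₁, by omega, hq₁⟩
  refine ⟨⟨i, j, k, x i - 1, x j, x k - 1⟩, ⟨hij, hjk, ?_, hj, ?_⟩, ?_⟩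
  · have := hx.le a i; dsimp only; omega
  · have := hx.le a k; dsimp only; omega
  simp only [base, twoBlock_add_unitv_left, twoBlock_add_unitv_right]
  funext q
  rw [twoBlock_apply a hij hjk]
  split_ifs with h₁ h₂ h₃ h₄ h₅ h₆
  · exact hx.apply_of_lt a hij hjk hi hj hk q h₁
  · subst h₂; omega
  · exact by_contra fun h => absurd (himax q ⟨h₃, h⟩) (by omega)
  · rw [h₄]
  · exact by_contra fun h => absurd (hjmax q ⟨h₅, lt_of_le_of_ne (hx.le a q) h⟩) (by omega)
  · subst h₆; omega
  · exact by_contra fun h => absurd (hkmax q h) (by omega)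

lemma Valid.eq_of_base_add_unitv_eq {p p' : Hexagon n} (hp : p.Valid a) (hp' : p'.Valid a)
    (h : p.base a + unitv n p.j = p'.base a + unitv n p'.j) : p = p' := by
  obtain ⟨i, j, k, s, t, w⟩ := p
  obtain ⟨i', j', k', s', t', w'⟩ := p'
  obtain ⟨hij, hjk, hs, -, hw⟩ := hp
  obtain ⟨hij', hjk', hs', -, hw'⟩ := hp'
  simp only [base, twoBlock_add_unitv_mid] at h hij hjk hs hw hij' hjk' hs' hw'
  obtain rfl : i = i' :=
    (isLeast_twoBlock_lt a hij hjk hs).unique (h ▸ isLeast_twoBlock_lt a hij' hjk' hs')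
  obtain rfl : j = j' := (isLeast_twoBlock_ne_zero a hij hjk t.succ_ne_zero).unique
    (h ▸ isLeast_twoBlock_ne_zero a hij' hjk' t'.succ_ne_zero)
  obtain rfl : k = k' := (isLeast_twoBlock_lt_of_gt a hij hjk hw).unique
    (h ▸ isLeast_twoBlock_lt_of_gt a hij' hjk' hw')
  have hi := congrFun h i
  have hj := congrFun h j
  have hk := congrFun h k
  simp only [twoBlock_apply_left a hij hjk, twoBlock_apply_mid a hij hjk,
    twoBlock_apply_right a hij hjk] at hi hj hk
  simp only [mk.injEq, true_and]
  omega

lemma Valid.massAfterSlack_i_lt_j (hp : p.Valid a) :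
    massAfterSlack a (p.base a + unitv n p.i) < massAfterSlack a (p.base a + unitv n p.j) := by
  have hfull := hp.base_apply_of_lt
  calc massAfterSlack a (p.base a + unitv n p.i)
      ≤ ∑ q ∈ Ioi p.i, (p.base a + unitv n p.i) q :=
        massAfterSlack_le a (add_unitv_apply_of_lt hfull le_rfl)
    _ = ∑ q ∈ Ioi p.i, p.base a q := sum_add_unitv_of_notMem (fun _ v => v) _ (by simp)
    _ < ∑ q ∈ Ioi p.i, (p.base a + unitv n p.j) q := by
        rw [sum_add_unitv_of_mem _ (mem_Ioi.2 hp.lt_ij)]; exact lt_add_one _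
    _ = massAfterSlack a (p.base a + unitv n p.j) := by
        refine (massAfterSlack_eq a (add_unitv_apply_of_lt hfull hp.lt_ij.le) ?_).symm
        rw [add_unitv_apply_of_ne _ hp.lt_ij.ne, hp.base_apply_i]
        exact hp.s_lt

lemma Valid.massAfterSlack_k_eq_j (hp : p.Valid a) :
    massAfterSlack a (p.base a + unitv n p.k) = massAfterSlack a (p.base a + unitv n p.j) := by
  have hfull := hp.base_apply_of_lt
  have hik := hp.lt_ij.trans hp.lt_jk
  have hslack : ∀ r, p.i < r → (p.base a + unitv n r) p.i < a p.i := fun r hr => by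
    rw [add_unitv_apply_of_ne _ hr.ne, hp.base_apply_i]; exact hp.s_lt
  rw [massAfterSlack_eq a (add_unitv_apply_of_lt hfull hik.le) (hslack _ hik),
    massAfterSlack_eq a (add_unitv_apply_of_lt hfull hp.lt_ij.le) (hslack _ hp.lt_ij),
    sum_add_unitv_of_mem _ (mem_Ioi.2 hik), sum_add_unitv_of_mem _ (mem_Ioi.2 hp.lt_ij)]

lemma Valid.revWeight_k_lt_j (hp : p.Valid a) :
    revWeight (p.base a + unitv n p.k) < revWeight (p.base a + unitv n p.j) := by
  rw [revWeight_add_unitv, revWeight_add_unitv]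
  have := Fin.rev_lt_rev.2 hp.lt_jk
  omega

lemma Valid.deficitBelowTop_ij_lt_ik (hp : p.Valid a) :
    deficitBelowTop a (p.base a + unitv n p.i + unitv n p.j) <
      deficitBelowTop a (p.base a + unitv n p.i + unitv n p.k) := by
  have hzero := hp.base_apply_of_gt
  have hik := hp.lt_ij.trans hp.lt_jk
  have hu := add_unitv_apply_of_gt (r := p.i) hzero hik.le
  calc deficitBelowTop a (p.base a + unitv n p.i + unitv n p.j)
      ≤ ∑ q ∈ Iio p.k, (a q - (p.base a + unitv n p.i + unitv n p.j) q) :=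
        deficitBelowTop_le a (add_unitv_apply_of_gt hu hp.lt_jk.le)
    _ < ∑ q ∈ Iio p.k, (a q - (p.base a + unitv n p.i) q) := by
        refine Nat.lt_of_lt_of_eq (lt_add_one _)
          (sum_tsub_add_unitv_add_one a _ (mem_Iio.2 hp.lt_jk) ?_)
        rw [add_unitv_apply_of_ne _ hp.lt_ij.ne', hp.base_apply_j]; exact hp.t_lt
    _ = ∑ q ∈ Iio p.k, (a q - (p.base a + unitv n p.i + unitv n p.k) q) :=
        (sum_add_unitv_of_notMem (fun q v => a q - v) _ (by simp)).symm
    _ = deficitBelowTop a (p.base a + unitv n p.i + unitv n p.k) := by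
        refine (deficitBelowTop_eq a (add_unitv_apply_of_gt hu le_rfl) ?_).symm
        simp [unitv]

lemma Valid.deficitBelowTop_jk_eq_ik (hp : p.Valid a) :
    deficitBelowTop a (p.base a + unitv n p.j + unitv n p.k) =
      deficitBelowTop a (p.base a + unitv n p.i + unitv n p.k) := by
  have hzero := hp.base_apply_of_gt
  have hik := hp.lt_ij.trans hp.lt_jk
  have hdef : ∀ r, r < p.k → p.base a r < a r →
      deficitBelowTop a (p.base a + unitv n r + unitv n p.k) + 1 =
        ∑ q ∈ Iio p.k, (a q - p.base a q) := fun r hr hlt => by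
    rw [deficitBelowTop_eq a (add_unitv_apply_of_gt (add_unitv_apply_of_gt hzero hr.le) le_rfl)
        (by simp [unitv]),
      sum_add_unitv_of_notMem (fun q v => a q - v) _ (by simp),
      sum_tsub_add_unitv_add_one a _ (mem_Iio.2 hr) hlt]
  have h1 := hdef p.j hp.lt_jk (by rw [hp.base_apply_j]; exact hp.t_lt)
  have h2 := hdef p.i hik (by rw [hp.base_apply_i]; exact hp.s_lt)
  omega

lemma Valid.massThroughSlack_jk_lt_ik (hp : p.Valid a) :
    massThroughSlack a (p.base a + unitv n p.j + unitv n p.k) <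
      massThroughSlack a (p.base a + unitv n p.i + unitv n p.k) := by
  have hfull := hp.base_apply_of_lt
  have hik := hp.lt_ij.trans hp.lt_jk
  have hj : p.j ∉ Iic p.i := by simpa using hp.lt_ij
  have hk : p.k ∉ Iic p.i := by simpa using hik
  calc massThroughSlack a (p.base a + unitv n p.j + unitv n p.k)
      = ∑ q ∈ Iic p.i, (p.base a + unitv n p.j + unitv n p.k) q := by
        refine massThroughSlack_eq a (add_unitv_apply_of_lt
          (add_unitv_apply_of_lt hfull hp.lt_ij.le) hik.le) ?_
        rw [add_unitv_apply_of_ne _ hik.ne, add_unitv_apply_of_ne _ hp.lt_ij.ne, hp.base_apply_i]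
        exact hp.s_lt
    _ = ∑ q ∈ Iic p.i, p.base a q :=
        (sum_add_unitv_of_notMem (fun _ v => v) _ hk).trans
          (sum_add_unitv_of_notMem (fun _ v => v) _ hj)
    _ < ∑ q ∈ Iic p.i, (p.base a + unitv n p.i) q := by
        rw [sum_add_unitv_of_mem _ (mem_Iic.2 le_rfl)]; exact lt_add_one _
    _ = ∑ q ∈ Iic p.i, (p.base a + unitv n p.i + unitv n p.k) q :=
        (sum_add_unitv_of_notMem (fun _ v => v) _ hk).symm
    _ ≤ massThroughSlack a (p.base a + unitv n p.i + unitv n p.k) :=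
        sum_Iic_le_massThroughSlack a (add_unitv_apply_of_lt
          (add_unitv_apply_of_lt hfull le_rfl) hik.le)

end Hexagon

section LowerData
variable {n : ℕ}

open Classical in
/-- At `y = base + 1_j` for a valid hexagon with `|base + 1_i + 1_k| = m` (unique by
`Hexagon.Valid.eq_of_base_add_unitv_eq`), the TP3-relation at `base` solved for the value at
`y`; elsewhere `g y`. -/
noncomputable def lowerData (a : Fin n → ℕ) (m : ℕ) (g : (Fin n → ℕ) → ℝ) (y : Fin n → ℕ) : ℝ :=
  if h : ∃ p : Hexagon n, p.Valid a ∧ vsize (p.base a) + 2 = m ∧ y = p.base a + unitv n p.j then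
    let z := h.choose.base a
    let i := h.choose.i
    let j := h.choose.j
    let k := h.choose.k
    max (g (z + unitv n i + unitv n j) + lowerData a m g (z + unitv n k))
        (lowerData a m g (z + unitv n i) + g (z + unitv n j + unitv n k)) -
      g (z + unitv n i + unitv n k)
  else g y
termination_by (massAfterSlack a y, revWeight y)
decreasing_by
  all_goals
    obtain ⟨hp, -, hy⟩ := h.choose_spec
    generalize h.choose = p at hp hy ⊢
    subst hy
  · exact Prod.Lex.right' _ hp.massAfterSlack_k_eq_j.le hp.revWeight_k_lt_j
  · exact Prod.Lex.left _ _ hp.massAfterSlack_i_lt_j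

variable (a : Fin n → ℕ) (m : ℕ) (g : (Fin n → ℕ) → ℝ)

lemma lowerData_of_vsize_add_one_ne {y : Fin n → ℕ} (hy : vsize y + 1 ≠ m) :
    lowerData a m g y = g y := by
  rw [lowerData, dif_neg]
  rintro ⟨p, -, hm, rfl⟩
  rw [vsize_add_unitv] at hy
  omega

lemma Hexagon.Valid.lowerData_base_add_unitv {p : Hexagon n} (hp : p.Valid a)
    (hm : vsize (p.base a) + 2 = m) :
    lowerData a m g (p.base a + unitv n p.j) =
      max (g (p.base a + unitv n p.i + unitv n p.j) + lowerData a m g (p.base a + unitv n p.k))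
        (lowerData a m g (p.base a + unitv n p.i) + g (p.base a + unitv n p.j + unitv n p.k)) -
        g (p.base a + unitv n p.i + unitv n p.k) := by
  have h : ∃ p' : Hexagon n, p'.Valid a ∧ vsize (p'.base a) + 2 = m ∧
      p.base a + unitv n p.j = p'.base a + unitv n p'.j := ⟨p, hp, hm, rfl⟩
  rw [lowerData, dif_pos h, ← hp.eq_of_base_add_unitv_eq a h.choose_spec.1 h.choose_spec.2.2]

end LowerData

section Agreement
variable {n : ℕ} (a : Fin n → ℕ) {m m' : ℕ} (g : (Fin n → ℕ) → ℝ)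

theorem eq_of_isSint_of_eq_lowerData {f : (Fin n → ℕ) → ℝ} (hf : TP3 (tbox a (m - 1) m') f)
    (hmm : m ≤ m') (hfg : ∀ y ∈ stdBasis a (m - 1) m', f y = lowerData a m g y)
    {x : Fin n → ℕ} (hx : IsSint a x) (hxm : vsize x = m) : f x = g x := by
  obtain ⟨p, hp, hxp⟩ := Hexagon.exists_valid_of_isSint a hx
  subst hxp
  have hm : vsize (p.base a) + 2 = m := by simp only [vsize_add_unitv] at hxm; omega
  have hhigh : ∀ {s' t' w'}, s' ≤ p.s + 1 → t' ≤ p.t + 1 → w' ≤ p.w + 1 →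
      s' + t' + w' = p.s + p.t + p.w + 2 →
      Prod.Lex (· < ·) (· < ·)
        (deficitBelowTop a (twoBlock a p.i p.j p.k s' t' w'),
          massThroughSlack a (twoBlock a p.i p.j p.k s' t' w'))
        (deficitBelowTop a (twoBlock a p.i p.j p.k (p.s + 1) p.t (p.w + 1)),
          massThroughSlack a (twoBlock a p.i p.j p.k (p.s + 1) p.t (p.w + 1))) →
      f (twoBlock a p.i p.j p.k s' t' w') = g (twoBlock a p.i p.j p.k s' t' w') := by
    intro s' t' w' hs ht hw hsum hlex
    have := p.vsize_twoBlock_add a s' t' w'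
    rcases hp.isFint_or_isSint_twoBlock a hs ht hw (by omega) with h | h
    · rw [hfg _ (Or.inr (Or.inl ⟨h, by omega, by omega⟩)),
        lowerData_of_vsize_add_one_ne a m g (by omega)]
    · exact eq_of_isSint_of_eq_lowerData hf hmm hfg h (by omega)
  have key := hf (p.base a) p.i p.j p.k hp.lt_ij hp.lt_jk
  have hW := hp.lowerData_base_add_unitv a m g hm
  have hdef_ij := hp.deficitBelowTop_ij_lt_ik
  have hdef_jk := hp.deficitBelowTop_jk_eq_ik
  have hmass_jk := hp.massThroughSlack_jk_lt_ik
  simp only [Hexagon.base, twoBlock_add_unitv_left, twoBlock_add_unitv_mid,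
    twoBlock_add_unitv_right] at key hW hdef_ij hdef_jk hmass_jk ⊢
  iterate 6 specialize key (hp.twoBlock_mem_tbox a hm hmm (by omega) (by omega) (by omega)
    (by omega) (by omega))
  have hlow := fun s' t' w' hs ht hw hsum =>
    hfg (twoBlock a p.i p.j p.k s' t' w') (hp.twoBlock_mem_stdBasis a hm hmm hs ht hw hsum)
  rw [hlow (p.s + 1) p.t p.w le_rfl (by omega) (by omega) (by omega),
    hlow p.s (p.t + 1) p.w (by omega) le_rfl (by omega) (by omega),
    hlow p.s p.t (p.w + 1) (by omega) (by omega) le_rfl (by omega), hW,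
    hhigh le_rfl le_rfl (by omega) (by omega) (Prod.Lex.left _ _ hdef_ij),
    hhigh (by omega) le_rfl le_rfl (by omega) (Prod.Lex.right' _ hdef_jk.le hmass_jk)] at key
  linarith
termination_by (deficitBelowTop a x, massThroughSlack a x)
decreasing_by
  rw [hxp]
  simpa only [Hexagon.base, twoBlock_add_unitv_left, twoBlock_add_unitv_right] using hlex

end Agreement

theorem surjectivity_induction_step_general {n : ℕ} (a : Fin n → ℕ)
    (m m' : ℕ) (hmm : m ≤ m')
    (hsurj : ∀ g : (Fin n → ℕ) → ℝ, ∃ f : (Fin n → ℕ) → ℝ,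
        IsTP (tbox a (m - 1) m') f ∧ ∀ x ∈ stdBasis a (m - 1) m', f x = g x) :
    ∀ g : (Fin n → ℕ) → ℝ, ∃ f : (Fin n → ℕ) → ℝ,
        IsTP (tbox a m m') f ∧ ∀ x ∈ stdBasis a m m', f x = g x := by
  intro g
  obtain ⟨f, hf, hfg⟩ := hsurj (lowerData a m g)
  refine ⟨f, hf.mono (tbox_mono (Nat.sub_le m 1) le_rfl), fun x hx => ?_⟩
  rcases hx with ⟨hsint, hxm⟩ | ⟨hfint, hxm, hxm'⟩ | ⟨rfl, rfl⟩
  · exact eq_of_isSint_of_eq_lowerData a g hf.1 hmm hfg hsint hxm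
  · rw [hfg x (Or.inr (Or.inl ⟨hfint, by omega, hxm'⟩)),
      lowerData_of_vsize_add_one_ne a m g (by omega)]
  · rw [hfg 0 (Or.inr (Or.inr ⟨rfl, rfl⟩)), lowerData_of_vsize_add_one_ne a 0 g (by omega)]

/-- **Induction step for surjectivity** (Proposition 4): if the restriction map
`𝒯(B_{m−1}^{m'}(a)) → ℝ^{𝓑'}` to the standard basis of `B_{m-1}^{m'}(a)` is
surjective (with `0 < m`), then so is the restriction map
`𝒯(B_m^{m'}(a)) → ℝ^{𝓑}` to the standard basis of `B_m^{m'}(a)`. -/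
theorem surjectivity_induction_step {n : ℕ} (a : Fin n → ℕ) (ha : ∀ i, 0 < a i)
    (m m' : ℕ) (hm : 0 < m) (hmm : m ≤ m') (hm' : m' ≤ vsize a)
    (hsurj : ∀ g : (Fin n → ℕ) → ℝ, ∃ f : (Fin n → ℕ) → ℝ,
        IsTP (tbox a (m - 1) m') f ∧ ∀ x ∈ stdBasis a (m - 1) m', f x = g x) :
    ∀ g : (Fin n → ℕ) → ℝ, ∃ f : (Fin n → ℕ) → ℝ,
        IsTP (tbox a m m') f ∧ ∀ x ∈ stdBasis a m m', f x = g x :=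
  surjectivity_induction_step_general a m m' hmm hsurj
end

section
/- Extension from a truncated box to the entire box: Every TP-function f on a truncated box B_m^{m'}(a) can be extended to a TP-function on the entire box B(a); that is, there exists a TP-function h on B(a) = B_0^{|a|}(a) whose restriction to B_m^{m'}(a) equals f. -/
/-!
It suffices to add one layer below a TP-function `f` on `B_{s+1}^{m'}(a)`, with `s + 1 ≤ m'`:
repeating this reaches layer `0`, and the reflection `y ↦ a - y` of the box, which preserves the
TP relations, turns extension downwards into extension upwards.

On the new layer put `g y = f (y + 1_p) - K w(y)`, where `p` is the last coordinate in which `y`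
is below `a` and the weight `w(y) = y_p - |a| p` orders vectors lexicographically by `(-p, y_p)`.
In a relation on the new layer the weights either agree on all six points, and the relation is a
TP4 relation of `f` one layer up shifted by the same amount on both sides, or they differ by at
least one on the terms of the max that should lose; taking `K` larger than the oscillation of `f`
makes those terms lose.
-/

section Box

variable {n : ℕ}

@[simp] lemma unitv_apply_self (q : Fin n) : unitv n q q = 1 := by simp [unitv]

@[simp] lemma unitv_apply_of_ne {q r : Fin n} (h : r ≠ q) : unitv n q r = 0 := by
  simp [unitv, h]

lemma le_vsize (a : Fin n → ℕ) (q : Fin n) : a q ≤ vsize a :=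
  Finset.single_le_sum (fun _ _ => Nat.zero_le _) (Finset.mem_univ q)

lemma tbox_mono_s10 {a : Fin n → ℕ} {A A' B B' : ℕ} (hA : A' ≤ A) (hB : B ≤ B') :
    tbox a A B ⊆ tbox a A' B' :=
  fun _ h => ⟨h.1, hA.trans h.2.1, h.2.2.trans hB⟩

lemma add_unitv_le {a y : Fin n → ℕ} {u : Fin n} (hy : y ≤ a) (hu : y u < a u) :
    y + unitv n u ≤ a := by
  intro q
  rcases eq_or_ne q u with rfl | h
  · simpa using hu
  · simpa [h] using hy q

lemma lt_of_add_unitv_le {a y : Fin n → ℕ} {u : Fin n} (h : y + unitv n u ≤ a) :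
    y u < a u := by
  simpa using h u

lemma lt_of_add_unitv_add_unitv_le_left {a x : Fin n → ℕ} {u v : Fin n}
    (h : x + unitv n u + unitv n v ≤ a) : x u < a u :=
  lt_of_add_unitv_le (le_self_add.trans h)

lemma lt_of_add_unitv_add_unitv_le_right {a x : Fin n → ℕ} {u v : Fin n}
    (h : x + unitv n u + unitv n v ≤ a) : x v < a v :=
  ((le_self_add : x ≤ x + unitv n u) v).trans_lt (lt_of_add_unitv_le h)

lemma add_unitv_add_unitv_mem_tbox_s10 {a x : Fin n → ℕ} {u v : Fin n} {A B : ℕ} (hx : x ≤ a)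
    (hu : x u < a u) (hv : x v < a v) (huv : u ≠ v) (hA : A ≤ vsize x + 2)
    (hB : vsize x + 2 ≤ B) : x + unitv n u + unitv n v ∈ tbox a A B :=
  ⟨add_unitv_le (add_unitv_le hx hu) (by simpa [huv.symm] using hv), by simp; omega,
    by simp; omega⟩

end Box

section LastSlack

variable {n : ℕ}

def IsLastSlack (a y : Fin n → ℕ) (p : Fin n) : Prop :=
  y p < a p ∧ ∀ q, p < q → a q ≤ y q

lemma IsLastSlack.unique {a y : Fin n → ℕ} {p p' : Fin n} (hp : IsLastSlack a y p)
    (hp' : IsLastSlack a y p') : p = p' := by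
  rcases lt_trichotomy p p' with h | h | h
  · exact absurd (hp.2 p' h) (not_le.2 hp'.1)
  · exact h
  · exact absurd (hp'.2 p h) (not_le.2 hp.1)

lemma exists_isLastSlack {a y : Fin n → ℕ} {u : Fin n} (hu : y u < a u) :
    ∃ p, u ≤ p ∧ IsLastSlack a y p := by
  classical
  set S := Finset.univ.filter fun q => y q < a q
  have huS : u ∈ S := by simp [S, hu]
  refine ⟨S.max' ⟨u, huS⟩, S.le_max' u huS, by simpa [S] using S.max'_mem ⟨u, huS⟩, ?_⟩
  intro q hq
  by_contra hlt
  exact (S.le_max' q (by simpa [S] using hlt)).not_gt hq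

lemma IsLastSlack.add_unitv {a y : Fin n → ℕ} {p u : Fin n} (hp : IsLastSlack a y p)
    (hu : u < p) : IsLastSlack a (y + unitv n u) p :=
  ⟨by simpa [hu.ne'] using hp.1, fun q hq => by simpa [(hu.trans hq).ne'] using hp.2 q hq⟩

/-- Since `vsize a` exceeds every coordinate below `a`, this orders vectors lexicographically
by `(-p, y p)`. -/
def slackWeight (a y : Fin n → ℕ) (p : Fin n) : ℤ := y p - vsize a * p

@[simp] lemma slackWeight_add_unitv {a y : Fin n → ℕ} {p u : Fin n} (h : u ≠ p) :
    slackWeight a (y + unitv n u) p = slackWeight a y p := by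
  simp [slackWeight, h.symm]

lemma slackWeight_lt_add_unitv {a y : Fin n → ℕ} {k t : Fin n} (hk : IsLastSlack a y k)
    (ht : IsLastSlack a (y + unitv n k) t) :
    slackWeight a y k < slackWeight a (y + unitv n k) t := by
  have htk : t ≤ k := by
    by_contra! h
    exact (hk.2 t h).not_gt (by simpa [h.ne'] using ht.1)
  rcases htk.lt_or_eq with htk | rfl
  · have hyk : (y k : ℤ) < vsize a := by exact_mod_cast hk.1.trans_le (le_vsize a k)
    have hgap : (vsize a : ℤ) * (t + 1) ≤ vsize a * k :=
      mul_le_mul_of_nonneg_left (by exact_mod_cast htk) (by positivity)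
    simp only [slackWeight, Pi.add_apply, unitv_apply_of_ne htk.ne]
    push_cast
    linarith
  · simp [slackWeight]

end LastSlack

section LowerLayer

variable {n : ℕ}

def OscillationBound (a : Fin n → ℕ) (f : (Fin n → ℕ) → ℝ) (K : ℝ) : Prop :=
  ∀ y₁ y₂ z₁ z₂ : Fin n → ℕ, y₁ ≤ a → y₂ ≤ a → z₁ ≤ a → z₂ ≤ a →
    f y₁ + f y₂ ≤ f z₁ + f z₂ + K

lemma exists_oscillationBound (a : Fin n → ℕ) (f : (Fin n → ℕ) → ℝ) :
    ∃ K, OscillationBound a f K := by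
  obtain ⟨M, hM⟩ := ((Set.finite_Iic a).image fun y => |f y|).bddAbove
  have hf : ∀ y ≤ a, |f y| ≤ M := fun y hy => hM ⟨y, hy, rfl⟩
  refine ⟨4 * M, fun y₁ y₂ z₁ z₂ h₁ h₂ h₃ h₄ => ?_⟩
  have := abs_le.1 (hf y₁ h₁); have := abs_le.1 (hf y₂ h₂)
  have := abs_le.1 (hf z₁ h₃); have := abs_le.1 (hf z₂ h₄)
  linarith

lemma OscillationBound.nonneg {a : Fin n → ℕ} {f : (Fin n → ℕ) → ℝ} {K : ℝ}
    (hK : OscillationBound a f K) : 0 ≤ K := by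
  have := hK 0 0 0 0 zero_le zero_le zero_le zero_le
  linarith

lemma OscillationBound.dominate {a : Fin n → ℕ} {f : (Fin n → ℕ) → ℝ} {K : ℝ}
    (hK : OscillationBound a f K) {y₁ y₂ z₁ z₂ : Fin n → ℕ} (h₁ : y₁ ≤ a) (h₂ : y₂ ≤ a)
    (h₃ : z₁ ≤ a) (h₄ : z₂ ≤ a) {w w' : ℤ} (hw : w < w') :
    f y₁ + f y₂ - K * w' ≤ f z₁ + f z₂ - K * w := by
  have hw' : (w : ℝ) + 1 ≤ w' := by exact_mod_cast hw
  have := mul_le_mul_of_nonneg_left hw' hK.nonneg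
  linarith [hK y₁ y₂ z₁ z₂ h₁ h₂ h₃ h₄]

lemma add_eq_max_sub {A B C D E F c₁ c₂ c₃ c₄ c₅ c₆ : ℝ} (h : A + B = max (C + D) (E + F))
    (h₃₄ : c₁ + c₂ = c₃ + c₄) (h₅₆ : c₁ + c₂ = c₅ + c₆) :
    (A - c₁) + (B - c₂) = max ((C - c₃) + (D - c₄)) ((E - c₅) + (F - c₆)) := by
  have e₁ : (C - c₃) + (D - c₄) = C + D - (c₁ + c₂) := by linarith
  have e₂ : (E - c₅) + (F - c₆) = E + F - (c₁ + c₂) := by linarith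
  rw [e₁, e₂, max_sub_sub_right, ← h]
  ring

noncomputable def lowerExt (a : Fin n → ℕ) (f : (Fin n → ℕ) → ℝ) (K : ℝ)
    (y : Fin n → ℕ) : ℝ :=
  open Classical in
  if h : ∃ p, IsLastSlack a y p then
    f (y + unitv n h.choose) - K * slackWeight a y h.choose
  else 0

variable {a y : Fin n → ℕ} {f : (Fin n → ℕ) → ℝ} {K : ℝ} {p u v : Fin n}

lemma IsLastSlack.lowerExt_eq (hp : IsLastSlack a y p) :
    lowerExt a f K y = f (y + unitv n p) - K * slackWeight a y p := by
  have h : ∃ p, IsLastSlack a y p := ⟨p, hp⟩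
  rw [lowerExt, dif_pos h, h.choose_spec.unique hp]

lemma IsLastSlack.lowerExt_add_unitv (hp : IsLastSlack a y p) (hu : u < p) :
    lowerExt a f K (y + unitv n u) = f (y + unitv n u + unitv n p) - K * slackWeight a y p := by
  rw [(hp.add_unitv hu).lowerExt_eq, slackWeight_add_unitv hu.ne]

lemma IsLastSlack.lowerExt_add_unitv_add_unitv (hp : IsLastSlack a y p) (hu : u < p)
    (hv : v < p) :
    lowerExt a f K (y + unitv n u + unitv n v) =
      f (y + unitv n u + unitv n v + unitv n p) - K * slackWeight a y p := by
  rw [((hp.add_unitv hu).add_unitv hv).lowerExt_eq, slackWeight_add_unitv hv.ne,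
    slackWeight_add_unitv hu.ne]

end LowerLayer

section StepDown

variable {n : ℕ} {a x : Fin n → ℕ} {f : (Fin n → ℕ) → ℝ} {K : ℝ} {s m' : ℕ} {i j k l : Fin n}

lemma tp3_lowerExt (hf : IsTP (tbox a (s + 1) m') f) (hK : OscillationBound a f K)
    (hij : i < j) (hjk : j < k) (hx : x ≤ a) (hi : x i < a i) (hj : x j < a j)
    (hk : x k < a k) (hs : vsize x + 1 = s) (hm' : s + 1 ≤ m') :
    f (x + unitv n i + unitv n k) + lowerExt a f K (x + unitv n j) =
      max (f (x + unitv n i + unitv n j) + lowerExt a f K (x + unitv n k))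
        (lowerExt a f K (x + unitv n i) + f (x + unitv n j + unitv n k)) := by
  have mem : ∀ {u v}, x u < a u → x v < a v → u ≠ v →
      x + unitv n u + unitv n v ∈ tbox a (s + 1) m' :=
    fun hu hv huv => add_unitv_add_unitv_mem_tbox_s10 hx hu hv huv (by omega) (by omega)
  have hik := hij.trans hjk
  obtain ⟨p, hkp, hp⟩ := exists_isLastSlack hk
  rcases hkp.lt_or_eq with hkp | rfl
  · have H := hf.2 x i j k p hij hjk hkp (mem hi hk hik.ne) (mem hj hp.1 (hjk.trans hkp).ne)
      (mem hi hj hij.ne) (mem hk hp.1 hkp.ne) (mem hi hp.1 (hik.trans hkp).ne) (mem hj hk hjk.ne)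
    rw [hp.lowerExt_add_unitv (hik.trans hkp), hp.lowerExt_add_unitv (hjk.trans hkp),
      hp.lowerExt_add_unitv hkp]
    simpa only [sub_zero] using add_eq_max_sub (c₁ := 0) (c₃ := 0) (c₆ := 0) H (by ring) (by ring)
  · -- `x + 1_k` has a strictly larger weight, so its term in the max is dominated
    obtain ⟨t, -, ht⟩ := exists_isLastSlack (a := a) (y := x + unitv n k) (u := j)
      (by simpa [hjk.ne] using hj)
    rw [hp.lowerExt_add_unitv hik, hp.lowerExt_add_unitv hjk, ht.lowerExt_eq, max_eq_right]
    · ring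
    · linarith [hK.dominate (mem hi hj hij.ne).1 (add_unitv_le (add_unitv_le hx hk) ht.1)
        (mem hi hk hik.ne).1 (mem hj hk hjk.ne).1 (slackWeight_lt_add_unitv hp ht)]

def IsTP4Rel (g : (Fin n → ℕ) → ℝ) (x : Fin n → ℕ) (i j k l : Fin n) : Prop :=
  g (x + unitv n i + unitv n k) + g (x + unitv n j + unitv n l) =
    max (g (x + unitv n i + unitv n j) + g (x + unitv n k + unitv n l))
      (g (x + unitv n i + unitv n l) + g (x + unitv n j + unitv n k))

lemma tp4_lowerExt_of_lt_lastSlack {p : Fin n} (hf : IsTP (tbox a (s + 1) m') f)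
    (hij : i < j) (hjk : j < k) (hkl : k < l) (hx : x ≤ a) (hi : x i < a i) (hj : x j < a j)
    (hk : x k < a k) (hl : x l < a l) (hs : vsize x + 2 = s) (hm' : s + 1 ≤ m')
    (hp : IsLastSlack a x p) (hlp : l < p) : IsTP4Rel (lowerExt a f K) x i j k l := by
  have hs' : ∀ {u}, x u < a u → u < p → (x + unitv n p) u < a u :=
    fun hu hup => by simpa [hup.ne] using hu
  have mem : ∀ {u v}, u < p → v < p → x u < a u → x v < a v → u ≠ v →
      x + unitv n p + unitv n u + unitv n v ∈ tbox a (s + 1) m' :=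
    fun hup hvp hu hv huv => add_unitv_add_unitv_mem_tbox_s10 (add_unitv_le hx hp.1) (hs' hu hup)
      (hs' hv hvp) huv (by simp; omega) (by simp; omega)
  have hkp := hkl.trans hlp
  have hjp := hjk.trans hkp
  have hip := hij.trans hjp
  have H := hf.2 (x + unitv n p) i j k l hij hjk hkl (mem hip hkp hi hk (hij.trans hjk).ne)
    (mem hjp hlp hj hl (hjk.trans hkl).ne) (mem hip hjp hi hj hij.ne) (mem hkp hlp hk hl hkl.ne)
    (mem hip hlp hi hl ((hij.trans hjk).trans hkl).ne) (mem hjp hkp hj hk hjk.ne)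
  simp only [add_right_comm _ (unitv n p)] at H
  rw [IsTP4Rel, hp.lowerExt_add_unitv_add_unitv hip hkp, hp.lowerExt_add_unitv_add_unitv hjp hlp,
    hp.lowerExt_add_unitv_add_unitv hip hjp, hp.lowerExt_add_unitv_add_unitv hkp hlp,
    hp.lowerExt_add_unitv_add_unitv hip hlp, hp.lowerExt_add_unitv_add_unitv hjp hkp]
  exact add_eq_max_sub H (by ring) (by ring)

lemma tp4_lowerExt_of_lt_lastSlack_add_unitv {t : Fin n} (hf : IsTP (tbox a (s + 1) m') f)
    (hij : i < j) (hjk : j < k) (hkl : k < l) (hx : x ≤ a) (hi : x i < a i) (hj : x j < a j)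
    (hk : x k < a k) (hs : vsize x + 2 = s) (hm' : s + 1 ≤ m') (hp : IsLastSlack a x l)
    (ht : IsLastSlack a (x + unitv n l) t) (hkt : k < t) :
    IsTP4Rel (lowerExt a f K) x i j k l := by
  have hs' : ∀ {u}, x u < a u → u < l → (x + unitv n l) u < a u :=
    fun hu hul => by simpa [hul.ne] using hu
  have mem : ∀ {u v}, (x + unitv n l) u < a u → (x + unitv n l) v < a v → u ≠ v →
      x + unitv n l + unitv n u + unitv n v ∈ tbox a (s + 1) m' :=
    fun hu hv huv => add_unitv_add_unitv_mem_tbox_s10 (add_unitv_le hx hp.1) hu hv huv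
      (by simp; omega) (by simp; omega)
  have hik := hij.trans hjk
  have hjl := hjk.trans hkl
  have hi' := hs' hi (hik.trans hkl)
  have hj' := hs' hj hjl
  have hk' := hs' hk hkl
  have H := hf.2 (x + unitv n l) i j k t hij hjk hkt (mem hi' hk' hik.ne)
    (mem hj' ht.1 (hjk.trans hkt).ne) (mem hi' hj' hij.ne) (mem hk' ht.1 hkt.ne)
    (mem hi' ht.1 (hik.trans hkt).ne) (mem hj' hk' hjk.ne)
  rw [IsTP4Rel, hp.lowerExt_add_unitv_add_unitv (hik.trans hkl) hkl,
    hp.lowerExt_add_unitv_add_unitv (hik.trans hkl) hjl, hp.lowerExt_add_unitv_add_unitv hjl hkl,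
    add_right_comm x (unitv n i) (unitv n l), add_right_comm x (unitv n j) (unitv n l),
    add_right_comm x (unitv n k) (unitv n l), ht.lowerExt_add_unitv (hik.trans hkt),
    ht.lowerExt_add_unitv (hjk.trans hkt), ht.lowerExt_add_unitv hkt]
  simp only [add_right_comm _ (unitv n l)] at H ⊢
  exact add_eq_max_sub H (by ring) (by ring)

/-- Here `x + 1_l + 1_k` has a strictly larger weight, so its term in the max is dominated. -/
lemma tp4_lowerExt_of_lastSlack_add_unitv_eq (hK : OscillationBound a f K) (hij : i < j)
    (hjk : j < k) (hkl : k < l) (hx : x ≤ a) (hi : x i < a i) (hj : x j < a j)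
    (hp : IsLastSlack a x l) (ht : IsLastSlack a (x + unitv n l) k) :
    IsTP4Rel (lowerExt a f K) x i j k l := by
  have hs' : ∀ {u}, x u < a u → u < l → (x + unitv n l) u < a u :=
    fun hu hul => by simpa [hul.ne] using hu
  have hik := hij.trans hjk
  have hjl := hjk.trans hkl
  have hi' := hs' hi (hik.trans hkl)
  have hj' := hs' hj hjl
  obtain ⟨t', -, ht'⟩ := exists_isLastSlack (a := a) (y := x + unitv n l + unitv n k)
    (u := j) (by simpa [hjk.ne] using hj')
  have hw := slackWeight_lt_add_unitv ht ht'
  have hxl := add_unitv_le hx hp.1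
  have h₁ : x + unitv n l + unitv n i + unitv n j ≤ a := add_unitv_le (add_unitv_le hxl hi') (by simpa [hij.ne'] using hj')
  have h₂ := add_unitv_le (add_unitv_le hxl ht.1) ht'.1
  have h₃ : x + unitv n l + unitv n i + unitv n k ≤ a := add_unitv_le (add_unitv_le hxl hi') (by simpa [hik.ne'] using ht.1)
  have h₄ : x + unitv n l + unitv n j + unitv n k ≤ a := add_unitv_le (add_unitv_le hxl hj') (by simpa [hjk.ne'] using ht.1)
  rw [IsTP4Rel, hp.lowerExt_add_unitv_add_unitv (hik.trans hkl) hkl,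
    hp.lowerExt_add_unitv_add_unitv (hik.trans hkl) hjl, hp.lowerExt_add_unitv_add_unitv hjl hkl,
    add_right_comm x (unitv n i) (unitv n l), add_right_comm x (unitv n j) (unitv n l),
    add_right_comm x (unitv n k) (unitv n l), ht.lowerExt_add_unitv hik,
    ht.lowerExt_add_unitv hjk, ht'.lowerExt_eq]
  simp only [add_right_comm _ (unitv n l)] at hw h₁ h₂ h₃ h₄ ⊢
  rw [max_eq_right]
  · ring
  · linarith [hK.dominate h₁ h₂ h₃ h₄ hw]

lemma tp4_lowerExt (hf : IsTP (tbox a (s + 1) m') f) (hK : OscillationBound a f K)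
    (hij : i < j) (hjk : j < k) (hkl : k < l) (hx : x ≤ a) (hi : x i < a i) (hj : x j < a j)
    (hk : x k < a k) (hl : x l < a l) (hs : vsize x + 2 = s) (hm' : s + 1 ≤ m') :
    IsTP4Rel (lowerExt a f K) x i j k l := by
  obtain ⟨p, hlp, hp⟩ := exists_isLastSlack hl
  rcases hlp.lt_or_eq with hlp | rfl
  · exact tp4_lowerExt_of_lt_lastSlack hf hij hjk hkl hx hi hj hk hl hs hm' hp hlp
  obtain ⟨t, hkt, ht⟩ := exists_isLastSlack (a := a) (y := x + unitv n l) (u := k)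
    (by simpa [hkl.ne] using hk)
  rcases hkt.lt_or_eq with hkt | rfl
  · exact tp4_lowerExt_of_lt_lastSlack_add_unitv hf hij hjk hkl hx hi hj hk hs hm' hp ht hkt
  · exact tp4_lowerExt_of_lastSlack_add_unitv_eq hK hij hjk hkl hx hi hj hp ht

end StepDown

section Extension

variable {n : ℕ} {a : Fin n → ℕ} {f : (Fin n → ℕ) → ℝ}

noncomputable def stepExt (a : Fin n → ℕ) (f : (Fin n → ℕ) → ℝ) (K : ℝ) (s : ℕ)
    (y : Fin n → ℕ) : ℝ :=
  if vsize y ≤ s then lowerExt a f K y else f y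

lemma isTP_stepExt {K : ℝ} {s m' : ℕ} (hf : IsTP (tbox a (s + 1) m') f)
    (hK : OscillationBound a f K) (hm' : s + 1 ≤ m') :
    IsTP (tbox a s m') (stepExt a f K s) := by
  have up : ∀ {y}, y ∈ tbox a s m' → s < vsize y → y ∈ tbox a (s + 1) m' :=
    fun hy h => ⟨hy.1, h, hy.2.2⟩
  constructor
  · intro x i j k hij hjk m₁ m₂ m₃ m₄ m₅ m₆
    have hx : s ≤ vsize x + 1 := by simpa using m₅.2.1
    have h₂ : ¬ vsize x + 1 + 1 ≤ s := by omega
    by_cases hup : s ≤ vsize x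
    · have h₁ : ¬ vsize x + 1 ≤ s := by omega
      simp only [stepExt, vsize_add, vsize_unitv, h₁, h₂, if_false]
      exact hf.1 x i j k hij hjk (up m₁ (by simp; omega)) (up m₂ (by simp; omega))
        (up m₃ (by simp; omega)) (up m₄ (by simp; omega)) (up m₅ (by simp; omega))
        (up m₆ (by simp; omega))
    · have h₁ : vsize x + 1 ≤ s := by omega
      simp only [stepExt, vsize_add, vsize_unitv, h₁, h₂, if_true, if_false]
      exact tp3_lowerExt hf hK hij hjk (le_self_add.trans m₅.1) (lt_of_add_unitv_le m₅.1)
        (lt_of_add_unitv_le m₂.1) (lt_of_add_unitv_le m₄.1) (by omega)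
        (by have := m₁.2.2; simp at this; omega)
  · intro x i j k l hij hjk hkl m₁ m₂ m₃ m₄ m₅ m₆
    have hx : s ≤ vsize x + 2 := by simpa using m₁.2.1
    by_cases hup : s ≤ vsize x + 1
    · have h₂ : ¬ vsize x + 1 + 1 ≤ s := by omega
      simp only [stepExt, vsize_add, vsize_unitv, h₂, if_false]
      exact hf.2 x i j k l hij hjk hkl (up m₁ (by simp; omega)) (up m₂ (by simp; omega))
        (up m₃ (by simp; omega)) (up m₄ (by simp; omega)) (up m₅ (by simp; omega))
        (up m₆ (by simp; omega))
    · have h₂ : vsize x + 1 + 1 ≤ s := by omega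
      simp only [stepExt, vsize_add, vsize_unitv, h₂, if_true]
      exact tp4_lowerExt hf hK hij hjk hkl ((le_self_add.trans le_self_add).trans m₁.1)
        (lt_of_add_unitv_add_unitv_le_left m₁.1) (lt_of_add_unitv_add_unitv_le_left m₂.1)
        (lt_of_add_unitv_add_unitv_le_right m₁.1) (lt_of_add_unitv_add_unitv_le_right m₂.1)
        (by omega) hm'

lemma exists_isTP_tbox_zero {m m' : ℕ} (hm : m ≤ m') (hf : IsTP (tbox a m m') f) :
    ∃ g, IsTP (tbox a 0 m') g ∧ ∀ x ∈ tbox a m m', g x = f x := by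
  induction m generalizing f with
  | zero => exact ⟨f, hf, fun _ _ => rfl⟩
  | succ s ih =>
    obtain ⟨K, hK⟩ := exists_oscillationBound a f
    obtain ⟨g, hg, hgf⟩ := ih (by omega) (isTP_stepExt hf hK hm)
    refine ⟨g, hg, fun x hx => ?_⟩
    rw [hgf x (tbox_mono_s10 (Nat.le_succ s) le_rfl hx)]
    exact if_neg (by have := hx.2.1; omega)

end Extension

section Complement

variable {n : ℕ} {a : Fin n → ℕ}

lemma tsub_eq_tsub_add {y d S : Fin n → ℕ} (h : y + d = S) (hS : S ≤ a) :
    a - y = a - S + d := by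
  subst h
  rw [tsub_add_eq_tsub_tsub, tsub_add_cancel_of_le (le_tsub_of_add_le_left hS)]

lemma vsize_tsub {y : Fin n → ℕ} (h : y ≤ a) : vsize (a - y) = vsize a - vsize y := by
  have := vsize_add (a - y) y
  rw [tsub_add_cancel_of_le h] at this
  omega

lemma tsub_mem_tbox {y : Fin n → ℕ} {A B : ℕ} (h : y ∈ tbox a A B) :
    a - y ∈ tbox a (vsize a - B) (vsize a - A) := by
  obtain ⟨hya, hA, hB⟩ := h
  refine ⟨fun q => Nat.sub_le _ _, ?_, ?_⟩ <;> rw [vsize_tsub hya] <;> omega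

/-- `y ↦ a - y` maps the six points of a relation at `x` to those of the same relation at
`a - (x + 1_i + 1_j + 1_k)`, with the two summands of each side swapped. -/
lemma TP3.comp_tsub {S T : Set (Fin n → ℕ)} {f : (Fin n → ℕ) → ℝ} (hf : TP3 T f)
    (hS : ∀ y ∈ S, y ≤ a) (hST : Set.MapsTo (a - ·) S T) : TP3 S (fun y => f (a - y)) := by
  have mapped : ∀ {y w}, y ∈ S → a - y = w → w ∈ T := fun hy h => h ▸ hST hy
  intro x i j k hij hjk m₁ m₂ m₃ m₄ m₅ m₆
  have htop : x + unitv n i + unitv n k + unitv n j ≤ a :=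
    add_unitv_le (hS _ m₁) (by simpa [hij.ne', hjk.ne] using lt_of_add_unitv_le (hS _ m₂))
  set z := a - (x + unitv n i + unitv n k + unitv n j)
  have key₁ : ∀ {y u}, y + unitv n u = x + unitv n i + unitv n k + unitv n j →
      a - y = z + unitv n u := fun h => tsub_eq_tsub_add h htop
  have key₂ : ∀ {y u v}, y + unitv n u + unitv n v = x + unitv n i + unitv n k + unitv n j →
      a - y = z + unitv n u + unitv n v := fun {y u v} h => by
    rw [add_assoc z]; exact tsub_eq_tsub_add ((add_assoc y _ _).symm.trans h) htop
  have e₁ : a - (x + unitv n i + unitv n k) = z + unitv n j := key₁ rfl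
  have e₂ : a - (x + unitv n j) = z + unitv n i + unitv n k := key₂ (by abel)
  have e₃ : a - (x + unitv n i + unitv n j) = z + unitv n k := key₁ (by abel)
  have e₄ : a - (x + unitv n k) = z + unitv n i + unitv n j := key₂ (by abel)
  have e₅ : a - (x + unitv n i) = z + unitv n j + unitv n k := key₂ (by abel)
  have e₆ : a - (x + unitv n j + unitv n k) = z + unitv n i := key₁ (by abel)
  have H := hf z i j k hij hjk (mapped m₂ e₂) (mapped m₁ e₁) (mapped m₄ e₄) (mapped m₃ e₃)
    (mapped m₆ e₆) (mapped m₅ e₅)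
  simp only [e₁, e₂, e₃, e₄, e₅, e₆]
  simpa only [add_comm] using H

lemma TP4.comp_tsub {S T : Set (Fin n → ℕ)} {f : (Fin n → ℕ) → ℝ} (hf : TP4 T f)
    (hS : ∀ y ∈ S, y ≤ a) (hST : Set.MapsTo (a - ·) S T) : TP4 S (fun y => f (a - y)) := by
  have mapped : ∀ {y w}, y ∈ S → a - y = w → w ∈ T := fun hy h => h ▸ hST hy
  intro x i j k l hij hjk hkl m₁ m₂ m₃ m₄ m₅ m₆
  have hjl := hjk.trans hkl
  have htop : x + unitv n i + unitv n k + unitv n j + unitv n l ≤ a :=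
    add_unitv_le (add_unitv_le (hS _ m₁) (by
      simpa [hij.ne', hjk.ne] using lt_of_add_unitv_add_unitv_le_left (hS _ m₂)))
      (by simpa [(hij.trans hjl).ne', hkl.ne', hjl.ne'] using
        lt_of_add_unitv_add_unitv_le_right (hS _ m₂))
  set z := a - (x + unitv n i + unitv n k + unitv n j + unitv n l)
  have key : ∀ {y u v},
      y + unitv n u + unitv n v = x + unitv n i + unitv n k + unitv n j + unitv n l →
      a - y = z + unitv n u + unitv n v := fun {y u v} h => by
    rw [add_assoc z]; exact tsub_eq_tsub_add ((add_assoc y _ _).symm.trans h) htop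
  have e₁ : a - (x + unitv n i + unitv n k) = z + unitv n j + unitv n l := key rfl
  have e₂ : a - (x + unitv n j + unitv n l) = z + unitv n i + unitv n k := key (by abel)
  have e₃ : a - (x + unitv n i + unitv n j) = z + unitv n k + unitv n l := key (by abel)
  have e₄ : a - (x + unitv n k + unitv n l) = z + unitv n i + unitv n j := key (by abel)
  have e₅ : a - (x + unitv n i + unitv n l) = z + unitv n j + unitv n k := key (by abel)
  have e₆ : a - (x + unitv n j + unitv n k) = z + unitv n i + unitv n l := key (by abel)
  have H := hf z i j k l hij hjk hkl (mapped m₂ e₂) (mapped m₁ e₁) (mapped m₄ e₄)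
    (mapped m₃ e₃) (mapped m₆ e₆) (mapped m₅ e₅)
  simp only [e₁, e₂, e₃, e₄, e₅, e₆]
  simpa only [add_comm] using H

lemma IsTP.comp_tsub {S T : Set (Fin n → ℕ)} {f : (Fin n → ℕ) → ℝ} (hf : IsTP T f)
    (hS : ∀ y ∈ S, y ≤ a) (hST : Set.MapsTo (a - ·) S T) : IsTP S (fun y => f (a - y)) :=
  ⟨hf.1.comp_tsub hS hST, hf.2.comp_tsub hS hST⟩

end Complement

theorem extend_to_entire_box_general {n : ℕ} (a : Fin n → ℕ)
    (m m' : ℕ) (hmm : m ≤ m')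
    (f : (Fin n → ℕ) → ℝ) (hf : IsTP (tbox a m m') f) :
    ∃ h : (Fin n → ℕ) → ℝ,
      IsTP (tbox a 0 (vsize a)) h ∧ ∀ x ∈ tbox a m m', h x = f x := by
  obtain ⟨g, hg, hgf⟩ := exists_isTP_tbox_zero hmm hf
  have hg' : IsTP (tbox a (vsize a - m') (vsize a)) (fun y => g (a - y)) :=
    hg.comp_tsub (fun _ hy => hy.1) fun _ hy =>
      tbox_mono_s10 (Nat.zero_le _) (by omega) (tsub_mem_tbox hy)
  obtain ⟨h, hh, hhg⟩ := exists_isTP_tbox_zero (Nat.sub_le _ _) hg'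
  refine ⟨fun y => h (a - y), hh.comp_tsub (fun _ hy => hy.1) fun _ hy =>
    tbox_mono_s10 (Nat.zero_le _) (Nat.sub_le _ _) (tsub_mem_tbox hy), fun x hx => ?_⟩
  have hx' : a - x ∈ tbox a (vsize a - m') (vsize a) :=
    tbox_mono_s10 le_rfl (Nat.sub_le _ _) (tsub_mem_tbox hx)
  show h (a - x) = f x
  rw [hhg _ hx', tsub_tsub_cancel_of_le (show x ≤ a from hx.1), hgf x hx]

/-- **Extension from a truncated box to the entire box**: every TP-function `f`
on a truncated box `B_m^{m'}(a)` extends to a TP-function `h` on the entire box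
`B(a) = B_0^{|a|}(a)`. -/
theorem extend_to_entire_box {n : ℕ} (a : Fin n → ℕ) (ha : ∀ i, 0 < a i)
    (m m' : ℕ) (hmm : m ≤ m') (hm' : m' ≤ vsize a)
    (f : (Fin n → ℕ) → ℝ) (hf : IsTP (tbox a m m') f) :
    ∃ h : (Fin n → ℕ) → ℝ,
      IsTP (tbox a 0 (vsize a)) h ∧ ∀ x ∈ tbox a m m', h x = f x :=
  extend_to_entire_box_general a m m' hmm f hf
end

section
/- Submodularity propagates from the standard basis: Let f be a TP-function on a box B(a). Then f is submodular (i.e., f(x+1_i)+f(x+1_j) ≥ f(x)+f(x+1_i+1_j) for all x and i ≠ j with all four vectors in B(a)) if and only if f is submodular on the standard basis Int(a), meaning this inequality holds whenever i ≠ j and all four vectors occurring in it belong to Int(a). -/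
/-- `f` is submodular on the set `S`:
`f(x+1_i)+f(x+1_j) ≥ f(x)+f(x+1_i+1_j)` whenever `i ≠ j` and all four vectors
occurring in the inequality belong to `S`. -/
def SubmodOn {n : ℕ} (S : Set (Fin n → ℕ)) (f : (Fin n → ℕ) → ℝ) : Prop :=
  ∀ (x : Fin n → ℕ) (i j : Fin n), i ≠ j →
    x ∈ S → x + unitv n i ∈ S → x + unitv n j ∈ S → x + unitv n i + unitv n j ∈ S →
    f x + f (x + unitv n i + unitv n j) ≤ f (x + unitv n i) + f (x + unitv n j)

/-- `f` is skew-submodular on the set `S`: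
`f(x+1_i+1_j)+f(x+1_j) ≥ f(x+1_i)+f(x+2·1_j)` whenever `i ≠ j` and all four
vectors occurring in the inequality belong to `S`. -/
def SkewSubmodOn {n : ℕ} (S : Set (Fin n → ℕ)) (f : (Fin n → ℕ) → ℝ) : Prop :=
  ∀ (x : Fin n → ℕ) (i j : Fin n), i ≠ j →
    x + unitv n i ∈ S → x + unitv n j ∈ S →
    x + unitv n i + unitv n j ∈ S → x + unitv n j + unitv n j ∈ S →
    f (x + unitv n i) + f (x + unitv n j + unitv n j) ≤
      f (x + unitv n i + unitv n j) + f (x + unitv n j)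

/-- The standard basis `Int(a)` of the entire box: all fuzzy-intervals together
with the zero vector. -/
def intSet {n : ℕ} (a : Fin n → ℕ) : Set (Fin n → ℕ) := {x | IsFint a x ∨ x = 0}

/-!
Submodularity at `(x, i, j)` with `i < j` and `x + 1_i + 1_j ≤ a` reduces to smaller instances
through a single TP3 relation. If `x` has support beyond `j`, write `x = y + 1_t` with `t` the
last support point; TP3 at `y` for `i < j < t` reduces to the instance `(y + 1_j, i, t)`, and
symmetrically for support before `i`. If `x_q < a_q` for some `i < q < j`, TP3 at `x` for
`i < q < j` reduces to `(x, i, q)` or `(x, q, j)`. Otherwise `x` vanishes outside `[i, j]` and is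
full strictly inside, so the four points are fints (or zero).

The recursion is on the deficit `∑ (a_q - x_q)` over the coordinates strictly inside the
interval spanned by `i`, `j` and the support of `x`: moving a unit from `t` to `j` (or `i`)
lowers it, and splitting at `q` does not raise it but shortens `[i, j]`.
-/

open Finset

section StrictHull

variable {α : Type*} [Fintype α] [LinearOrder α]

def strictHull (S : Finset α) : Finset α := {q | (∃ p ∈ S, p < q) ∧ ∃ r ∈ S, q < r}

lemma mem_strictHull {S : Finset α} {q : α} :
    q ∈ strictHull S ↔ (∃ p ∈ S, p < q) ∧ ∃ r ∈ S, q < r := by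
  simp [strictHull]

lemma strictHull_subset_strictHull {S S' : Finset α}
    (h : ∀ s ∈ S', (∃ p ∈ S, p ≤ s) ∧ ∃ r ∈ S, s ≤ r) : strictHull S' ⊆ strictHull S := by
  intro q hq
  obtain ⟨⟨p', hp'S, hp'q⟩, r', hr'S, hqr'⟩ := mem_strictHull.1 hq
  obtain ⟨p, hpS, hpp'⟩ := (h p' hp'S).1
  obtain ⟨r, hrS, hr'r⟩ := (h r' hr'S).2
  exact mem_strictHull.2 ⟨⟨p, hpS, hpp'.trans_lt hp'q⟩, r, hrS, hqr'.trans_le hr'r⟩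

lemma strictHull_mono {S S' : Finset α} (h : S' ⊆ S) : strictHull S' ⊆ strictHull S :=
  strictHull_subset_strictHull fun s hs => ⟨⟨s, h hs, le_rfl⟩, s, h hs, le_rfl⟩

end StrictHull

variable {n : ℕ}

@[simp]
lemma unitv_apply (q s : Fin n) : unitv n q s = if s = q then 1 else 0 := rfl

lemma mem_tbox_zero_vsize {a x : Fin n → ℕ} : x ∈ tbox a 0 (vsize a) ↔ x ≤ a :=
  ⟨fun h => h.1, fun h => ⟨h, Nat.zero_le _, Finset.sum_le_sum fun i _ => h i⟩⟩

lemma intSet_subset_tbox (a : Fin n → ℕ) : intSet a ⊆ tbox a 0 (vsize a) := by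
  rintro x (hx | rfl)
  · exact mem_tbox_zero_vsize.2 hx.1
  · exact mem_tbox_zero_vsize.2 zero_le

lemma add_unitv_le_s12 {a x : Fin n → ℕ} {q : Fin n} (hx : x ≤ a) (hq : x q < a q) :
    x + unitv n q ≤ a := fun s => by
  simp only [Pi.add_apply, unitv_apply]
  split_ifs with hs
  · exact hs ▸ hq
  · simpa using hx s

def SubmodAt (f : (Fin n → ℕ) → ℝ) (x : Fin n → ℕ) (i j : Fin n) : Prop :=
  f x + f (x + unitv n i + unitv n j) ≤ f (x + unitv n i) + f (x + unitv n j)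

lemma SubmodAt.symm {f : (Fin n → ℕ) → ℝ} {x : Fin n → ℕ} {i j : Fin n}
    (h : SubmodAt f x i j) : SubmodAt f x j i := by
  unfold SubmodAt at *
  rw [add_right_comm x]
  linarith

lemma SubmodOn.mono {S T : Set (Fin n → ℕ)} {f : (Fin n → ℕ) → ℝ} (hST : S ⊆ T)
    (h : SubmodOn T f) : SubmodOn S f :=
  fun x i j hij h₁ h₂ h₃ h₄ => h x i j hij (hST h₁) (hST h₂) (hST h₃) (hST h₄)

section TP3

variable {a : Fin n → ℕ} {f : (Fin n → ℕ) → ℝ}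

lemma TP3.eq_max_of_le (hf : TP3 (tbox a 0 (vsize a)) f) {y : Fin n → ℕ} {p q r : Fin n}
    (hpq : p < q) (hqr : q < r) (h : y + unitv n p + unitv n q + unitv n r ≤ a) :
    f (y + unitv n p + unitv n r) + f (y + unitv n q) =
      max (f (y + unitv n p + unitv n q) + f (y + unitv n r))
          (f (y + unitv n p) + f (y + unitv n q + unitv n r)) := by
  refine hf y p q r hpq hqr ?_ ?_ ?_ ?_ ?_ ?_ <;>
    refine mem_tbox_zero_vsize.2 (le_trans (fun s => ?_) h) <;>
    simp only [Pi.add_apply] <;> omega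

lemma submodAt_of_tp3_right (hf : TP3 (tbox a 0 (vsize a)) f) {y : Fin n → ℕ} {i j t : Fin n}
    (hij : i < j) (hjt : j < t) (h : y + unitv n t + unitv n i + unitv n j ≤ a)
    (hs : SubmodAt f (y + unitv n j) i t) : SubmodAt f (y + unitv n t) i j := by
  have h3 := hf.eq_max_of_le hij hjt (h.trans_eq' (by abel))
  have hle := le_max_left (f (y + unitv n i + unitv n j) + f (y + unitv n t))
    (f (y + unitv n i) + f (y + unitv n j + unitv n t))
  unfold SubmodAt at *
  simp only [add_comm, add_left_comm] at *
  linarith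

lemma submodAt_of_tp3_left (hf : TP3 (tbox a 0 (vsize a)) f) {y : Fin n → ℕ} {i j t : Fin n}
    (hti : t < i) (hij : i < j) (h : y + unitv n t + unitv n i + unitv n j ≤ a)
    (hs : SubmodAt f (y + unitv n i) t j) : SubmodAt f (y + unitv n t) i j := by
  have h3 := hf.eq_max_of_le hti hij h
  have hle := le_max_right (f (y + unitv n t + unitv n i) + f (y + unitv n j))
    (f (y + unitv n t) + f (y + unitv n i + unitv n j))
  unfold SubmodAt at *
  simp only [add_comm, add_left_comm] at *
  linarith

lemma submodAt_of_tp3_mid (hf : TP3 (tbox a 0 (vsize a)) f) {x : Fin n → ℕ} {i q j : Fin n}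
    (hiq : i < q) (hqj : q < j) (h : x + unitv n i + unitv n j + unitv n q ≤ a)
    (h₁ : SubmodAt f x i q) (h₂ : SubmodAt f x q j) : SubmodAt f x i j := by
  have h3 := hf.eq_max_of_le hiq hqj (h.trans_eq' (by abel))
  unfold SubmodAt at *
  rcases max_choice (f (x + unitv n i + unitv n q) + f (x + unitv n j))
      (f (x + unitv n i) + f (x + unitv n q + unitv n j)) with hc | hc <;>
    rw [hc] at h3 <;> linarith

end TP3

section HullDefect

variable {a : Fin n → ℕ}

def hullDefect (a x : Fin n → ℕ) (i j : Fin n) : ℕ :=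
  ∑ q ∈ strictHull (insert i (insert j ({p | x p ≠ 0} : Finset (Fin n)))), (a q - x q)

lemma mem_insert_insert_support {x : Fin n → ℕ} {i j s : Fin n} :
    s ∈ insert i (insert j ({p | x p ≠ 0} : Finset (Fin n))) ↔ s = i ∨ s = j ∨ x s ≠ 0 := by
  simp

lemma hullDefect_le_hullDefect {x : Fin n → ℕ} {i j i' j' : Fin n}
    (hi : i ≤ i') (hi' : i' ≤ j) (hj : i ≤ j') (hj' : j' ≤ j) :
    hullDefect a x i' j' ≤ hullDefect a x i j := by
  refine sum_le_sum_of_subset (strictHull_subset_strictHull fun s hs => ?_)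
  simp only [mem_insert_insert_support] at hs ⊢
  rcases hs with rfl | rfl | hs
  · exact ⟨⟨i, by simp, hi⟩, j, by simp, hi'⟩
  · exact ⟨⟨i, by simp, hj⟩, j, by simp, hj'⟩
  · exact ⟨⟨s, by simp [hs], le_rfl⟩, s, by simp [hs], le_rfl⟩

lemma sum_strictHull_tsub_lt {S S' : Finset (Fin n)} {y : Fin n → ℕ} {m t : Fin n}
    (hS : strictHull S' ⊆ strictHull S) (ht : t ∉ strictHull S') (hm : m ∈ strictHull S')
    (hym : y m < a m) :
    ∑ q ∈ strictHull S', (a q - (y + unitv n m) q) <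
      ∑ q ∈ strictHull S, (a q - (y + unitv n t) q) := by
  calc ∑ q ∈ strictHull S', (a q - (y + unitv n m) q)
      < ∑ q ∈ strictHull S', (a q - (y + unitv n t) q) := by
        refine sum_lt_sum (fun q hq => ?_) ⟨m, hm, ?_⟩
        · have hqt : q ≠ t := fun h => ht (h ▸ hq)
          simp only [Pi.add_apply, unitv_apply, hqt, if_false]
          split_ifs <;> omega
        · have hmt : m ≠ t := fun h => ht (h ▸ hm)
          simp only [Pi.add_apply, unitv_apply, hmt, if_true, if_false]
          omega
    _ ≤ _ := sum_le_sum_of_subset hS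

lemma hullDefect_absorb_right_lt {y : Fin n → ℕ} {i j t : Fin n} (hij : i < j) (hjt : j < t)
    (hlast : ∀ s, t < s → y s = 0) (h : y + unitv n t + unitv n i + unitv n j ≤ a) :
    hullDefect a (y + unitv n j) i t < hullDefect a (y + unitv n t) i j := by
  have hyj : y j < a j := by simpa [hij.ne', hjt.ne] using h j
  refine sum_strictHull_tsub_lt (strictHull_mono fun s hs => ?_) ?_ ?_ hyj
  · rw [mem_insert_insert_support] at hs ⊢
    simp only [Pi.add_apply, unitv_apply] at hs ⊢
    rcases hs with rfl | rfl | hs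
    · exact Or.inl rfl
    · simp
    · split_ifs at hs <;> simp_all
  · intro hmem
    obtain ⟨-, r, hr, htr⟩ := mem_strictHull.1 hmem
    rw [mem_insert_insert_support] at hr
    simp only [Pi.add_apply, unitv_apply] at hr
    rcases hr with rfl | rfl | hr
    · exact lt_asymm (hij.trans hjt) htr
    · exact htr.false
    · split_ifs at hr with h
      · exact lt_asymm (h ▸ hjt) htr
      · simp [hlast r htr] at hr
  · exact mem_strictHull.2 ⟨⟨i, by simp, hij⟩, t, by simp, hjt⟩

lemma hullDefect_absorb_left_lt {y : Fin n → ℕ} {i j t : Fin n} (hti : t < i) (hij : i < j)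
    (hfirst : ∀ s, s < t → y s = 0) (h : y + unitv n t + unitv n i + unitv n j ≤ a) :
    hullDefect a (y + unitv n i) t j < hullDefect a (y + unitv n t) i j := by
  have hyi : y i < a i := by simpa [hti.ne', hij.ne] using h i
  refine sum_strictHull_tsub_lt (strictHull_mono fun s hs => ?_) ?_ ?_ hyi
  · rw [mem_insert_insert_support] at hs ⊢
    simp only [Pi.add_apply, unitv_apply] at hs ⊢
    rcases hs with rfl | rfl | hs
    · simp
    · exact Or.inr (Or.inl rfl)
    · split_ifs at hs <;> simp_all
  · intro hmem
    obtain ⟨⟨p, hp, hpt⟩, -⟩ := mem_strictHull.1 hmem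
    rw [mem_insert_insert_support] at hp
    simp only [Pi.add_apply, unitv_apply] at hp
    rcases hp with rfl | rfl | hp
    · exact hpt.false
    · exact lt_asymm (hti.trans hij) hpt
    · split_ifs at hp with h
      · exact lt_asymm (h ▸ hti) hpt
      · simp [hfirst p hpt] at hp
  · exact mem_strictHull.2 ⟨⟨t, by simp, hti⟩, j, by simp, hij⟩

end HullDefect

section Support

variable {x : Fin n → ℕ}

lemma exists_last_ne_zero {j : Fin n} (h : ∃ t, j < t ∧ x t ≠ 0) :
    ∃ t, j < t ∧ x t ≠ 0 ∧ ∀ s, t < s → x s = 0 := by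
  obtain ⟨t₀, ht₀⟩ := h
  obtain ⟨t, ht, hmax⟩ := exists_max_image ({t | j < t ∧ x t ≠ 0} : Finset (Fin n)) id
    ⟨t₀, by simpa using ht₀⟩
  simp only [mem_filter, mem_univ, true_and, id] at ht hmax
  refine ⟨t, ht.1, ht.2, fun s hts => ?_⟩
  by_contra hs
  exact (hmax s ⟨ht.1.trans hts, hs⟩).not_gt hts

lemma exists_first_ne_zero {i : Fin n} (h : ∃ t, t < i ∧ x t ≠ 0) :
    ∃ t, t < i ∧ x t ≠ 0 ∧ ∀ s, s < t → x s = 0 := by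
  obtain ⟨t₀, ht₀⟩ := h
  obtain ⟨t, ht, hmin⟩ := exists_min_image ({t | t < i ∧ x t ≠ 0} : Finset (Fin n)) id
    ⟨t₀, by simpa using ht₀⟩
  simp only [mem_filter, mem_univ, true_and, id] at ht hmin
  refine ⟨t, ht.1, ht.2, fun s hst => ?_⟩
  by_contra hs
  exact (hmin s ⟨hst.trans ht.1, hs⟩).not_gt hst

lemma exists_eq_add_unitv {t : Fin n} (h : x t ≠ 0) : ∃ y, x = y + unitv n t :=
  ⟨x - unitv n t, funext fun s => by
    simp only [Pi.add_apply, Pi.sub_apply, unitv_apply]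
    split_ifs with hs
    · subst hs; omega
    · omega⟩

lemma exists_eq_add_unitv_last {j : Fin n} (h : ∃ t, j < t ∧ x t ≠ 0) :
    ∃ t y, j < t ∧ x = y + unitv n t ∧ ∀ s, t < s → y s = 0 := by
  obtain ⟨t, hjt, hxt, hlast⟩ := exists_last_ne_zero h
  obtain ⟨y, rfl⟩ := exists_eq_add_unitv hxt
  exact ⟨t, y, hjt, rfl, fun s hs => (Nat.add_eq_zero_iff.1 (hlast s hs)).1⟩

lemma exists_eq_add_unitv_first {i : Fin n} (h : ∃ t, t < i ∧ x t ≠ 0) :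
    ∃ t y, t < i ∧ x = y + unitv n t ∧ ∀ s, s < t → y s = 0 := by
  obtain ⟨t, hti, hxt, hfirst⟩ := exists_first_ne_zero h
  obtain ⟨y, rfl⟩ := exists_eq_add_unitv hxt
  exact ⟨t, y, hti, rfl, fun s hs => (Nat.add_eq_zero_iff.1 (hfirst s hs)).1⟩

end Support

lemma mem_intSet_of_block {a x w : Fin n → ℕ} {i j : Fin n} (hij : i ≤ j) (hw : w ≤ a)
    (hlow : ∀ s, s < i → x s = 0) (hhigh : ∀ s, j < s → x s = 0)
    (hmid : ∀ s, i < s → s < j → x s = a s) (hwx : ∀ s, s ≠ i → s ≠ j → w s = x s) :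
    w ∈ intSet a := by
  by_cases h0 : w = 0
  · exact Or.inr h0
  have hsupp : ∀ s, w s ≠ 0 → i ≤ s ∧ s ≤ j := by
    intro s hs
    by_cases hsi : s = i
    · exact ⟨hsi.ge, hsi ▸ hij⟩
    by_cases hsj : s = j
    · exact ⟨hsj ▸ hij, hsj.le⟩
    rw [hwx s hsi hsj] at hs
    exact ⟨not_lt.1 fun h => hs (hlow s h), not_lt.1 fun h => hs (hhigh s h)⟩
  refine Or.inl ⟨hw, h0, fun p q r hpq hqr hp hr => ?_⟩
  have hiq := (hsupp p hp).1.trans_lt hpq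
  have hqj := hqr.trans_le (hsupp r hr).2
  rw [hwx q hiq.ne' hqj.ne, hmid q hiq hqj]

lemma submodAt_of_block {a x : Fin n → ℕ} {f : (Fin n → ℕ) → ℝ} {i j : Fin n}
    (hb : SubmodOn (intSet a) f) (hij : i < j) (hx : x + unitv n i + unitv n j ≤ a)
    (hlow : ∀ s, s < i → x s = 0) (hhigh : ∀ s, j < s → x s = 0)
    (hmid : ∀ s, i < s → s < j → a s ≤ x s) : SubmodAt f x i j := by
  have hmid' (s : Fin n) (h₁ : i < s) (h₂ : s < j) : x s = a s :=
    le_antisymm ((le_self_add.trans le_self_add).trans hx s) (hmid s h₁ h₂)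
  have mem (w : Fin n → ℕ) (hw : w ≤ x + unitv n i + unitv n j)
      (hwx : ∀ s, s ≠ i → s ≠ j → w s = x s) : w ∈ intSet a :=
    mem_intSet_of_block hij.le (hw.trans hx) hlow hhigh hmid' hwx
  refine hb x i j hij.ne (mem _ ?_ ?_) (mem _ ?_ ?_) (mem _ ?_ ?_) (mem _ ?_ ?_)
  all_goals first
    | exact fun s => by simp only [Pi.add_apply]; omega
    | exact fun s hsi hsj => by simp [hsi, hsj]

theorem submodAt_of_submodOn_intSet {a : Fin n → ℕ} {f : (Fin n → ℕ) → ℝ}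
    (hf : TP3 (tbox a 0 (vsize a)) f) (hb : SubmodOn (intSet a) f) {x : Fin n → ℕ}
    {i j : Fin n} (hij : i < j) (hx : x + unitv n i + unitv n j ≤ a) : SubmodAt f x i j := by
  by_cases hR : ∃ t, j < t ∧ x t ≠ 0
  · obtain ⟨t, y, hjt, rfl, hlast⟩ := exists_eq_add_unitv_last hR
    have hdec := hullDefect_absorb_right_lt hij hjt hlast hx
    exact submodAt_of_tp3_right hf hij hjt hx
      (submodAt_of_submodOn_intSet hf hb (hij.trans hjt) (hx.trans_eq' (by abel)))
  by_cases hL : ∃ t, t < i ∧ x t ≠ 0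
  · obtain ⟨t, y, hti, rfl, hfirst⟩ := exists_eq_add_unitv_first hL
    have hdec := hullDefect_absorb_left_lt hti hij hfirst hx
    exact submodAt_of_tp3_left hf hti hij hx
      (submodAt_of_submodOn_intSet hf hb (hti.trans hij) (hx.trans_eq' (by abel)))
  by_cases hM : ∃ q, i < q ∧ q < j ∧ x q < a q
  · obtain ⟨q, hiq, hqj, hxq⟩ := hM
    have hx' := add_unitv_le_s12 (q := q) hx (by simpa [hiq.ne', hqj.ne] using hxq)
    have hiq' : x + unitv n i + unitv n q ≤ a :=
      hx'.trans' fun s => by simp only [Pi.add_apply]; omega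
    have hqj' : x + unitv n q + unitv n j ≤ a :=
      hx'.trans' fun s => by simp only [Pi.add_apply]; omega
    have hdec₁ := hullDefect_le_hullDefect (a := a) (x := x) le_rfl hij.le hiq.le hqj.le
    have hdec₂ := hullDefect_le_hullDefect (a := a) (x := x) hiq.le hqj.le hij.le le_rfl
    exact submodAt_of_tp3_mid hf hiq hqj hx' (submodAt_of_submodOn_intSet hf hb hiq hiq')
      (submodAt_of_submodOn_intSet hf hb hqj hqj')
  push Not at hR hL hM
  exact submodAt_of_block hb hij hx hL hR hM
termination_by (hullDefect a x i j, j.val - i.val)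
decreasing_by
  all_goals subst_vars; rw [Prod.lex_def]; omega

theorem submodular_iff_on_basis_general {n : ℕ} (a : Fin n → ℕ)
    (f : (Fin n → ℕ) → ℝ) (hf : IsTP (tbox a 0 (vsize a)) f) :
    SubmodOn (tbox a 0 (vsize a)) f ↔ SubmodOn (intSet a) f := by
  refine ⟨SubmodOn.mono (intSet_subset_tbox a), fun hb x i j hij _ _ _ hx => ?_⟩
  rw [mem_tbox_zero_vsize] at hx
  rcases hij.lt_or_gt with h | h
  · exact submodAt_of_submodOn_intSet hf.1 hb h hx
  · exact (submodAt_of_submodOn_intSet hf.1 hb h (hx.trans_eq' (add_right_comm _ _ _))).symm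

/-- **Submodularity propagates from the standard basis** (Theorem 3): a
TP-function `f` on a box `B(a)` is submodular if and only if it is submodular
on the standard basis `Int(a)`. -/
theorem submodular_iff_on_basis {n : ℕ} (a : Fin n → ℕ) (ha : ∀ i, 0 < a i)
    (f : (Fin n → ℕ) → ℝ) (hf : IsTP (tbox a 0 (vsize a)) f) :
    SubmodOn (tbox a 0 (vsize a)) f ↔ SubmodOn (intSet a) f :=
  submodular_iff_on_basis_general a f hf
end
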